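/- arXiv:2306.12248 — 9 statements merged into one kernel-verified Lean document; each statement's English description precedes it below -/
import Mathlib

section
/- Let X be a real Banach space, H a real Hilbert space, and ι: X → H a continuous linear map. Let Φ: X → (−∞,+∞] and λ ≥ 0 be such that the map x ↦ Φ(x) + (λ/2)|ι(x)|_H² is convex on X (in the extended-real sense). Then for every x ∈ X with Φ(x) < +∞ and every ζ ∈ X*, ζ belongs to the Fréchet subdifferential of Φ at x if and only if Φ(y) ≥ Φ(x) + ⟨ζ, y − x⟩ − (λ/2)|ι(y − x)|_H² for every y ∈ X. -/
open Filter Topology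

lemma quad_id {H : Type*} [NormedAddCommGroup H] [InnerProductSpace ℝ H]
    (u v : H) (t : ℝ) :
    (1 - t) * ‖u‖ ^ 2 + t * ‖v‖ ^ 2 - ‖(1 - t) • u + t • v‖ ^ 2
      = t * (1 - t) * ‖u - v‖ ^ 2 := by
  have h1 : ‖(1 - t) • u + t • v‖ ^ 2
      = ((1-t)*(1-t))*‖u‖^2 + 2*((1-t)*t)*(inner ℝ u v) + (t*t)*‖v‖^2 := by
    rw [← real_inner_self_eq_norm_sq, ← real_inner_self_eq_norm_sq, ← real_inner_self_eq_norm_sq]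
    simp only [inner_add_add_self, inner_smul_left, inner_smul_right, real_inner_comm u v, conj_trivial]
    ring
  have h2 : ‖u - v‖ ^ 2 = ‖u‖^2 - 2*(inner ℝ u v) + ‖v‖^2 := norm_sub_sq_real u v
  rw [h1, h2]; ring

set_option maxHeartbeats 1000000 in
/-- For a `λ`-convex function `Φ : X → (-∞,+∞]` (i.e. `Φ + (λ/2)|ι ·|_H²` is
convex), an element `ζ ∈ X*` belongs to the Fréchet subdifferential of `Φ` at a point `x` of the
domain if and only if the global `λ`-subgradient inequality holds. The Fréchet subdifferential
membership is expressed through the equivalent ε-neighbourhood formulation. -/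
theorem stmt_0
    {X H : Type*} [NormedAddCommGroup X] [NormedSpace ℝ X] [CompleteSpace X]
    [NormedAddCommGroup H] [InnerProductSpace ℝ H] [CompleteSpace H]
    (ι : X →L[ℝ] H) (Φ : X → EReal) (hΦbot : ∀ y : X, Φ y ≠ ⊥)
    (lam : ℝ) (hlam : 0 ≤ lam)
    (hconv : ∀ x y : X, ∀ a b : ℝ, 0 ≤ a → 0 ≤ b → a + b = 1 →
        Φ (a • x + b • y) + ((lam / 2 * ‖ι (a • x + b • y)‖ ^ 2 : ℝ) : EReal) ≤
          (a : EReal) * (Φ x + ((lam / 2 * ‖ι x‖ ^ 2 : ℝ) : EReal)) +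
          (b : EReal) * (Φ y + ((lam / 2 * ‖ι y‖ ^ 2 : ℝ) : EReal)))
    (x : X) (hx : Φ x ≠ ⊤) (ζ : X →L[ℝ] ℝ) :
    (∀ ε : ℝ, 0 < ε → ∀ᶠ y in 𝓝 x,
        Φ x + ((ζ (y - x) - ε * ‖y - x‖ : ℝ) : EReal) ≤ Φ y) ↔
      (∀ y : X, Φ x + ((ζ (y - x) - lam / 2 * ‖ι (y - x)‖ ^ 2 : ℝ) : EReal) ≤ Φ y) := by
  have hpx : ((Φ x).toReal : EReal) = Φ x := EReal.coe_toReal hx (hΦbot x)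
  set px : ℝ := (Φ x).toReal with hpxdef
  constructor
  · -- hard direction
    intro h y
    rcases eq_or_ne y x with rfl | hyx
    · simp
    rcases eq_or_ne (Φ y) ⊤ with hyt | hyt
    · rw [hyt]; exact le_top
    have hpy : ((Φ y).toReal : EReal) = Φ y := EReal.coe_toReal hyt (hΦbot y)
    set py : ℝ := (Φ y).toReal with hpydef
    rw [← hpx, ← hpy]
    have key : px + (ζ (y - x) - lam / 2 * ‖ι (y - x)‖ ^ 2) ≤ py := by
      have hn : 0 < ‖y - x‖ := by
        rw [norm_pos_iff]; exact sub_ne_zero_of_ne hyx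
      apply le_of_forall_pos_le_add
      intro η hη
      set ε : ℝ := η / ‖y - x‖ with hεdef
      have hε : 0 < ε := div_pos hη hn
      have hεn : ε * ‖y - x‖ = η := div_mul_cancel₀ η hn.ne'
      obtain ⟨δ, hδ, hball⟩ := Metric.eventually_nhds_iff.mp (h ε hε)
      set t : ℝ := min (1/2) (δ / (2 * ‖y - x‖)) with htdef
      have ht : 0 < t := lt_min (by norm_num) (div_pos hδ (by positivity))
      have ht1 : t ≤ 1/2 := min_le_left _ _
      have htδ : t * ‖y - x‖ < δ := by
        calc t * ‖y - x‖ ≤ (δ / (2 * ‖y - x‖)) * ‖y - x‖ := by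
              apply mul_le_mul_of_nonneg_right (min_le_right _ _) hn.le
          _ = δ / 2 := by field_simp
          _ < δ := by linarith
      set z : X := (1 - t) • x + t • y with hzdef
      have hzx : z - x = t • (y - x) := by
        rw [hzdef]; module
      have hznorm : ‖z - x‖ = t * ‖y - x‖ := by
        rw [hzx, norm_smul, Real.norm_eq_abs, abs_of_pos ht]
      have hζz : ζ (z - x) = t * ζ (y - x) := by
        rw [hzx, map_smul]; rfl
      -- Fréchet inequality at z
      have E1 : (px : EReal) + ((t * ζ (y - x) - ε * (t * ‖y - x‖) : ℝ) : EReal) ≤ Φ z := by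
        have := hball (show dist z x < δ by rw [dist_eq_norm, hznorm]; exact htδ)
        rw [← hpx] at this
        rwa [hζz, hznorm] at this
      -- convexity at z
      have E2 := hconv x y (1 - t) t (by linarith) ht.le (by ring)
      rw [← hpx, ← hpy, ← hzdef] at E2
      have hR : ((1 - t : ℝ) : EReal) * ((px : EReal) + ((lam / 2 * ‖ι x‖ ^ 2 : ℝ) : EReal)) +
          ((t : ℝ) : EReal) * ((py : EReal) + ((lam / 2 * ‖ι y‖ ^ 2 : ℝ) : EReal)) =
          (((1 - t) * (px + lam / 2 * ‖ι x‖ ^ 2) + t * (py + lam / 2 * ‖ι y‖ ^ 2) : ℝ) : EReal) := by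
        norm_cast
      rw [hR] at E2
      have E3 : (px : EReal) + ((t * ζ (y - x) - ε * (t * ‖y - x‖) : ℝ) : EReal)
          + ((lam / 2 * ‖ι z‖ ^ 2 : ℝ) : EReal) ≤
          (((1 - t) * (px + lam / 2 * ‖ι x‖ ^ 2) + t * (py + lam / 2 * ‖ι y‖ ^ 2) : ℝ) : EReal) :=
        le_trans (add_le_add_left E1 _) E2
      have E4 : px + (t * ζ (y - x) - ε * (t * ‖y - x‖)) + lam / 2 * ‖ι z‖ ^ 2 ≤
          (1 - t) * (px + lam / 2 * ‖ι x‖ ^ 2) + t * (py + lam / 2 * ‖ι y‖ ^ 2) := by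
        exact_mod_cast E3
      -- the quadratic identity
      have hiz : ι z = (1 - t) • (ι x) + t • (ι y) := by
        rw [hzdef]; simp [map_add, map_smul]
      have hquad : (1 - t) * ‖ι x‖ ^ 2 + t * ‖ι y‖ ^ 2 - ‖ι z‖ ^ 2
          = t * (1 - t) * ‖ι x - ι y‖ ^ 2 := by
        rw [hiz]; exact quad_id (ι x) (ι y) t
      have hm : ‖ι x - ι y‖ = ‖ι (y - x)‖ := by
        rw [map_sub, norm_sub_rev]
      rw [hm] at hquad
      set K : ℝ := lam / 2 * ‖ι (y - x)‖ ^ 2 with hKdef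
      have hK : 0 ≤ K := by positivity
      -- combine
      have h5 : t * (px + ζ (y - x) - η - py - K) ≤ 0 := by
        nlinarith [mul_nonneg (mul_nonneg (mul_nonneg ht.le ht.le) hlam) (sq_nonneg ‖ι (y - x)‖)]
      have h6 : px + ζ (y - x) - η - py - K ≤ 0 := by
        by_contra hc
        push_neg at hc
        nlinarith
      linarith
    exact_mod_cast key
  · -- easy direction
    intro h ε hε
    rw [Metric.eventually_nhds_iff]
    set C : ℝ := lam / 2 * ‖ι‖ ^ 2 with hCdef
    have hC : 0 ≤ C := by positivity
    refine ⟨ε / (C + 1), by positivity, fun y hy => ?_⟩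
    rw [dist_eq_norm] at hy
    refine le_trans ?_ (h y)
    apply add_le_add_right
    have hb : ‖ι (y - x)‖ ≤ ‖ι‖ * ‖y - x‖ := ι.le_opNorm _
    have hb2 : ‖ι (y - x)‖ ^ 2 ≤ ‖ι‖ ^ 2 * ‖y - x‖ ^ 2 := by
      rw [← mul_pow]
      exact pow_le_pow_left₀ (norm_nonneg _) hb 2
    have key : lam / 2 * ‖ι (y - x)‖ ^ 2 ≤ ε * ‖y - x‖ := by
      have h1 : lam / 2 * ‖ι (y - x)‖ ^ 2 ≤ C * ‖y - x‖ ^ 2 := by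
        rw [hCdef, mul_assoc]
        exact mul_le_mul_of_nonneg_left hb2 (by linarith)
      have h2 : C * ‖y - x‖ ^ 2 ≤ C * ((ε / (C + 1)) * ‖y - x‖) := by
        apply mul_le_mul_of_nonneg_left _ hC
        rw [sq]
        exact mul_le_mul_of_nonneg_right hy.le (norm_nonneg _)
      have h3 : C * ((ε / (C + 1)) * ‖y - x‖) ≤ ε * ‖y - x‖ := by
        rw [← mul_assoc]
        apply mul_le_mul_of_nonneg_right _ (norm_nonneg _)
        rw [mul_div_assoc']
        rw [div_le_iff₀ (by linarith)]
        nlinarith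
      linarith
    exact_mod_cast (by linarith : ζ (y - x) - ε * ‖y - x‖ ≤ ζ (y - x) - lam / 2 * ‖ι (y - x)‖ ^ 2)
end

section
/- Let U be a real Banach space, T > 0, and E: [0,T] × U → [0,+∞] satisfying: (E1) for every t ∈ [0,T], E(t,·) is sequentially weakly lower semicontinuous on U, i.e. uₙ ⇀ u weakly in U implies E(t,u) ≤ liminf E(t,uₙ); and (E2) power control: there are a nonnegative b ∈ L¹(0,T) and P: [0,T] × U → ℝ such that for every u with E(0,u) < +∞ one has E(t,u) = E(0,u) + ∫₀ᵗ P(r,u) dr for all t ∈ [0,T], with P(·,u) integrable and |P(t,u)| ≤ b(t)(E(t,u)+1) for a.e. t; moreover, for every t, E(t,u) < +∞ if and only if E(0,u) < +∞. Then E is sequentially lower semicontinuous on [0,T] × U with respect to the product of the natural topology of [0,T] and the weak topology of U: if tₙ → t in [0,T] and uₙ ⇀ u weakly in U, then E(t,u) ≤ liminf E(tₙ,uₙ). -/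
open MeasureTheory Filter Topology intervalIntegral
open scoped ENNReal

lemma gen_bound {a c : ℝ} (hac : a ≤ c) {b g : ℝ → ℝ}
    (hb0 : ∀ t, 0 ≤ b t) (hbi : IntegrableOn b (Set.Ioc a c))
    (hb2 : (∫ x in Set.Ioc a c, b x) ≤ 1/2)
    (hg : ContinuousOn g (Set.Icc a c)) (hg0 : ∀ x ∈ Set.Icc a c, 0 ≤ g x)
    (key : ∀ x ∈ Set.Icc a c, ∀ y ∈ Set.Icc a c,
      g y ≤ g x + ∫ r in Set.uIoc x y, b r * (g r + 1)) :
    ∀ x ∈ Set.Icc a c, ∀ y ∈ Set.Icc a c,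
      g y ≤ g x + (∫ r in Set.Ioc a c, b r) * (2 * (g x + 1)) := by
  have hne : (Set.Icc a c).Nonempty := Set.nonempty_Icc.2 hac
  obtain ⟨z, hz, hzmax⟩ := isCompact_Icc.exists_isMaxOn hne hg
  have hM1 : (1:ℝ) ≤ g z + 1 := by have := hg0 z hz; linarith
  have hM0 : (0:ℝ) ≤ g z + 1 := by linarith
  have hsub : ∀ x ∈ Set.Icc a c, ∀ y ∈ Set.Icc a c, Set.uIoc x y ⊆ Set.Ioc a c := by
    intro x hx y hy
    rw [Set.uIoc]
    exact Set.Ioc_subset_Ioc (le_inf hx.1 hy.1) (sup_le hx.2 hy.2)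
  have hbIcc : IntegrableOn b (Set.Icc a c) :=
    (integrableOn_Icc_iff_integrableOn_Ioc).2 hbi
  have hbgIcc : IntegrableOn (fun r => b r * (g r + 1)) (Set.Icc a c) :=
    hbIcc.mul_continuousOn (hg.add continuousOn_const) isCompact_Icc
  have hIle : ∀ x ∈ Set.Icc a c, ∀ y ∈ Set.Icc a c,
      (∫ r in Set.uIoc x y, b r) ≤ ∫ r in Set.Ioc a c, b r := by
    intro x hx y hy
    exact setIntegral_mono_set hbi
      (Filter.Eventually.of_forall fun r => hb0 r)
      ((hsub x hx y hy).eventuallyLE)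
  have hstep : ∀ x ∈ Set.Icc a c, ∀ y ∈ Set.Icc a c,
      (∫ r in Set.uIoc x y, b r * (g r + 1)) ≤ (∫ r in Set.uIoc x y, b r) * (g z + 1) := by
    intro x hx y hy
    have hsub' := hsub x hx y hy
    have hsubIcc : Set.uIoc x y ⊆ Set.Icc a c := hsub'.trans Set.Ioc_subset_Icc_self
    have h1 : (∫ r in Set.uIoc x y, b r * (g r + 1)) ≤ ∫ r in Set.uIoc x y, b r * (g z + 1) := by
      apply setIntegral_mono_on (hbgIcc.mono_set hsubIcc)
        ((hbi.mono_set hsub').mul_const (g z + 1)) measurableSet_uIoc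
      intro r hr
      have hle : g r ≤ g z := hzmax (hsubIcc hr)
      have : g r + 1 ≤ g z + 1 := by linarith
      exact mul_le_mul_of_nonneg_left this (hb0 r)
    rw [MeasureTheory.integral_mul_const] at h1
    exact h1
  have hMle : ∀ x ∈ Set.Icc a c, g z + 1 ≤ 2 * (g x + 1) := by
    intro x hx
    have h1 := key x hx z hz
    have h2 := hstep x hx z hz
    have h3 : (∫ r in Set.uIoc x z, b r) * (g z + 1) ≤ (1/2) * (g z + 1) :=
      mul_le_mul_of_nonneg_right ((hIle x hx z hz).trans hb2) hM0
    linarith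
  intro x hx y hy
  have h1 := key x hx y hy
  have h2 := hstep x hx y hy
  have h3 : (∫ r in Set.uIoc x y, b r) * (g z + 1) ≤ (∫ r in Set.Ioc a c, b r) * (g z + 1) :=
    mul_le_mul_of_nonneg_right (hIle x hx y hy) hM0
  have h4 : (∫ r in Set.Ioc a c, b r) * (g z + 1) ≤ (∫ r in Set.Ioc a c, b r) * (2 * (g x + 1)) :=
    mul_le_mul_of_nonneg_left (hMle x hx) (setIntegral_nonneg measurableSet_Ioc fun r _ => hb0 r)
  linarith


/-- Under (E1) (sequential weak lower semicontinuity of `E(t,·)` for each `t`)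
and (E2) (power control), the energy `E` is sequentially lower semicontinuous on `[0,T] × U`
with respect to the product of the natural topology of `[0,T]` and the weak topology of `U`. -/
theorem stmt_3
    {U : Type*} [NormedAddCommGroup U] [NormedSpace ℝ U] [CompleteSpace U]
    (T : ℝ) (hT : 0 < T)
    (E : ℝ → U → ℝ≥0∞) (P : ℝ → U → ℝ) (b : ℝ → ℝ)
    (hb0 : ∀ t : ℝ, 0 ≤ b t) (hbint : IntegrableOn b (Set.Ioc 0 T))
    (hE1 : ∀ t ∈ Set.Icc (0:ℝ) T, ∀ (u : U) (un : ℕ → U),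
        (∀ φ : U →L[ℝ] ℝ, Tendsto (fun n => φ (un n)) atTop (𝓝 (φ u))) →
        E t u ≤ liminf (fun n => E t (un n)) atTop)
    (hfin : ∀ t ∈ Set.Icc (0:ℝ) T, ∀ u : U, (E t u ≠ ⊤ ↔ E 0 u ≠ ⊤))
    (hPint : ∀ u : U, E 0 u ≠ ⊤ → IntervalIntegrable (fun r => P r u) volume 0 T)
    (hrep : ∀ u : U, E 0 u ≠ ⊤ → ∀ t ∈ Set.Icc (0:ℝ) T,
        (E t u).toReal = (E 0 u).toReal + ∫ r in (0:ℝ)..t, P r u)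
    (hctrl : ∀ u : U, E 0 u ≠ ⊤ →
        ∀ᵐ t ∂(volume.restrict (Set.Ioc (0:ℝ) T)),
          |P t u| ≤ b t * ((E t u).toReal + 1)) :
    ∀ (tn : ℕ → ℝ) (t : ℝ), (∀ n, tn n ∈ Set.Icc (0:ℝ) T) → t ∈ Set.Icc (0:ℝ) T →
      Tendsto tn atTop (𝓝 t) →
      ∀ (un : ℕ → U) (u : U),
        (∀ φ : U →L[ℝ] ℝ, Tendsto (fun n => φ (un n)) atTop (𝓝 (φ u))) →
        E t u ≤ liminf (fun n => E (tn n) (un n)) atTop := by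
  intro tn t htn ht htt un u hweak
  set L := liminf (fun n => E (tn n) (un n)) atTop with hLdef
  refine ENNReal.le_of_forall_pos_le_add fun ε hε hLtop => ?_
  have hLne : L ≠ ⊤ := hLtop.ne
  set L' : ℝ := L.toReal with hL'def
  have hL'0 : 0 ≤ L' := ENNReal.toReal_nonneg
  set εr : ℝ := (ε : ℝ) with hεrdef
  have hεr : 0 < εr := by exact_mod_cast hε
  set D : ℝ := L' + εr / 2 + 1 with hDdef
  have hD : 0 < D := by simp only [hDdef]; linarith
  set ρ : ℝ := εr / (4 * D) with hρdef
  have hρpos : 0 < ρ := by apply div_pos hεr; linarith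
  set ρ₂ : ℝ := min ρ (1/2) with hρ₂def
  have hρ₂pos : 0 < ρ₂ := lt_min hρpos (by norm_num)
  -- the window around t
  set b' : ℝ → ℝ := (Set.Ioc (0:ℝ) T).indicator b with hb'def
  have hb'int : Integrable b' := (integrable_indicator_iff measurableSet_Ioc).2 hbint
  set β : ℝ → ℝ := fun r => ∫ s in (0:ℝ)..r, b' s with hβdef
  have hβcont : Continuous β :=
    intervalIntegral.continuous_primitive (fun a b => hb'int.intervalIntegrable) 0
  obtain ⟨η, hηpos, hβclose⟩ :=
    Metric.continuous_iff.mp hβcont t (ρ₂ / 2) (half_pos hρ₂pos)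
  set a : ℝ := max 0 (t - η / 2) with hadef
  set c : ℝ := min T (t + η / 2) with hcdef
  have ha0 : 0 ≤ a := le_max_left _ _
  have hat : a ≤ t := max_le ht.1 (by linarith)
  have htc : t ≤ c := le_min ht.2 (by linarith)
  have hcT : c ≤ T := min_le_left _ _
  have hac : a ≤ c := hat.trans htc
  have hIocsub : Set.Ioc a c ⊆ Set.Ioc 0 T := Set.Ioc_subset_Ioc ha0 hcT
  have hIccsub : Set.Icc a c ⊆ Set.Icc 0 T := Set.Icc_subset_Icc ha0 hcT
  have htac : t ∈ Set.Icc a c := ⟨hat, htc⟩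
  have hba : IntegrableOn b (Set.Ioc a c) := hbint.mono_set hIocsub
  -- the total mass of b over the window is at most ρ₂
  have hwin : (∫ x in Set.Ioc a c, b x) ≤ ρ₂ := by
    have hcongr : (∫ x in Set.Ioc a c, b x) = ∫ x in Set.Ioc a c, b' x := by
      refine setIntegral_congr_fun measurableSet_Ioc fun x hx => ?_
      simp [hb'def, Set.indicator_of_mem (hIocsub hx)]
    have hsum : (∫ x in Set.Ioc a c, b' x) = β c - β a := by
      rw [hβdef, ← intervalIntegral.integral_of_le hac]
      exact (intervalIntegral.integral_interval_sub_left
        (hb'int.intervalIntegrable) (hb'int.intervalIntegrable)).symm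
    have hda : dist a t < η := by
      rw [Real.dist_eq, abs_lt]
      constructor <;> [skip; skip] <;>
        · simp only [hadef] at hat ⊢
          have := le_max_right (0:ℝ) (t - η/2); linarith [le_max_right (0:ℝ) (t - η/2), hat]
    have hdc : dist c t < η := by
      rw [Real.dist_eq, abs_lt]
      have := min_le_right T (t + η/2)
      constructor <;> simp only [hcdef] at htc ⊢ <;> linarith [min_le_right T (t + η/2), htc]
    have h1 := hβclose a hda
    have h2 := hβclose c hdc
    rw [Real.dist_eq] at h1 h2
    rw [hcongr, hsum]
    have := abs_lt.mp h1
    have := abs_lt.mp h2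
    linarith [abs_lt.mp h1, abs_lt.mp h2]
  have hwinhalf : (∫ x in Set.Ioc a c, b x) ≤ 1/2 := hwin.trans (min_le_right _ _)
  have hwinρ : (∫ x in Set.Ioc a c, b x) ≤ ρ := hwin.trans (min_le_left _ _)
  have hwin0 : 0 ≤ ∫ x in Set.Ioc a c, b x :=
    setIntegral_nonneg measurableSet_Ioc fun r _ => hb0 r
  -- the main pointwise estimate for each element of the sequence
  have hmain : ∀ v : U, E 0 v ≠ ⊤ → ∀ s ∈ Set.Icc a c,
      (E t v).toReal ≤ (E s v).toReal +
        (∫ x in Set.Ioc a c, b x) * (2 * ((E s v).toReal + 1)) := by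
    intro v hv s hs
    set g : ℝ → ℝ := fun r => (E 0 v).toReal + ∫ x in (0:ℝ)..r, P x v with hgdef
    have hgE : ∀ r ∈ Set.Icc (0:ℝ) T, (E r v).toReal = g r := fun r hr => hrep v hv r hr
    have hPiv : IntervalIntegrable (fun r => P r v) volume 0 T := hPint v hv
    have hmemuIcc : ∀ r ∈ Set.Icc (0:ℝ) T, r ∈ Set.uIcc (0:ℝ) T := by
      intro r hr; rwa [Set.uIcc_of_le hT.le]
    have hPsub : ∀ x ∈ Set.Icc (0:ℝ) T, ∀ y ∈ Set.Icc (0:ℝ) T,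
        IntervalIntegrable (fun r => P r v) volume x y := by
      intro x hx y hy
      exact hPiv.mono_set (Set.uIcc_subset_uIcc (hmemuIcc x hx) (hmemuIcc y hy))
    have hgcont : ContinuousOn g (Set.Icc (0:ℝ) T) := by
      apply continuousOn_const.add
      have := intervalIntegral.continuousOn_primitive_interval'
        (μ := volume) hPiv Set.left_mem_uIcc
      rwa [Set.uIcc_of_le hT.le] at this
    have hg0 : ∀ x ∈ Set.Icc a c, 0 ≤ g x := by
      intro x hx; rw [← hgE x (hIccsub hx)]; exact ENNReal.toReal_nonneg
    have hbgIcc : IntegrableOn (fun r => b r * (g r + 1)) (Set.Icc a c) :=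
      ((integrableOn_Icc_iff_integrableOn_Ioc).2 hba).mul_continuousOn
        (((hgcont.mono hIccsub).add continuousOn_const)) isCompact_Icc
    have key : ∀ x ∈ Set.Icc a c, ∀ y ∈ Set.Icc a c,
        g y ≤ g x + ∫ r in Set.uIoc x y, b r * (g r + 1) := by
      intro x hx y hy
      have hx' := hIccsub hx
      have hy' := hIccsub hy
      have hsub' : Set.uIoc x y ⊆ Set.Ioc a c := by
        rw [Set.uIoc]
        exact Set.Ioc_subset_Ioc (le_inf hx.1 hy.1) (sup_le hx.2 hy.2)
      have hsub0T : Set.uIoc x y ⊆ Set.Ioc 0 T := hsub'.trans hIocsub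
      have hsubIcc : Set.uIoc x y ⊆ Set.Icc a c := hsub'.trans Set.Ioc_subset_Icc_self
      have hdiff : g y - g x = ∫ r in x..y, P r v := by
        simp only [hgdef]
        rw [add_sub_add_left_eq_sub]
        exact intervalIntegral.integral_interval_sub_left
          (hPsub 0 (Set.left_mem_Icc.2 hT.le) y hy')
          (hPsub 0 (Set.left_mem_Icc.2 hT.le) x hx')
      have habs : |∫ r in x..y, P r v| ≤ ∫ r in Set.uIoc x y, |P r v| := by
        simpa [Real.norm_eq_abs] using
          intervalIntegral.norm_integral_le_integral_norm_uIoc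
            (f := fun r => P r v) (a := x) (b := y) (μ := volume)
      have hPInt : Integrable (fun r => |P r v|)
          (volume.restrict (Set.uIoc x y)) := by
        have := (hPsub x hx' y hy')
        rw [intervalIntegrable_iff] at this
        exact this.norm
      have hbgInt : Integrable (fun r => b r * (g r + 1))
          (volume.restrict (Set.uIoc x y)) := hbgIcc.mono_set hsubIcc
      have hae : ∀ᵐ r ∂(volume.restrict (Set.uIoc x y)),
          |P r v| ≤ b r * (g r + 1) := by
        filter_upwards [ae_restrict_of_ae_restrict_of_subset hsub0T (hctrl v hv),
          ae_restrict_mem measurableSet_uIoc] with r h1 h2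
        rwa [hgE r (hIccsub (hsubIcc h2))] at h1
      have hmono : (∫ r in Set.uIoc x y, |P r v|) ≤
          ∫ r in Set.uIoc x y, b r * (g r + 1) :=
        integral_mono_ae hPInt hbgInt hae
      have := le_abs_self (∫ r in x..y, P r v)
      linarith [hdiff, habs, hmono, le_abs_self (∫ r in x..y, P r v)]
    have hgen := gen_bound hac hb0 hba hwinhalf (hgcont.mono hIccsub) hg0 key s hs t htac
    rw [hgE t ht, hgE s (hIccsub hs)]
    exact hgen
  -- frequently, the energies are close to the liminf and the times are in the window
  have hLlt : L < L + ENNReal.ofReal (εr / 2) :=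
    ENNReal.lt_add_right hLne (ENNReal.ofReal_pos.2 (by linarith)).ne'
  have hfreq1 : ∃ᶠ n in atTop, E (tn n) (un n) < L + ENNReal.ofReal (εr / 2) :=
    frequently_lt_of_liminf_lt (by isBoundedDefault) hLlt
  have hev : ∀ᶠ n in atTop, tn n ∈ Set.Icc a c := by
    have := Metric.tendsto_nhds.mp htt (η / 2) (half_pos hηpos)
    filter_upwards [this] with n hn
    rw [Real.dist_eq, abs_lt] at hn
    constructor
    · exact max_le (htn n).1 (by linarith)
    · exact le_min (htn n).2 (by linarith)
  obtain ⟨φ, hφmono, hφ⟩ :=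
    Filter.extraction_of_frequently_atTop (hfreq1.and_eventually hev)
  have hsumne : L + ENNReal.ofReal (εr / 2) ≠ ⊤ :=
    ENNReal.add_ne_top.2 ⟨hLne, ENNReal.ofReal_ne_top⟩
  set C : ℝ≥0∞ := ENNReal.ofReal (L' + εr) with hCdef
  have hbnd : ∀ k, E t (un (φ k)) ≤ C := by
    intro k
    obtain ⟨hlt, hmem⟩ := hφ k
    have hfinn : E (tn (φ k)) (un (φ k)) ≠ ⊤ := ne_top_of_lt hlt
    have hv : E 0 (un (φ k)) ≠ ⊤ := (hfin (tn (φ k)) (htn (φ k)) (un (φ k))).1 hfinn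
    set m : ℝ := (E (tn (φ k)) (un (φ k))).toReal with hmdef
    have hm0 : 0 ≤ m := ENNReal.toReal_nonneg
    have hm : m ≤ L' + εr / 2 := by
      have := ENNReal.toReal_mono hsumne hlt.le
      rwa [ENNReal.toReal_add hLne ENNReal.ofReal_ne_top,
        ENNReal.toReal_ofReal (by linarith)] at this
    have hest := hmain (un (φ k)) hv (tn (φ k)) hmem
    have hρcalc : ρ * (2 * D) = εr / 2 := by
      rw [hρdef]; field_simp; ring
    have hIbound : (∫ x in Set.Ioc a c, b x) * (2 * (m + 1)) ≤ ρ * (2 * D) := by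
      apply mul_le_mul hwinρ _ (by linarith) hρpos.le
      simp only [hDdef]; linarith
    have htop : E t (un (φ k)) ≠ ⊤ := (hfin t ht (un (φ k))).2 hv
    have hfinal : (E t (un (φ k))).toReal ≤ L' + εr := by
      have := hest
      rw [← hmdef] at this
      calc (E t (un (φ k))).toReal ≤ m + (∫ x in Set.Ioc a c, b x) * (2 * (m + 1)) := this
        _ ≤ (L' + εr / 2) + ρ * (2 * D) := add_le_add hm hIbound
        _ = L' + εr := by rw [hρcalc]; ring
    rw [← ENNReal.ofReal_toReal htop, hCdef]
    exact ENNReal.ofReal_le_ofReal hfinal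
  have hweak' : ∀ φf : U →L[ℝ] ℝ,
      Tendsto (fun k => φf ((fun k => un (φ k)) k)) atTop (𝓝 (φf u)) :=
    fun φf => (hweak φf).comp hφmono.tendsto_atTop
  have h1 : E t u ≤ liminf (fun k => E t (un (φ k))) atTop :=
    hE1 t ht u (fun k => un (φ k)) hweak'
  have h2 : liminf (fun k => E t (un (φ k))) atTop ≤ C := by
    have := Filter.liminf_le_liminf (Filter.Eventually.of_forall hbnd)
      (f := atTop) (u := fun k => E t (un (φ k))) (v := fun _ => C)
    simpa [Filter.liminf_const] using this
  have hC : C ≤ L + ε := by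
    rw [hCdef, ENNReal.ofReal_add hL'0 hεr.le, ENNReal.ofReal_toReal hLne, hεrdef,
      ENNReal.ofReal_coe_nnreal]
  exact h1.trans (h2.trans hC)
end

section
/- With the setting and notation of the viscous contact potential, for every ζ ∈ V* the map v ↦ p(v,ζ) is convex on V and positively one-homogeneous: p(γv, ζ) = γ·p(v, ζ) for every γ > 0 and v ∈ V, and p(0,ζ) = 0. -/
open Pointwise


lemma aux_inf (a D c : ℝ) (ha : 0 ≤ a) (hD : 0 ≤ D) :
    sInf {x : ℝ | ∃ ε : ℝ, 0 < ε ∧ x = (ε * a + c) + ε⁻¹ * D} =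
      c + 2 * Real.sqrt (a * D) := by
  set s := Real.sqrt (a * D) with hs
  have hs0 : 0 ≤ s := Real.sqrt_nonneg _
  have hssq : s ^ 2 = a * D := Real.sq_sqrt (mul_nonneg ha hD)
  set S := {x : ℝ | ∃ ε : ℝ, 0 < ε ∧ x = (ε * a + c) + ε⁻¹ * D} with hS
  have hlb : ∀ x ∈ S, c + 2 * s ≤ x := by
    rintro x ⟨ε, hε, rfl⟩
    have h1 : ε * ε⁻¹ = 1 := mul_inv_cancel₀ hε.ne'
    rcases eq_or_lt_of_le ha with ha0 | ha0
    · have : a * D = 0 := by rw [← ha0]; ring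
      have : s = 0 := by rw [hs, this, Real.sqrt_zero]
      rw [this, ← ha0]
      have : 0 ≤ ε⁻¹ * D := mul_nonneg (inv_nonneg.2 hε.le) hD
      linarith
    · have hD' : ε * (ε⁻¹ * D) = D := by field_simp
      nlinarith [sq_nonneg (ε * a - s), hD', mul_pos hε ha0]
  have hbdd : BddBelow S := ⟨c + 2 * s, hlb⟩
  refine le_antisymm ?_ (le_csInf ⟨(1 * a + c) + 1⁻¹ * D, 1, one_pos, rfl⟩ hlb)
  rcases eq_or_lt_of_le ha with ha0 | ha0
  · -- a = 0, s = 0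
    have hsz : s = 0 := by rw [hs, ← ha0, zero_mul, Real.sqrt_zero]
    rw [hsz]
    refine le_of_forall_pos_le_add fun δ hδ => ?_
    have hε : (0:ℝ) < (D + 1) / δ := by positivity
    refine csInf_le_of_le hbdd ⟨(D + 1)/δ, hε, rfl⟩ ?_
    have h2 : ((D + 1)/δ)⁻¹ * D = δ * D / (D + 1) := by
      field_simp
    rw [← ha0, mul_zero, h2]
    have : δ * D / (D + 1) ≤ δ := by
      rw [div_le_iff₀ (by linarith)]; nlinarith
    linarith
  · rcases eq_or_lt_of_le hD with hD0 | hD0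
    · have hsz : s = 0 := by rw [hs, ← hD0, mul_zero, Real.sqrt_zero]
      rw [hsz]
      refine le_of_forall_pos_le_add fun δ hδ => ?_
      have hε : (0:ℝ) < δ / a := by positivity
      refine csInf_le_of_le hbdd ⟨δ / a, hε, rfl⟩ ?_
      rw [← hD0, mul_zero, div_mul_cancel₀ _ ha0.ne']
      linarith
    · have hspos : 0 < s := Real.sqrt_pos.2 (mul_pos ha0 hD0)
      have hε : (0:ℝ) < s / a := by positivity
      refine csInf_le_of_le hbdd ⟨s / a, hε, rfl⟩ (le_of_eq ?_)
      have h1 : s / a * a = s := div_mul_cancel₀ _ ha0.ne'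
      have h2 : (s / a)⁻¹ * D = s := by
        rw [inv_div]
        rw [div_mul_eq_mul_div, div_eq_iff hspos.ne']
        nlinarith
      rw [h1, h2]; ring

lemma aux_cs {V : Type*} [NormedAddCommGroup V] [InnerProductSpace ℝ V]
    (Vop : V →L[ℝ] V →L[ℝ] ℝ) (hVsym : ∀ v w : V, Vop v w = Vop w v)
    (ν : ℝ) (hν : 0 < ν) (hVcoer : ∀ v : V, ν * ‖v‖ ^ 2 ≤ Vop v v)
    (v w : V) : Vop v w ≤ Real.sqrt (Vop v v) * Real.sqrt (Vop w w) := by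
  have hq : ∀ u : V, 0 ≤ Vop u u := fun u => le_trans (by positivity) (hVcoer u)
  have hzero : ∀ u : V, Vop u u = 0 → u = 0 := by
    intro u hu
    have := hVcoer u
    have : ‖u‖ ^ 2 ≤ 0 := by nlinarith
    have : ‖u‖ = 0 := by nlinarith [sq_nonneg ‖u‖, norm_nonneg u]
    simpa using this
  set sv := Real.sqrt (Vop v v) with hsv
  set sw := Real.sqrt (Vop w w) with hsw
  have hsv2 : sv ^ 2 = Vop v v := Real.sq_sqrt (hq v)
  have hsw2 : sw ^ 2 = Vop w w := Real.sq_sqrt (hq w)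
  rcases eq_or_lt_of_le (hq v) with h1 | h1
  · have hv0 : v = 0 := hzero v h1.symm
    simp only [hv0, map_zero, ContinuousLinearMap.zero_apply]
    positivity
  rcases eq_or_lt_of_le (hq w) with h2 | h2
  · have hw0 : w = 0 := hzero w h2.symm
    simp only [hw0, map_zero]
    positivity
  have h1' : 0 < sv := Real.sqrt_pos.2 h1
  have h2' : 0 < sw := Real.sqrt_pos.2 h2
  have hexp : (0:ℝ) ≤ Vop (sw • v - sv • w) (sw • v - sv • w) := hq _
  have hvw := hVsym v w
  simp only [map_sub, map_smul, ContinuousLinearMap.sub_apply,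
    ContinuousLinearMap.smul_apply, smul_eq_mul] at hexp
  nlinarith [mul_pos h1' h2']


/-- Properties of the viscous contact potential
`p(v,ζ) = inf_{ε>0} (R_ε(v) + R_ε*(ζ))`, where `R_ε(v) = (ε/2)⟨𝕍v,v⟩ + R(ι v)` and `R_ε*` is
its Fenchel conjugate: for every `ζ ∈ V*` the map `v ↦ p(v,ζ)` is convex and positively
one-homogeneous. -/
theorem stmt_5
    {V Z : Type*}
    [NormedAddCommGroup V] [InnerProductSpace ℝ V] [CompleteSpace V]
    [NormedAddCommGroup Z] [NormedSpace ℝ Z] [CompleteSpace Z]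
    (ι : V →L[ℝ] Z) (hι : Function.Injective ι)
    (Vop : V →L[ℝ] V →L[ℝ] ℝ) (hVsym : ∀ v w : V, Vop v w = Vop w v)
    (ν : ℝ) (hν : 0 < ν) (hVcoer : ∀ v : V, ν * ‖v‖ ^ 2 ≤ Vop v v)
    (R : Z → ℝ) (hRconv : ConvexOn ℝ Set.univ R)
    (hRhom : ∀ γ : ℝ, 0 ≤ γ → ∀ z : Z, R (γ • z) = γ * R z)
    (ρ₁ ρ₂ : ℝ) (hρ₁ : 0 < ρ₁) (hρ : ρ₁ ≤ ρ₂)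
    (hRbound : ∀ z : Z, ρ₁ * ‖z‖ ≤ R z ∧ R z ≤ ρ₂ * ‖z‖)
    (p : V → (V →L[ℝ] ℝ) → ℝ)
    (hp : ∀ (v : V) (ζ : V →L[ℝ] ℝ), p v ζ = sInf {x : ℝ | ∃ ε : ℝ, 0 < ε ∧
        x = (ε / 2 * Vop v v + R (ι v)) +
            sSup {y : ℝ | ∃ w : V, y = ζ w - (ε / 2 * Vop w w + R (ι w))}}) :
    ∀ ζ : V →L[ℝ] ℝ,
      ConvexOn ℝ Set.univ (fun v => p v ζ) ∧
      (∀ γ : ℝ, 0 < γ → ∀ v : V, p (γ • v) ζ = γ * p v ζ) ∧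
      p 0 ζ = 0 := by
  intro ζ
  have hR0 : R 0 = 0 := by
    have := hRhom 0 le_rfl 0
    simpa using this
  have hRnn : ∀ z : Z, 0 ≤ R z := fun z =>
    le_trans (by positivity) (hRbound z).1
  have hq : ∀ u : V, 0 ≤ Vop u u := fun u => le_trans (by positivity) (hVcoer u)
  set T1 : Set ℝ := {y : ℝ | ∃ w : V, y = ζ w - ((1:ℝ) / 2 * Vop w w + R (ι w))} with hT1
  have h0mem : (0:ℝ) ∈ T1 := ⟨0, by simp [hR0]⟩
  have hT1bdd : BddAbove T1 := by
    refine ⟨‖ζ‖ ^ 2 / (2 * ν), ?_⟩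
    rintro y ⟨w, rfl⟩
    have h1 : ζ w ≤ ‖ζ‖ * ‖w‖ := by
      have h := ζ.le_opNorm w
      rw [Real.norm_eq_abs] at h
      linarith [le_abs_self (ζ w)]
    have h2 := hVcoer w
    have h3 := hRnn (ι w)
    rw [le_div_iff₀ (by linarith : (0:ℝ) < 2 * ν)]
    nlinarith [sq_nonneg (‖ζ‖ - ν * ‖w‖), mul_le_mul_of_nonneg_left h1 (le_of_lt hν)]
  set D := sSup T1 with hD
  have hD0 : 0 ≤ D := le_csSup hT1bdd h0mem
  have hsup : ∀ ε : ℝ, 0 < ε →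
      sSup {y : ℝ | ∃ w : V, y = ζ w - (ε / 2 * Vop w w + R (ι w))} = ε⁻¹ * D := by
    intro ε hε
    have hne : ε ≠ 0 := hε.ne'
    have hset : {y : ℝ | ∃ w : V, y = ζ w - (ε / 2 * Vop w w + R (ι w))} = ε⁻¹ • T1 := by
      ext y
      simp only [Set.mem_smul_set, Set.mem_setOf_eq, smul_eq_mul, hT1]
      constructor
      · rintro ⟨w, rfl⟩
        refine ⟨ζ (ε • w) - ((1:ℝ)/2 * Vop (ε • w) (ε • w) + R (ι (ε • w))), ⟨ε • w, rfl⟩, ?_⟩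
        simp only [map_smul, ContinuousLinearMap.smul_apply, smul_eq_mul]
        rw [hRhom ε hε.le]
        field_simp
      · rintro ⟨_, ⟨u, rfl⟩, rfl⟩
        refine ⟨ε⁻¹ • u, ?_⟩
        simp only [map_smul, ContinuousLinearMap.smul_apply, smul_eq_mul]
        rw [hRhom ε⁻¹ (inv_nonneg.2 hε.le)]
        field_simp
    rw [hset, Real.sSup_smul_of_nonneg (inv_nonneg.2 hε.le), smul_eq_mul]
  have hpv : ∀ v : V, p v ζ = R (ι v) + 2 * Real.sqrt ((Vop v v / 2) * D) := by
    intro v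
    rw [hp v ζ]
    have hsetv : {x : ℝ | ∃ ε : ℝ, 0 < ε ∧
        x = (ε / 2 * Vop v v + R (ι v)) +
            sSup {y : ℝ | ∃ w : V, y = ζ w - (ε / 2 * Vop w w + R (ι w))}} =
        {x : ℝ | ∃ ε : ℝ, 0 < ε ∧ x = (ε * (Vop v v / 2) + R (ι v)) + ε⁻¹ * D} := by
      ext x
      constructor
      · rintro ⟨ε, hε, rfl⟩
        exact ⟨ε, hε, by rw [hsup ε hε]; ring⟩
      · rintro ⟨ε, hε, rfl⟩
        exact ⟨ε, hε, by rw [hsup ε hε]; ring⟩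
    rw [hsetv, aux_inf (Vop v v / 2) D (R (ι v)) (by linarith [hq v]) hD0]
  have hform : ∀ v : V, p v ζ = R (ι v) + Real.sqrt (2 * D) * Real.sqrt (Vop v v) := by
    intro v
    rw [hpv v, ← Real.sqrt_mul (by linarith : (0:ℝ) ≤ 2 * D)]
    have h4 : (2:ℝ) * D * (Vop v v) = 2 ^ 2 * ((Vop v v / 2) * D) := by ring
    rw [h4, Real.sqrt_mul (by norm_num : (0:ℝ) ≤ (2:ℝ)^2),
      Real.sqrt_sq (by norm_num : (0:ℝ) ≤ 2)]
  have hNsub : ∀ (a b : ℝ), 0 ≤ a → 0 ≤ b → ∀ x y : V,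
      Real.sqrt (Vop (a • x + b • y) (a • x + b • y)) ≤
        a * Real.sqrt (Vop x x) + b * Real.sqrt (Vop y y) := by
    intro a b ha hb x y
    have hcs := aux_cs Vop hVsym ν hν hVcoer x y
    have hsx : Real.sqrt (Vop x x) ^ 2 = Vop x x := Real.sq_sqrt (hq x)
    have hsy : Real.sqrt (Vop y y) ^ 2 = Vop y y := Real.sq_sqrt (hq y)
    have hexp : Vop (a • x + b • y) (a • x + b • y) =
        a ^ 2 * Vop x x + 2 * a * b * Vop x y + b ^ 2 * Vop y y := by
      simp only [map_add, map_smul, ContinuousLinearMap.add_apply,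
        ContinuousLinearMap.smul_apply, smul_eq_mul, hVsym y x]
      ring
    have hrhs : 0 ≤ a * Real.sqrt (Vop x x) + b * Real.sqrt (Vop y y) := by positivity
    have hle : Vop (a • x + b • y) (a • x + b • y) ≤
        (a * Real.sqrt (Vop x x) + b * Real.sqrt (Vop y y)) ^ 2 := by
      rw [hexp]
      nlinarith [mul_nonneg ha hb, Real.sqrt_nonneg (Vop x x), Real.sqrt_nonneg (Vop y y)]
    calc Real.sqrt (Vop (a • x + b • y) (a • x + b • y))
        ≤ Real.sqrt ((a * Real.sqrt (Vop x x) + b * Real.sqrt (Vop y y)) ^ 2) :=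
          Real.sqrt_le_sqrt hle
      _ = a * Real.sqrt (Vop x x) + b * Real.sqrt (Vop y y) := Real.sqrt_sq hrhs
  refine ⟨⟨convex_univ, ?_⟩, ?_, ?_⟩
  · intro x _ y _ a b ha hb hab
    simp only [smul_eq_mul]
    rw [hform, hform, hform]
    have h1 : R (ι (a • x + b • y)) ≤ a * R (ι x) + b * R (ι y) := by
      have hmap : ι (a • x + b • y) = a • ι x + b • ι y := by
        simp [map_add, map_smul]
      rw [hmap]
      simpa [smul_eq_mul] using
        hRconv.2 (Set.mem_univ (ι x)) (Set.mem_univ (ι y)) ha hb hab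
    have h2 : Real.sqrt (2 * D) * Real.sqrt (Vop (a • x + b • y) (a • x + b • y)) ≤
        Real.sqrt (2 * D) * (a * Real.sqrt (Vop x x) + b * Real.sqrt (Vop y y)) :=
      mul_le_mul_of_nonneg_left (hNsub a b ha hb x y) (Real.sqrt_nonneg _)
    nlinarith [h1, h2]
  · intro γ hγ v
    rw [hform, hform]
    have hmap : ι (γ • v) = γ • ι v := by simp [map_smul]
    have hqs : Vop (γ • v) (γ • v) = γ ^ 2 * Vop v v := by
      simp only [map_smul, ContinuousLinearMap.smul_apply, smul_eq_mul]
      ring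
    rw [hmap, hRhom γ hγ.le, hqs, Real.sqrt_mul (sq_nonneg γ), Real.sqrt_sq hγ.le]
    ring
  · rw [hform]
    simp [hR0]
end

section
/- With the setting and notation of the viscous contact potential, there exists a constant C > 0 such that p(v,ζ) ≤ C·|v|_V·(1 + |ζ|_{V*}) for all v ∈ V and ζ ∈ V*. -/
set_option maxHeartbeats 1600000 in
/-- Growth estimate for the viscous contact potential
`p(v,ζ) = inf_{ε>0} (R_ε(v) + R_ε*(ζ))`: there is a constant `C > 0` with
`p(v,ζ) ≤ C |v|_V (1 + |ζ|_{V*})` for all `v ∈ V`, `ζ ∈ V*`. -/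
theorem stmt_6
    {V Z : Type*}
    [NormedAddCommGroup V] [InnerProductSpace ℝ V] [CompleteSpace V]
    [NormedAddCommGroup Z] [NormedSpace ℝ Z] [CompleteSpace Z]
    (ι : V →L[ℝ] Z) (hι : Function.Injective ι)
    (Vop : V →L[ℝ] V →L[ℝ] ℝ) (hVsym : ∀ v w : V, Vop v w = Vop w v)
    (ν : ℝ) (hν : 0 < ν) (hVcoer : ∀ v : V, ν * ‖v‖ ^ 2 ≤ Vop v v)
    (R : Z → ℝ) (hRconv : ConvexOn ℝ Set.univ R)
    (hRhom : ∀ γ : ℝ, 0 ≤ γ → ∀ z : Z, R (γ • z) = γ * R z)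
    (ρ₁ ρ₂ : ℝ) (hρ₁ : 0 < ρ₁) (hρ : ρ₁ ≤ ρ₂)
    (hRbound : ∀ z : Z, ρ₁ * ‖z‖ ≤ R z ∧ R z ≤ ρ₂ * ‖z‖)
    (p : V → (V →L[ℝ] ℝ) → ℝ)
    (hp : ∀ (v : V) (ζ : V →L[ℝ] ℝ), p v ζ = sInf {x : ℝ | ∃ ε : ℝ, 0 < ε ∧
        x = (ε / 2 * Vop v v + R (ι v)) +
            sSup {y : ℝ | ∃ w : V, y = ζ w - (ε / 2 * Vop w w + R (ι w))}}) :
    ∃ C : ℝ, 0 < C ∧ ∀ (v : V) (ζ : V →L[ℝ] ℝ), p v ζ ≤ C * ‖v‖ * (1 + ‖ζ‖) := by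
  have hR0 : R 0 = 0 := by
    have h := hRhom 0 le_rfl 0
    simpa using h
  have hRnn : ∀ z : Z, 0 ≤ R z := fun z =>
    le_trans (by positivity) (hRbound z).1
  have hρ₂ : 0 < ρ₂ := lt_of_lt_of_le hρ₁ hρ
  set M := ‖Vop‖ with hM
  have hM0 : 0 ≤ M := norm_nonneg Vop
  refine ⟨M / (2 * ν) + ρ₂ * ‖ι‖ + 1 / 2 + 1, by
    have h1 : 0 ≤ M / (2 * ν) := by positivity
    have h2 : 0 ≤ ρ₂ * ‖ι‖ := mul_nonneg hρ₂.le (norm_nonneg ι)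
    linarith, ?_⟩
  intro v ζ
  rw [hp]
  set a := ‖v‖ with ha
  set b := ‖ζ‖ with hb
  have ha0 : 0 ≤ a := norm_nonneg v
  have hb0 : 0 ≤ b := norm_nonneg ζ
  -- per-ε facts on the sup set
  have hkey : ∀ ε : ℝ, 0 < ε → ∀ y ∈ {y : ℝ | ∃ w : V, y = ζ w - (ε / 2 * Vop w w + R (ι w))},
      y ≤ b ^ 2 / (2 * ε * ν) := by
    intro ε hε y hy
    obtain ⟨w, rfl⟩ := hy
    have h1 : ζ w ≤ b * ‖w‖ := le_trans (le_abs_self _) (ζ.le_opNorm w)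
    have h2 : ν * ‖w‖ ^ 2 ≤ Vop w w := hVcoer w
    have h3 : 0 ≤ R (ι w) := hRnn _
    rw [le_div_iff₀ (by positivity)]
    have e1 : 2 * ε * ν * ζ w ≤ 2 * ε * ν * (b * ‖w‖) :=
      mul_le_mul_of_nonneg_left h1 (by positivity)
    have e2 : ε ^ 2 * ν * (ν * ‖w‖ ^ 2) ≤ ε ^ 2 * ν * Vop w w :=
      mul_le_mul_of_nonneg_left h2 (by positivity)
    have e3 : 0 ≤ 2 * ε * ν * R (ι w) := by positivity
    nlinarith [sq_nonneg (ε * ν * ‖w‖ - b)]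
  have hmem0 : ∀ ε : ℝ, (0:ℝ) ∈ {y : ℝ | ∃ w : V, y = ζ w - (ε / 2 * Vop w w + R (ι w))} := by
    intro ε
    refine ⟨0, ?_⟩
    simp [hR0]
  have hbddA : ∀ ε : ℝ, 0 < ε → BddAbove {y : ℝ | ∃ w : V, y = ζ w - (ε / 2 * Vop w w + R (ι w))} :=
    fun ε hε => ⟨b ^ 2 / (2 * ε * ν), fun y hy => hkey ε hε y hy⟩
  have hsupub : ∀ ε : ℝ, 0 < ε →
      sSup {y : ℝ | ∃ w : V, y = ζ w - (ε / 2 * Vop w w + R (ι w))} ≤ b ^ 2 / (2 * ε * ν) :=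
    fun ε hε => csSup_le ⟨0, hmem0 ε⟩ (hkey ε hε)
  have hsupnn : ∀ ε : ℝ, 0 < ε →
      0 ≤ sSup {y : ℝ | ∃ w : V, y = ζ w - (ε / 2 * Vop w w + R (ι w))} :=
    fun ε hε => le_csSup (hbddA ε hε) (hmem0 ε)
  -- the inf set is bounded below by 0
  have hbddB : BddBelow {x : ℝ | ∃ ε : ℝ, 0 < ε ∧
      x = (ε / 2 * Vop v v + R (ι v)) +
          sSup {y : ℝ | ∃ w : V, y = ζ w - (ε / 2 * Vop w w + R (ι w))}} := by
    refine ⟨0, ?_⟩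
    rintro x ⟨ε, hε, rfl⟩
    have h1 : 0 ≤ Vop v v := le_trans (by positivity) (hVcoer v)
    have h2 := hsupnn ε hε
    have h3 := hRnn (ι v)
    positivity
  -- main estimate: for every δ > 0
  refine le_of_forall_pos_le_add ?_
  intro δ hδ
  set d : ℝ := δ / (1 + b) with hd
  have hd0 : 0 < d := by positivity
  set ε : ℝ := (1 + b) / (ν * (a + d)) with hε
  have hε0 : 0 < ε := by positivity
  have hεid : ε * (ν * (a + d)) = 1 + b := by
    rw [hε]; field_simp
  have hdid : d * (1 + b) = δ := by
    rw [hd]; field_simp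
  have hVvv : Vop v v ≤ M * a ^ 2 := by
    have h1 : Vop v v ≤ ‖Vop v‖ * a := le_trans (le_abs_self _) ((Vop v).le_opNorm v)
    have h2 : ‖Vop v‖ * a ≤ (M * a) * a := mul_le_mul_of_nonneg_right (Vop.le_opNorm v) ha0
    calc Vop v v ≤ ‖Vop v‖ * a := h1
      _ ≤ (M * a) * a := h2
      _ = M * a ^ 2 := by ring
  have hRv : R (ι v) ≤ ρ₂ * ‖ι‖ * a := by
    calc R (ι v) ≤ ρ₂ * ‖ι v‖ := (hRbound (ι v)).2
      _ ≤ ρ₂ * (‖ι‖ * a) := mul_le_mul_of_nonneg_left (ι.le_opNorm v) hρ₂.le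
      _ = ρ₂ * ‖ι‖ * a := by ring
  -- term bounds
  have h1 : ε / 2 * Vop v v ≤ M / (2 * ν) * a * (1 + b) := by
    have key2 : a * (1 + b) = ε * ν * a ^ 2 + ε * ν * (a * d) := by
      rw [← hεid]; ring
    have key : ε * a ^ 2 ≤ a * (1 + b) / ν := by
      rw [le_div_iff₀ hν]
      have : 0 ≤ ε * ν * (a * d) := by positivity
      nlinarith
    calc ε / 2 * Vop v v ≤ ε / 2 * (M * a ^ 2) :=
          mul_le_mul_of_nonneg_left hVvv (by positivity)
      _ = M / 2 * (ε * a ^ 2) := by ring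
      _ ≤ M / 2 * (a * (1 + b) / ν) :=
          mul_le_mul_of_nonneg_left key (by positivity)
      _ = M / (2 * ν) * a * (1 + b) := by field_simp
  have h3 : b ^ 2 / (2 * ε * ν) ≤ a * (1 + b) / 2 + δ / 2 := by
    have heq : b ^ 2 / (2 * ε * ν) = b ^ 2 * (a + d) / (2 * (1 + b)) := by
      rw [hε]; field_simp
    rw [heq, div_le_iff₀ (by positivity)]
    have hb1 : b ^ 2 ≤ (1 + b) ^ 2 := by nlinarith
    have h5 : (a + d) * b ^ 2 ≤ (a + d) * (1 + b) ^ 2 :=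
      mul_le_mul_of_nonneg_left hb1 (by positivity)
    have h6 : d * (1 + b) ^ 2 = δ * (1 + b) := by
      rw [sq, ← mul_assoc, hdid]
    linarith
  have hx : (ε / 2 * Vop v v + R (ι v)) +
      sSup {y : ℝ | ∃ w : V, y = ζ w - (ε / 2 * Vop w w + R (ι w))} ≤
      (M / (2 * ν) + ρ₂ * ‖ι‖ + 1 / 2 + 1) * a * (1 + b) + δ := by
    have h2 : R (ι v) ≤ ρ₂ * ‖ι‖ * a * (1 + b) := by
      have : 0 ≤ ρ₂ * ‖ι‖ * a * b :=
        mul_nonneg (mul_nonneg (mul_nonneg hρ₂.le (norm_nonneg ι)) ha0) hb0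
      linarith [hRv]
    have h4 := le_trans (hsupub ε hε0) h3
    have h7 : 0 ≤ a * (1 + b) := mul_nonneg ha0 (by linarith)
    set s3 : ℝ := sSup {y : ℝ | ∃ w : V, y = ζ w - (ε / 2 * Vop w w + R (ι w))} with hs3
    set q : ℝ := ε / 2 * Vop v v with hq
    set c2 : ℝ := ρ₂ * ‖ι‖ with hc2
    set c1 : ℝ := M / (2 * ν) with hc1
    have goal2 : q + R (ι v) + s3 ≤ (c1 + c2 + 1 / 2 + 1) * a * (1 + b) + δ := by
      nlinarith
    linarith [goal2]
  exact le_trans (csInf_le hbddB ⟨ε, hε0, rfl⟩) hx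
end

section
/- Let U be a reflexive real Banach space, Z a real Banach space, and ι: U → Z an injective continuous linear map. Let u: [a,b] → U satisfy sup over t ∈ [a,b] of ‖u(t)‖_U < +∞ and suppose ι∘u has finite total variation as a map from [a,b] into Z. Then for every t ∈ [a,b) there exists u⁺(t) ∈ U such that, as s → t from the right, ι(u(s)) → ι(u⁺(t)) strongly in Z and ⟨φ, u(s)⟩ → ⟨φ, u⁺(t)⟩ for every φ ∈ U* (i.e. u(s) converges weakly to u⁺(t) in U); analogously, for every t ∈ (a,b] there exists u⁻(t) ∈ U with the same properties as s → t from the left. -/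
open Filter Topology Set Metric
open scoped ENNReal

section aux
variable {U Z : Type*}
    [NormedAddCommGroup U] [NormedSpace ℝ U] [CompleteSpace U]
    [NormedAddCommGroup Z] [NormedSpace ℝ Z] [CompleteSpace Z]

/-- One-sided Cauchy criterion from finite variation. -/
lemma aux_cauchy {g : ℝ → Z} {a b : ℝ}
    (hvar : eVariationOn g (Icc a b) ≠ ⊤) (l : Filter ℝ) [NeBot l] {S : Set ℝ}
    (hS : S ⊆ Icc a b) (hl : l ≤ 𝓟 S) {L : ℝ≥0∞}
    (hV : Tendsto (fun x => eVariationOn g (Icc a b ∩ Icc a x)) l (𝓝 L)) :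
    ∃ z : Z, Tendsto g l (𝓝 z) := by
  set V : ℝ → ℝ≥0∞ := fun x => eVariationOn g (Icc a b ∩ Icc a x) with hVdef
  have hVle : ∀ x, V x ≤ eVariationOn g (Icc a b) := fun x =>
    eVariationOn.mono g inter_subset_left
  have hVtop : ∀ x, V x ≠ ⊤ := fun x => (lt_of_le_of_lt (hVle x) hvar.lt_top).ne
  have hL : L ≠ ⊤ := by
    have : L ≤ eVariationOn g (Icc a b) :=
      le_of_tendsto hV (Eventually.of_forall fun x => hVle x)
    exact (lt_of_le_of_lt this hvar.lt_top).ne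
  rw [← cauchy_map_iff_exists_tendsto]
  refine EMetric.cauchy_iff.2 ⟨map_neBot.ne, fun ε hε => ?_⟩
  obtain ⟨p, hp0, hpε⟩ := ENNReal.lt_iff_exists_nnreal_btwn.1 hε
  have hp0' : (p : ℝ≥0∞) ≠ 0 := hp0.ne'
  set η : ℝ≥0∞ := (p : ℝ≥0∞) / 2 / 2 with hηdef
  have hη0 : 0 < η := ENNReal.half_pos (ENNReal.half_pos hp0').ne'
  have hηη : η + η = (p : ℝ≥0∞) / 2 := ENNReal.add_halves _
  have hev : ∀ᶠ x in l, V x ∈ Icc (L - η) (L + η) :=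
    (ENNReal.tendsto_nhds hL).1 hV η hη0
  have hev2 : ∀ᶠ x in l, V x ∈ Icc (L - η) (L + η) ∧ x ∈ S :=
    hev.and (hl (mem_principal_self S))
  obtain ⟨T, hTl, hT⟩ := hev2.exists_mem
  refine ⟨g '' T, image_mem_map hTl, ?_⟩
  rintro _ ⟨s1, hs1, rfl⟩ _ ⟨s2, hs2, rfl⟩
  -- wlog s1 ≤ s2
  have key : ∀ s1 s2, s1 ∈ T → s2 ∈ T → s1 ≤ s2 → edist (g s1) (g s2) < ε := by
    intro s1 s2 hs1 hs2 h12
    obtain ⟨hV1, hS1⟩ := hT s1 hs1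
    obtain ⟨hV2, hS2⟩ := hT s2 hs2
    have hs1I : s1 ∈ Icc a b := hS hS1
    have hs2I : s2 ∈ Icc a b := hS hS2
    have hsplit := eVariationOn.Icc_add_Icc g (a := a) (b := s1) (c := s2)
      hs1I.1 h12 hs1I
    have hedist : edist (g s1) (g s2) ≤ eVariationOn g (Icc a b ∩ Icc s1 s2) :=
      eVariationOn.edist_le g ⟨hs1I, le_refl s1, h12⟩ ⟨hs2I, h12, le_refl s2⟩
    have hmid : eVariationOn g (Icc a b ∩ Icc s1 s2) ≤ (p : ℝ≥0∞) / 2 := by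
      have h1 : L ≤ V s1 + η := tsub_le_iff_right.1 hV1.1
      have h2 : V s1 + eVariationOn g (Icc a b ∩ Icc s1 s2) ≤ V s1 + (η + η) := by
        calc V s1 + eVariationOn g (Icc a b ∩ Icc s1 s2) = V s2 := hsplit
          _ ≤ L + η := hV2.2
          _ ≤ (V s1 + η) + η := add_le_add_left h1 _
          _ = V s1 + (η + η) := add_assoc _ _ _
      have := (ENNReal.add_le_add_iff_left (hVtop s1)).1 h2
      exact this.trans hηη.le
    calc edist (g s1) (g s2) ≤ (p : ℝ≥0∞) / 2 := hedist.trans hmid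
      _ < (p : ℝ≥0∞) := ENNReal.half_lt_self hp0' ENNReal.coe_ne_top
      _ < ε := hpε
  rcases le_total s1 s2 with h | h
  · exact key s1 s2 hs1 hs2 h
  · rw [edist_comm]; exact key s2 s1 hs2 hs1 h
open NormedSpace

set_option linter.unusedSectionVars false in
/-- Cluster-point version of the weak limit extraction. -/
lemma aux_cluster (hrefl : Function.Surjective (inclusionInDoubleDual ℝ U))
    (ι : U →L[ℝ] Z) {l : Filter ℝ} [NeBot l] {C : ℝ} {u : ℝ → U}
    (hb : ∀ᶠ s in l, ‖u s‖ ≤ C) {z : Z}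
    (hz : Tendsto (fun s => ι (u s)) l (𝓝 z)) :
    ∃ up : U, ι up = z ∧
      ∀ φ : U →L[ℝ] ℝ, MapClusterPt (φ up) l (fun s => φ (u s)) := by
  set J := inclusionInDoubleDual ℝ U with hJ
  set h : ℝ → WeakDual ℝ (StrongDual ℝ U) := fun s => StrongDual.toWeakDual (J (u s)) with hh
  have hK : IsCompact (WeakDual.toStrongDual ⁻¹' closedBall (0 : StrongDual ℝ (StrongDual ℝ U)) C) :=
    WeakDual.isCompact_closedBall 0 C
  have hmap : Filter.map h l ≤ 𝓟 (WeakDual.toStrongDual ⁻¹' closedBall 0 C) := by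
    rw [le_principal_iff, mem_map]
    filter_upwards [hb] with s hs
    simp only [Set.mem_preimage, mem_closedBall, dist_zero_right]
    have e := dist_zero_right (WeakDual.toStrongDual (h s))
    exact e.trans_le (le_trans (double_dual_bound ℝ U (u s)) hs)
  obtain ⟨Λ, hΛK, hΛ⟩ := hK.exists_mapClusterPt (u := h) hmap
  obtain ⟨up, hup⟩ := hrefl (WeakDual.toStrongDual Λ)
  have hcl : ∀ φ : U →L[ℝ] ℝ, MapClusterPt (φ up) l (fun s => φ (u s)) := by
    intro φ
    have hev : MapClusterPt (Λ φ) l ((fun x : WeakDual ℝ (StrongDual ℝ U) => x φ) ∘ h) :=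
      hΛ.tendsto_comp (f := fun x : WeakDual ℝ (StrongDual ℝ U) => x φ)
        ((WeakDual.eval_continuous φ).tendsto Λ)
    have h1 : Λ φ = φ up := by
      have : J up φ = φ up := rfl
      rw [← this, hup]; rfl
    have h2 : ((fun x : WeakDual ℝ (StrongDual ℝ U) => x φ) ∘ h) = fun s => φ (u s) := rfl
    rwa [h1, h2] at hev
  refine ⟨up, ?_, hcl⟩
  rw [NormedSpace.eq_iff_forall_dual_eq ℝ]
  intro ψ
  have hcl2 : MapClusterPt ((ψ.comp ι) up) l (fun s => ψ (ι (u s))) := hcl (ψ.comp ι)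
  have ht2 : Tendsto (fun s => ψ (ι (u s))) l (𝓝 (ψ z)) := (ψ.continuous.tendsto z).comp hz
  have : NeBot (𝓝 (ψ (ι up)) ⊓ 𝓝 (ψ z)) :=
    (hcl2.clusterPt.mono ht2).neBot
  exact eq_of_nhds_neBot this

set_option linter.unusedSectionVars false in
/-- Full weak-convergence extraction. -/
lemma aux_weak (hrefl : Function.Surjective (inclusionInDoubleDual ℝ U))
    (ι : U →L[ℝ] Z) (hι : Function.Injective ι) {l : Filter ℝ} [NeBot l] {C : ℝ} {u : ℝ → U}
    (hb : ∀ᶠ s in l, ‖u s‖ ≤ C) {z : Z}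
    (hz : Tendsto (fun s => ι (u s)) l (𝓝 z)) :
    ∃ up : U, ι up = z ∧
      ∀ φ : U →L[ℝ] ℝ, Tendsto (fun s => φ (u s)) l (𝓝 (φ up)) := by
  obtain ⟨up, hup, hcl⟩ := aux_cluster hrefl ι hb hz
  refine ⟨up, hup, fun φ => ?_⟩
  by_contra hnot
  rw [Metric.tendsto_nhds] at hnot
  push_neg at hnot
  obtain ⟨ε, hε, hfreq⟩ := hnot
  set T : Set ℝ := {s | ε ≤ dist (φ (u s)) (φ up)} with hT
  have hfreq' : ∃ᶠ s in l, s ∈ T := hfreq.mono fun s hs => hs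
  have hne : NeBot (l ⊓ 𝓟 T) := Filter.frequently_mem_iff_neBot.1 hfreq'
  obtain ⟨up', hup', hcl'⟩ := aux_cluster (l := l ⊓ 𝓟 T) hrefl ι
    (hb.filter_mono inf_le_left) (hz.mono_left inf_le_left)
  have heq : up' = up := hι (hup'.trans hup.symm)
  have hclφ : MapClusterPt (φ up) (l ⊓ 𝓟 T) (fun s => φ (u s)) := heq ▸ hcl' φ
  have hclosed : IsClosed {x : ℝ | ε ≤ dist x (φ up)} :=
    isClosed_le continuous_const (continuous_id.dist continuous_const)
  have hmem : φ up ∈ {x : ℝ | ε ≤ dist x (φ up)} := by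
    rw [← hclosed.closure_eq]
    refine mem_closure_iff_clusterPt.2 (hclφ.clusterPt.mono ?_)
    rw [le_principal_iff, mem_map]
    exact mem_inf_of_right (by intro s hs; exact hs)
  simp only [Set.mem_setOf_eq, dist_self] at hmem
  exact absurd hmem (not_le.2 hε)

end aux

open NormedSpace in
/-- A bounded function `u : [a,b] → U` into a reflexive Banach space whose
composition with an injective continuous linear map `ι : U → Z` has finite total variation in
`Z` admits one-sided limits at every point: strong limits in `Z` and weak limits in `U`. -/
theorem stmt_8
    {U Z : Type*}
    [NormedAddCommGroup U] [NormedSpace ℝ U] [CompleteSpace U]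
    [NormedAddCommGroup Z] [NormedSpace ℝ Z] [CompleteSpace Z]
    (hrefl : Function.Surjective (NormedSpace.inclusionInDoubleDual ℝ U))
    (ι : U →L[ℝ] Z) (hι : Function.Injective ι)
    (a b : ℝ) (hab : a ≤ b)
    (u : ℝ → U) (hbdd : ∃ C : ℝ, ∀ t ∈ Set.Icc a b, ‖u t‖ ≤ C)
    (hvar : eVariationOn (fun t => ι (u t)) (Set.Icc a b) ≠ ⊤) :
    (∀ t ∈ Set.Ico a b, ∃ up : U,
        Tendsto (fun s => ι (u s)) (𝓝[Set.Ioc t b] t) (𝓝 (ι up)) ∧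
        ∀ φ : U →L[ℝ] ℝ, Tendsto (fun s => φ (u s)) (𝓝[Set.Ioc t b] t) (𝓝 (φ up))) ∧
    (∀ t ∈ Set.Ioc a b, ∃ um : U,
        Tendsto (fun s => ι (u s)) (𝓝[Set.Ico a t] t) (𝓝 (ι um)) ∧
        ∀ φ : U →L[ℝ] ℝ, Tendsto (fun s => φ (u s)) (𝓝[Set.Ico a t] t) (𝓝 (φ um))) := by
  obtain ⟨C, hC⟩ := hbdd
  set g : ℝ → Z := fun s => ι (u s) with hg
  set V : ℝ → ℝ≥0∞ := fun x => eVariationOn g (Icc a b ∩ Icc a x) with hV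
  have hMono : Monotone V := fun x y hxy =>
    eVariationOn.mono g (inter_subset_inter_right _ (Icc_subset_Icc le_rfl hxy))
  constructor
  · intro t ht
    have heq : 𝓝[Set.Ioc t b] t = 𝓝[>] t := nhdsWithin_Ioc_eq_nhdsGT ht.2
    have : NeBot (𝓝[Set.Ioc t b] t) := by rw [heq]; infer_instance
    have hS : Set.Ioc t b ⊆ Set.Icc a b :=
      Set.Ioc_subset_Icc_self.trans (Set.Icc_subset_Icc_left ht.1)
    have hl : 𝓝[Set.Ioc t b] t ≤ 𝓟 (Set.Ioc t b) :=
      le_principal_iff.2 self_mem_nhdsWithin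
    have hVt : Tendsto V (𝓝[Set.Ioc t b] t) (𝓝 (sInf (V '' Set.Ioi t))) := by
      rw [heq]; exact hMono.tendsto_nhdsGT t
    obtain ⟨z, hz⟩ := aux_cauchy hvar (𝓝[Set.Ioc t b] t) hS hl hVt
    have hbev : ∀ᶠ s in 𝓝[Set.Ioc t b] t, ‖u s‖ ≤ C := by
      filter_upwards [self_mem_nhdsWithin] with s hs using hC s (hS hs)
    obtain ⟨up, hup, hw⟩ := aux_weak hrefl ι hι hbev hz
    exact ⟨up, hup ▸ hz, hw⟩
  · intro t ht
    have heq : 𝓝[Set.Ico a t] t = 𝓝[<] t := nhdsWithin_Ico_eq_nhdsLT ht.1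
    have : NeBot (𝓝[Set.Ico a t] t) := by rw [heq]; infer_instance
    have hS : Set.Ico a t ⊆ Set.Icc a b :=
      Set.Ico_subset_Icc_self.trans (Set.Icc_subset_Icc_right ht.2)
    have hl : 𝓝[Set.Ico a t] t ≤ 𝓟 (Set.Ico a t) :=
      le_principal_iff.2 self_mem_nhdsWithin
    have hVt : Tendsto V (𝓝[Set.Ico a t] t) (𝓝 (sSup (V '' Set.Iio t))) := by
      rw [heq]; exact hMono.tendsto_nhdsLT t
    obtain ⟨z, hz⟩ := aux_cauchy hvar (𝓝[Set.Ico a t] t) hS hl hVt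
    have hbev : ∀ᶠ s in 𝓝[Set.Ico a t] t, ‖u s‖ ≤ C := by
      filter_upwards [self_mem_nhdsWithin] with s hs using hC s (hS hs)
    obtain ⟨um, hum, hw⟩ := aux_weak hrefl ι hι hbev hz
    exact ⟨um, hum ▸ hz, hw⟩
end

section
/- Let X be a reflexive, separable real Banach space, Y a real Banach space, and ι: X → Y an injective continuous linear map with dense range. Let C > 0 and let fₙ: [a,b] → X (n ∈ ℕ) satisfy sup over t ∈ [a,b] of ‖fₙ(t)‖_X ≤ C and Var_Y(ι∘fₙ; [a,b]) ≤ C for every n. Then there exist a strictly increasing sequence (n_k) of indices and a function f: [a,b] → X with sup over t of ‖f(t)‖_X ≤ C and Var_Y(ι∘f; [a,b]) ≤ C, such that for every t ∈ [a,b] and every φ ∈ X* one has ⟨φ, f_{n_k}(t)⟩ → ⟨φ, f(t)⟩ as k → ∞ (pointwise weak convergence in X). -/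
open Filter Topology
open scoped ENNReal

open NormedSpace


/-- Ultrafilter weak limit of a bounded sequence in a reflexive space. -/
lemma stmt9_ulim {X : Type*} [NormedAddCommGroup X] [NormedSpace ℝ X]
    (hrefl : Function.Surjective (inclusionInDoubleDual ℝ X))
    (U : Ultrafilter ℕ) {C : ℝ} (hC : 0 ≤ C) (x : ℕ → X) (hx : ∀ n, ‖x n‖ ≤ C) :
    ∃ z : X, ‖z‖ ≤ C ∧ ∀ φ : X →L[ℝ] ℝ, Tendsto (fun n => φ (x n)) U (𝓝 (φ z)) := by
  have hbd : ∀ (φ : X →L[ℝ] ℝ) n, φ (x n) ∈ Set.Icc (-(‖φ‖ * C)) (‖φ‖ * C) := by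
    intro φ n
    have h1 : |φ (x n)| ≤ ‖φ‖ * C := by
      have h0 : ‖φ (x n)‖ ≤ ‖φ‖ * ‖x n‖ := φ.le_opNorm _
      have h1 : ‖φ‖ * ‖x n‖ ≤ ‖φ‖ * C := by
        exact mul_le_mul_of_nonneg_left (hx n) (norm_nonneg _)
      calc |φ (x n)| = ‖φ (x n)‖ := (Real.norm_eq_abs _).symm
        _ ≤ ‖φ‖ * C := h0.trans h1
    exact abs_le.1 h1
  have hex : ∀ φ : X →L[ℝ] ℝ, ∃ L : ℝ, Tendsto (fun n => φ (x n)) U (𝓝 L) := by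
    intro φ
    obtain ⟨L, _, hL⟩ := (isCompact_Icc (a := -(‖φ‖ * C)) (b := ‖φ‖ * C)).ultrafilter_le_nhds
      (U.map (fun n => φ (x n))) (by
        rw [Filter.le_principal_iff, Ultrafilter.mem_coe, Ultrafilter.mem_map]
        exact Filter.univ_mem' (fun n => hbd φ n))
    exact ⟨L, hL⟩
  choose ℓ hℓ using hex
  have hadd : ∀ φ ψ : X →L[ℝ] ℝ, ℓ (φ + ψ) = ℓ φ + ℓ ψ := by
    intro φ ψ
    exact tendsto_nhds_unique (hℓ (φ + ψ)) ((hℓ φ).add (hℓ ψ))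
  have hsmul : ∀ (c : ℝ) (φ : X →L[ℝ] ℝ), ℓ (c • φ) = c * ℓ φ := by
    intro c φ
    exact tendsto_nhds_unique (hℓ (c • φ)) ((hℓ φ).const_mul c)
  have hbound : ∀ φ : X →L[ℝ] ℝ, ‖ℓ φ‖ ≤ C * ‖φ‖ := by
    intro φ
    have h1 : ∀ n, φ (x n) ∈ Set.Icc (-(‖φ‖ * C)) (‖φ‖ * C) := hbd φ
    have h2 : ℓ φ ∈ Set.Icc (-(‖φ‖ * C)) (‖φ‖ * C) :=
      isClosed_Icc.mem_of_tendsto (hℓ φ) (Filter.Eventually.of_forall h1)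
    have := abs_le.2 ⟨h2.1, h2.2⟩
    simpa [Real.norm_eq_abs, mul_comm] using this
  let Λ : StrongDual ℝ (StrongDual ℝ X) :=
    LinearMap.mkContinuous
      { toFun := ℓ
        map_add' := hadd
        map_smul' := hsmul } C hbound
  obtain ⟨z, hz⟩ := hrefl Λ
  refine ⟨z, ?_, ?_⟩
  · have h1 : ‖inclusionInDoubleDual ℝ X z‖ = ‖z‖ :=
      (inclusionInDoubleDualLi ℝ (E := X)).norm_map z
    have h2 : ‖Λ‖ ≤ C := LinearMap.mkContinuous_norm_le _ hC _
    rw [← h1, hz]; exact h2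
  · intro φ
    have : Λ φ = ℓ φ := rfl
    have h3 : (inclusionInDoubleDual ℝ X z) φ = φ z := rfl
    rw [← h3, hz, this]
    exact hℓ φ


/-- If the dual of a normed space is separable, so is the space. -/
lemma stmt9_sep_of_dual_sep {E : Type*} [NormedAddCommGroup E] [NormedSpace ℝ E]
    [TopologicalSpace.SeparableSpace (E →L[ℝ] ℝ)] : TopologicalSpace.SeparableSpace E := by
  obtain ⟨D, Dcount, Ddense⟩ := TopologicalSpace.exists_countable_dense (E →L[ℝ] ℝ)
  have hex : ∀ φ : E →L[ℝ] ℝ, ∃ x : E, ‖x‖ ≤ 1 ∧ ‖φ‖ / 2 ≤ φ x := by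
    intro φ
    rcases eq_or_ne φ 0 with h | h
    · exact ⟨0, by simp [h]⟩
    · have hφ : 0 < ‖φ‖ := norm_pos_iff.2 h
      obtain ⟨x, hx1, hx2⟩ := φ.exists_lt_apply_of_lt_opNorm (r := ‖φ‖ / 2) (by linarith)
      rcases le_or_gt 0 (φ x) with hs | hs
      · refine ⟨x, hx1.le, ?_⟩
        have : ‖φ x‖ = φ x := by rw [Real.norm_eq_abs, abs_of_nonneg hs]
        linarith [hx2.le.trans_eq this]
      · refine ⟨-x, by simpa using hx1.le, ?_⟩
        have : ‖φ x‖ = -(φ x) := by rw [Real.norm_eq_abs, abs_of_neg hs]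
        have h2 : ‖φ‖ / 2 ≤ -(φ x) := by linarith [hx2.le.trans_eq this]
        simpa using h2
  choose ξ hξ1 hξ2 using hex
  set s : Set E := ξ '' D with hs
  have scount : s.Countable := Dcount.image _
  -- the closure of the span of `s` is everything
  have hspan : closure (Submodule.span ℝ s : Set E) = Set.univ := by
    by_contra hne
    obtain ⟨x, hx⟩ : ∃ x : E, x ∉ closure (Submodule.span ℝ s : Set E) := by
      by_contra h
      push_neg at h
      exact hne (Set.eq_univ_of_forall h)
    set N := (Submodule.span ℝ s).topologicalClosure with hN
    have hxN : x ∉ (N : Set E) := hx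
    obtain ⟨ff, u, hfu, hux⟩ := geometric_hahn_banach_closed_point
      (N.convex) (Submodule.isClosed_topologicalClosure _) hxN
    -- ff vanishes on N
    have hvanish : ∀ y ∈ N, ff y = 0 := by
      intro y hy
      by_contra hne'
      have hmem : ∀ c : ℝ, (c • y) ∈ N := fun c => N.smul_mem c hy
      have hb : ∀ c : ℝ, c * ff y < u := by
        intro c
        have := hfu _ (hmem c)
        simpa using this
      have := hb ((u + 1) / ff y)
      rw [div_mul_cancel₀ _ hne'] at this
      linarith
    have hu0 : 0 < u := by
      have := hfu 0 N.zero_mem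
      simpa using this
    have hffx : 0 < ff x := lt_trans hu0 hux
    have hffne : ff ≠ 0 := by
      intro h; rw [h] at hffx; simp at hffx
    have hffnorm : 0 < ‖ff‖ := norm_pos_iff.2 hffne
    set gg : E →L[ℝ] ℝ := ‖ff‖⁻¹ • ff with hgg
    have hggnorm : ‖gg‖ = 1 := by
      rw [hgg]
      rw [norm_smul (‖ff‖⁻¹) ff]
      simp [inv_mul_cancel₀ (ne_of_gt hffnorm)]
    have hggvanish : ∀ y ∈ s, gg y = 0 := by
      intro y hy
      have : ff y = 0 := hvanish y (Submodule.le_topologicalClosure _ (Submodule.subset_span hy))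
      simp [hgg, this]
    -- find φ ∈ D close to gg
    obtain ⟨φ, hφD, hφdist⟩ : ∃ φ ∈ D, dist gg φ < 1/4 := by
      have := Metric.mem_closure_iff.1 (Ddense.closure_eq ▸ Set.mem_univ gg :
        gg ∈ closure D)
      exact this (1/4) (by norm_num)
    have hφnorm : 3/4 ≤ ‖φ‖ := by
      have h1 : ‖gg‖ - ‖φ‖ ≤ ‖gg - φ‖ := norm_sub_norm_le _ _
      have h2 : ‖gg - φ‖ < 1/4 := by rwa [← dist_eq_norm]
      rw [hggnorm] at h1
      linarith
    set x₀ := ξ φ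
    have hx₀s : x₀ ∈ s := Set.mem_image_of_mem _ hφD
    have h1 : 3/8 ≤ φ x₀ := le_trans (by linarith) (hξ2 φ)
    have h2 : φ x₀ = (φ - gg) x₀ := by
      simp [hggvanish x₀ hx₀s]
    have h3 : (φ - gg) x₀ ≤ ‖φ - gg‖ * ‖x₀‖ := by
      calc (φ - gg) x₀ ≤ ‖(φ - gg) x₀‖ := le_abs_self _
        _ ≤ ‖φ - gg‖ * ‖x₀‖ := (φ - gg).le_opNorm _
    have h4 : ‖φ - gg‖ < 1/4 := by rwa [← dist_eq_norm, dist_comm]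
    have h5 : ‖φ - gg‖ * ‖x₀‖ ≤ ‖φ - gg‖ * 1 :=
      mul_le_mul_of_nonneg_left (hξ1 φ) (norm_nonneg _)
    linarith
  have : TopologicalSpace.IsSeparable (Set.univ : Set E) := by
    rw [← hspan]
    exact (scount.isSeparable.span).closure
  exact TopologicalSpace.isSeparable_univ_iff.1 this


/-- In a reflexive separable space, the dual is separable. -/
lemma stmt9_dual_sep {X : Type*} [NormedAddCommGroup X] [NormedSpace ℝ X]
    [TopologicalSpace.SeparableSpace X]
    (hrefl : Function.Surjective (inclusionInDoubleDual ℝ X)) :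
    TopologicalSpace.SeparableSpace (X →L[ℝ] ℝ) := by
  have hsep2 : TopologicalSpace.SeparableSpace (StrongDual ℝ (StrongDual ℝ X)) := by
    have h1 : TopologicalSpace.IsSeparable (Set.range (inclusionInDoubleDual ℝ X)) :=
      TopologicalSpace.isSeparable_range (inclusionInDoubleDual ℝ X).continuous
    have h2 : Set.range (inclusionInDoubleDual ℝ X) = Set.univ :=
      Set.range_eq_univ.2 hrefl
    rw [h2] at h1
    exact TopologicalSpace.isSeparable_univ_iff.1 h1
  exact @stmt9_sep_of_dual_sep (X →L[ℝ] ℝ) _ _ hsep2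

/-- Diagonal extraction from ultrafilter limits, for countably many sequences. -/
lemma stmt9_diag (U : Ultrafilter ℕ) (hU : (U : Filter ℕ) ≤ atTop)
    {ι : Type*} [Countable ι] (a : ι → ℕ → ℝ) (L : ι → ℝ)
    (h : ∀ i, Tendsto (fun n => a i n) U (𝓝 (L i))) :
    ∃ nk : ℕ → ℕ, StrictMono nk ∧
      ∀ i, Tendsto (fun k => a i (nk k)) atTop (𝓝 (L i)) := by
  rcases isEmpty_or_nonempty ι with hι | hι
  · exact ⟨id, strictMono_id, fun i => (IsEmpty.false i).elim⟩
  obtain ⟨e, he⟩ := exists_surjective_nat ι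
  set T : ℕ → Set ℕ := fun k => {n | ∀ j ≤ k, |a (e j) n - L (e j)| < 1 / (k + 1)} with hT
  have hTU : ∀ k, T k ∈ U := by
    intro k
    have : T k = ⋂ j ∈ Set.Iic k, {n | |a (e j) n - L (e j)| < 1 / (k + 1)} := by
      ext n; simp [hT, Set.mem_iInter]
    rw [this]
    refine (Filter.biInter_mem (Set.finite_Iic k)).2 ?_
    intro j _
    have hpos : (0 : ℝ) < 1 / (k + 1) := by positivity
    have := (h (e j)).eventually (eventually_abs_sub_lt (L (e j)) hpos)
    exact this
  have hstep : ∀ k p, ∃ n, p < n ∧ n ∈ T k := by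
    intro k p
    have h1 : {n | p < n} ∈ (U : Filter ℕ) :=
      Filter.mem_of_superset (hU (Filter.mem_atTop (p + 1)))
        (fun n hn => Nat.lt_of_succ_le hn)
    have h2 : T k ∩ {n | p < n} ∈ (U : Filter ℕ) := Filter.inter_mem (hTU k) h1
    obtain ⟨n, hn1, hn2⟩ := Ultrafilter.nonempty_of_mem h2
    exact ⟨n, hn2, hn1⟩
  let nk : ℕ → ℕ := fun k =>
    Nat.rec (hstep 0 0).choose (fun k ih => (hstep (k + 1) ih).choose) k
  have hmono : ∀ k, nk k < nk (k + 1) := fun k => (hstep (k + 1) (nk k)).choose_spec.1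
  have hmem : ∀ k, nk k ∈ T k := by
    intro k
    cases k with
    | zero => exact (hstep 0 0).choose_spec.2
    | succ k => exact (hstep (k + 1) (nk k)).choose_spec.2
  refine ⟨nk, strictMono_nat_of_lt_succ hmono, ?_⟩
  intro i
  obtain ⟨j, hj⟩ := he i
  rw [Metric.tendsto_atTop]
  intro ε hε
  obtain ⟨M, hM⟩ := exists_nat_one_div_lt hε
  refine ⟨max j M, fun k hk => ?_⟩
  have hjk : j ≤ k := le_trans (le_max_left _ _) hk
  have hMk : M ≤ k := le_trans (le_max_right _ _) hk
  have h1 : |a (e j) (nk k) - L (e j)| < 1 / (k + 1) := hmem k j hjk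
  have h2 : (1 : ℝ) / (k + 1) ≤ 1 / (M + 1) := by
    apply one_div_le_one_div_of_le
    · positivity
    · exact_mod_cast Nat.succ_le_succ hMk
  rw [Real.dist_eq, hj] at *
  calc |a i (nk k) - L i| < 1 / (k + 1) := by rw [← hj]; exact h1
    _ ≤ 1 / (M + 1) := h2
    _ < ε := hM

/-- Upgrade weak convergence from a dense set of functionals, for a bounded sequence. -/
lemma stmt9_dense_upgrade {X : Type*} [NormedAddCommGroup X] [NormedSpace ℝ X]
    {C : ℝ} (hC : 0 ≤ C) {x : ℕ → X} (hx : ∀ k, ‖x k‖ ≤ C) {x₀ : X} (hx₀ : ‖x₀‖ ≤ C)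
    {Φ : Set (X →L[ℝ] ℝ)} (hΦ : Dense Φ)
    (h : ∀ φ ∈ Φ, Tendsto (fun k => φ (x k)) atTop (𝓝 (φ x₀))) :
    ∀ φ : X →L[ℝ] ℝ, Tendsto (fun k => φ (x k)) atTop (𝓝 (φ x₀)) := by
  intro φ
  rw [Metric.tendsto_atTop]
  intro ε hε
  have hC1 : (0 : ℝ) < C + 1 := by linarith
  set δ := ε / (3 * (C + 1)) with hδ
  have hδpos : 0 < δ := by positivity
  obtain ⟨φ', hφ'Φ, hφ'dist⟩ : ∃ φ' ∈ Φ, dist φ φ' < δ :=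
    Metric.mem_closure_iff.1 (hΦ.closure_eq ▸ Set.mem_univ φ : φ ∈ closure Φ) δ hδpos
  have hnorm : ‖φ - φ'‖ < δ := by rwa [← dist_eq_norm]
  obtain ⟨N, hN⟩ := (Metric.tendsto_atTop.1 (h φ' hφ'Φ)) (ε / 3) (by positivity)
  refine ⟨N, fun k hk => ?_⟩
  have e1 : |φ (x k) - φ' (x k)| ≤ δ * (C + 1) := by
    have h1 : |(φ - φ') (x k)| ≤ ‖φ - φ'‖ * ‖x k‖ := (φ - φ').le_opNorm _
    have h2 : ‖φ - φ'‖ * ‖x k‖ ≤ δ * (C + 1) := by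
      apply mul_le_mul hnorm.le ((hx k).trans (by linarith)) (norm_nonneg _) hδpos.le
    calc |φ (x k) - φ' (x k)| = |(φ - φ') (x k)| := by simp
      _ ≤ δ * (C + 1) := h1.trans h2
  have e3 : |φ' x₀ - φ x₀| ≤ δ * (C + 1) := by
    have h1 : |(φ - φ') x₀| ≤ ‖φ - φ'‖ * ‖x₀‖ := (φ - φ').le_opNorm _
    have h2 : ‖φ - φ'‖ * ‖x₀‖ ≤ δ * (C + 1) := by
      apply mul_le_mul hnorm.le (hx₀.trans (by linarith)) (norm_nonneg _) hδpos.le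
    calc |φ' x₀ - φ x₀| = |(φ - φ') x₀| := by rw [abs_sub_comm]; simp
      _ ≤ δ * (C + 1) := h1.trans h2
  have e2 : |φ' (x k) - φ' x₀| < ε / 3 := by
    have := hN k hk; rwa [Real.dist_eq] at this
  have hδC : δ * (C + 1) = ε / 3 := by
    rw [hδ]
    field_simp
  rw [Real.dist_eq]
  calc |φ (x k) - φ x₀|
      ≤ |φ (x k) - φ' (x k)| + |φ' (x k) - φ' x₀| + |φ' x₀ - φ x₀| := by
        have := abs_sub_le (φ (x k)) (φ' x₀) (φ x₀)
        have h2 := abs_sub_le (φ (x k)) (φ' (x k)) (φ' x₀)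
        linarith
    _ < ε / 3 + ε / 3 + ε / 3 := by rw [hδC] at e1 e3; linarith
    _ = ε := by ring


/-- Weak sequential compactness of bounded sequences. -/
lemma stmt9_weak_seq_compact {X : Type*} [NormedAddCommGroup X] [NormedSpace ℝ X]
    [TopologicalSpace.SeparableSpace X]
    (hrefl : Function.Surjective (inclusionInDoubleDual ℝ X))
    {C : ℝ} (hC : 0 ≤ C) (x : ℕ → X) (hx : ∀ j, ‖x j‖ ≤ C) :
    ∃ ms : ℕ → ℕ, StrictMono ms ∧ ∃ z : X, ‖z‖ ≤ C ∧
      ∀ φ : X →L[ℝ] ℝ, Tendsto (fun j => φ (x (ms j))) atTop (𝓝 (φ z)) := by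
  haveI := stmt9_dual_sep hrefl
  obtain ⟨Φ, Φcount, Φdense⟩ := TopologicalSpace.exists_countable_dense (X →L[ℝ] ℝ)
  set U : Ultrafilter ℕ := Ultrafilter.of atTop with hUdef
  have hU : (U : Filter ℕ) ≤ atTop := Ultrafilter.of_le _
  obtain ⟨z, hznorm, hzw⟩ := stmt9_ulim hrefl U hC x hx
  haveI := Φcount.to_subtype
  obtain ⟨ms, hms, hconv⟩ := stmt9_diag U hU (fun (φ : ↥Φ) n => φ.1 (x n))
    (fun φ => φ.1 z) (fun φ => hzw φ.1)
  refine ⟨ms, hms, z, hznorm, ?_⟩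
  exact stmt9_dense_upgrade hC (fun j => hx (ms j)) hznorm Φdense
    (fun φ hφ => hconv ⟨φ, hφ⟩)

/-- Helly-type selection theorem: a sequence `fₙ : [a,b] → X` into a reflexive
separable Banach space, uniformly bounded in `X` and with uniformly bounded `Y`-variation of
`ι ∘ fₙ` (where `ι : X → Y` is injective, continuous linear with dense range), admits a
subsequence converging pointwise weakly in `X` to a limit `f` satisfying the same bounds. -/
theorem stmt_9
    {X Y : Type*}
    [NormedAddCommGroup X] [NormedSpace ℝ X] [CompleteSpace X]
    [TopologicalSpace.SeparableSpace X]
    [NormedAddCommGroup Y] [NormedSpace ℝ Y] [CompleteSpace Y]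
    (hrefl : Function.Surjective (NormedSpace.inclusionInDoubleDual ℝ X))
    (ι : X →L[ℝ] Y) (hι : Function.Injective ι) (hdense : DenseRange ι)
    (a b : ℝ) (hab : a ≤ b) (C : ℝ) (hC : 0 < C)
    (f : ℕ → ℝ → X)
    (hbdd : ∀ n : ℕ, ∀ t ∈ Set.Icc a b, ‖f n t‖ ≤ C)
    (hvar : ∀ n : ℕ, eVariationOn (fun t => ι (f n t)) (Set.Icc a b) ≤ ENNReal.ofReal C) :
    ∃ nk : ℕ → ℕ, StrictMono nk ∧ ∃ g : ℝ → X,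
      (∀ t ∈ Set.Icc a b, ‖g t‖ ≤ C) ∧
      eVariationOn (fun t => ι (g t)) (Set.Icc a b) ≤ ENNReal.ofReal C ∧
      ∀ t ∈ Set.Icc a b, ∀ φ : X →L[ℝ] ℝ,
        Tendsto (fun k => φ (f (nk k) t)) atTop (𝓝 (φ (g t))) := by
  classical
  have hC0 : (0 : ℝ) ≤ C := hC.le
  set U : Ultrafilter ℕ := Ultrafilter.of atTop with hUdef
  have hU : (U : Filter ℕ) ≤ atTop := Ultrafilter.of_le _
  -- pointwise ultrafilter weak limits
  have hA : ∀ t ∈ Set.Icc a b, ∃ z : X, ‖z‖ ≤ C ∧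
      ∀ φ : X →L[ℝ] ℝ, Tendsto (fun n => φ (f n t)) U (𝓝 (φ z)) :=
    fun t ht => stmt9_ulim hrefl U hC0 _ (fun n => hbdd n t ht)
  set g : ℝ → X := fun t => if ht : t ∈ Set.Icc a b then (hA t ht).choose else 0 with hgdef
  have hg_norm : ∀ t ∈ Set.Icc a b, ‖g t‖ ≤ C := by
    intro t ht
    simp only [hgdef, dif_pos ht]
    exact (hA t ht).choose_spec.1
  have hg_w : ∀ t, ∀ ht : t ∈ Set.Icc a b, ∀ φ : X →L[ℝ] ℝ,
      Tendsto (fun n => φ (f n t)) U (𝓝 (φ (g t))) := by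
    intro t ht φ
    simp only [hgdef, dif_pos ht]
    exact (hA t ht).choose_spec.2 φ
  -- real-valued variation functions
  set v : ℕ → ℝ → ℝ :=
    fun n t => (eVariationOn (fun s => ι (f n s)) (Set.Icc a b ∩ Set.Icc a t)).toReal with hvdef
  have hvle : ∀ n t, eVariationOn (fun s => ι (f n s)) (Set.Icc a b ∩ Set.Icc a t)
      ≤ ENNReal.ofReal C :=
    fun n t => le_trans (eVariationOn.mono _ Set.inter_subset_left) (hvar n)
  have hvtop : ∀ n t, eVariationOn (fun s => ι (f n s)) (Set.Icc a b ∩ Set.Icc a t) ≠ ⊤ :=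
    fun n t => ((hvle n t).trans_lt ENNReal.ofReal_lt_top).ne
  have hv_le_C : ∀ n t, v n t ≤ C :=
    fun n t => ENNReal.toReal_le_of_le_ofReal hC0 (hvle n t)
  have hv_nonneg : ∀ n t, 0 ≤ v n t := fun n t => ENNReal.toReal_nonneg
  have hv_mono : ∀ n, Monotone (v n) := by
    intro n t t' h
    exact ENNReal.toReal_mono (hvtop n t')
      (eVariationOn.mono _ (Set.inter_subset_inter_right _ (Set.Icc_subset_Icc_right h)))
  -- the key variation estimate
  have key4 : ∀ n q t, a ≤ q → q ≤ t → t ≤ b →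
      dist (ι (f n t)) (ι (f n q)) ≤ v n t - v n q := by
    intro n q t haq hqt htb
    have hq : q ∈ Set.Icc a b := ⟨haq, hqt.trans htb⟩
    have hsplit := eVariationOn.Icc_add_Icc (fun s => ι (f n s)) (s := Set.Icc a b)
      haq hqt hq
    have hedist : edist (ι (f n t)) (ι (f n q))
        ≤ eVariationOn (fun s => ι (f n s)) (Set.Icc a b ∩ Set.Icc q t) :=
      eVariationOn.edist_le _ ⟨⟨haq.trans hqt, htb⟩, ⟨hqt, le_refl t⟩⟩
        ⟨hq, ⟨le_refl q, hqt⟩⟩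
    have hmidfin : eVariationOn (fun s => ι (f n s)) (Set.Icc a b ∩ Set.Icc q t) ≠ ⊤ :=
      (((eVariationOn.mono _ Set.inter_subset_left).trans (hvar n)).trans_lt
        ENNReal.ofReal_lt_top).ne
    have htos : v n q + (eVariationOn (fun s => ι (f n s))
        (Set.Icc a b ∩ Set.Icc q t)).toReal = v n t := by
      rw [hvdef]
      dsimp only
      rw [← ENNReal.toReal_add (hvtop n q) hmidfin, hsplit]
    have hd : dist (ι (f n t)) (ι (f n q))
        ≤ (eVariationOn (fun s => ι (f n s)) (Set.Icc a b ∩ Set.Icc q t)).toReal := by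
      rw [dist_edist]
      exact ENNReal.toReal_mono hmidfin hedist
    linarith
  -- ultrafilter limits of the variations
  have hVex : ∀ t : ℝ, ∃ L : ℝ, Tendsto (fun n => v n t) U (𝓝 L) := by
    intro t
    obtain ⟨L, _, hL⟩ := (isCompact_Icc (a := (0:ℝ)) (b := C)).ultrafilter_le_nhds
      (U.map (fun n => v n t)) (by
        rw [Filter.le_principal_iff, Ultrafilter.mem_coe, Ultrafilter.mem_map]
        exact Filter.univ_mem' (fun n => ⟨hv_nonneg n t, hv_le_C n t⟩))
    exact ⟨L, hL⟩
  choose V hVt using hVex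
  have hV_mono : Monotone V := fun t t' h =>
    le_of_tendsto_of_tendsto' (hVt t) (hVt t') (fun n => hv_mono n h)
  -- dist of weak limits controlled by V
  have key_g : ∀ q t, a ≤ q → q ≤ t → t ≤ b →
      dist (ι (g t)) (ι (g q)) ≤ V t - V q := by
    intro q t haq hqt htb
    have hq : q ∈ Set.Icc a b := ⟨haq, hqt.trans htb⟩
    have ht : t ∈ Set.Icc a b := ⟨haq.trans hqt, htb⟩
    obtain ⟨ψ₀, hψ₀n, hψ₀v⟩ := exists_dual_vector'' ℝ (ι (g t) - ι (g q))
    have h1 : ∀ n, ψ₀ (ι (f n t)) - ψ₀ (ι (f n q)) ≤ v n t - v n q := by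
      intro n
      have e1 : ψ₀ (ι (f n t)) - ψ₀ (ι (f n q)) = ψ₀ (ι (f n t) - ι (f n q)) := by
        rw [map_sub]
      have e2 : ψ₀ (ι (f n t) - ι (f n q)) ≤ ‖ι (f n t) - ι (f n q)‖ := by
        calc ψ₀ (ι (f n t) - ι (f n q)) ≤ ‖ψ₀ (ι (f n t) - ι (f n q))‖ := le_abs_self _
          _ ≤ ‖ψ₀‖ * ‖ι (f n t) - ι (f n q)‖ := ψ₀.le_opNorm _
          _ ≤ 1 * ‖ι (f n t) - ι (f n q)‖ :=
            mul_le_mul_of_nonneg_right hψ₀n (norm_nonneg _)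
          _ = ‖ι (f n t) - ι (f n q)‖ := one_mul _
      rw [e1]
      refine e2.trans ?_
      rw [← dist_eq_norm]
      exact key4 n q t haq hqt htb
    have h2 : Tendsto (fun n => ψ₀ (ι (f n t)) - ψ₀ (ι (f n q))) U
        (𝓝 (ψ₀ (ι (g t)) - ψ₀ (ι (g q)))) :=
      (hg_w t ht (ψ₀.comp ι)).sub (hg_w q hq (ψ₀.comp ι))
    have h3 := le_of_tendsto_of_tendsto' h2 ((hVt t).sub (hVt q)) h1
    have h4 : ψ₀ (ι (g t)) - ψ₀ (ι (g q)) = dist (ι (g t)) (ι (g q)) := by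
      rw [← map_sub, hψ₀v, dist_eq_norm]
      norm_cast
    linarith [h3, h4.symm.le]
  -- the countable exceptional set
  set DV : Set ℝ := {x | ¬ContinuousAt V x} with hDVdef
  have hDVcount : DV.Countable := hV_mono.countable_not_continuousAt
  set S : Set ℝ := (Set.range ((↑) : ℚ → ℝ) ∩ Set.Icc a b) ∪ ({a, b} : Set ℝ)
      ∪ (DV ∩ Set.Icc a b) with hSdef
  have hScount : S.Countable := by
    refine Set.Countable.union (Set.Countable.union ?_ ?_) ?_
    · exact (Set.countable_range _).mono Set.inter_subset_left
    · exact ((Set.finite_singleton b).insert a).countable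
    · exact hDVcount.mono Set.inter_subset_left
  have haS : a ∈ S := Or.inl (Or.inr (by simp))
  have hbS : b ∈ S := Or.inl (Or.inr (by simp))
  have hSsub : S ⊆ Set.Icc a b := by
    rintro s ((⟨_, hs⟩ | hs) | ⟨_, hs⟩)
    · exact hs
    · simp only [Set.mem_insert_iff, Set.mem_singleton_iff] at hs
      rcases hs with rfl | rfl
      · exact ⟨le_refl _, hab⟩
      · exact ⟨hab, le_refl _⟩
    · exact hs
  -- diagonal extraction over S and a dense countable set of functionals
  haveI := stmt9_dual_sep hrefl
  obtain ⟨Φ, Φcount, Φdense⟩ := TopologicalSpace.exists_countable_dense (X →L[ℝ] ℝ)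
  haveI := hScount.to_subtype
  haveI := Φcount.to_subtype
  obtain ⟨nk, hnk_mono, hnk_conv⟩ := stmt9_diag U hU
    (ι := (↥S × ↥Φ) ⊕ ↥S)
    (fun i n => Sum.rec (fun p => p.2.1 (f n p.1.1)) (fun s => v n s.1) i)
    (fun i => Sum.rec (fun p => p.2.1 (g p.1.1)) (fun s => V s.1) i)
    (by
      rintro (⟨s, φ⟩ | s)
      · exact hg_w s.1 (hSsub s.2) φ.1
      · exact hVt s.1)
  have c1 : ∀ (s : ↥S) (φ : ↥Φ),
      Tendsto (fun k => φ.1 (f (nk k) s.1)) atTop (𝓝 (φ.1 (g s.1))) :=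
    fun s φ => hnk_conv (Sum.inl (s, φ))
  have c2 : ∀ s : ↥S, Tendsto (fun k => v (nk k) s.1) atTop (𝓝 (V s.1)) :=
    fun s => hnk_conv (Sum.inr s)
  -- upgrade to all functionals at points of S
  have step1 : ∀ s ∈ S, ∀ φ : X →L[ℝ] ℝ,
      Tendsto (fun k => φ (f (nk k) s)) atTop (𝓝 (φ (g s))) := by
    intro s hs
    exact stmt9_dense_upgrade hC0 (fun k => hbdd (nk k) s (hSsub hs))
      (hg_norm s (hSsub hs)) Φdense (fun φ hφ => c1 ⟨s, hs⟩ ⟨φ, hφ⟩)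
  -- convergence of ψ ∘ ι at every point of [a,b]
  have claim_i : ∀ t ∈ Set.Icc a b, ∀ ψ : Y →L[ℝ] ℝ,
      Tendsto (fun k => ψ (ι (f (nk k) t))) atTop (𝓝 (ψ (ι (g t)))) := by
    intro t ht ψ
    by_cases htS : t ∈ S
    · exact step1 t htS (ψ.comp ι)
    · have hta : a < t := lt_of_le_of_ne ht.1 (fun h => htS (h ▸ haS))
      have htb : t < b := lt_of_le_of_ne ht.2 (fun h => htS (h.symm ▸ hbS))
      have hcont : ContinuousAt V t := by
        by_contra h
        exact htS (Or.inr ⟨h, ht⟩)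
      rw [Metric.tendsto_atTop]
      intro ε hε
      have hψ1 : (0 : ℝ) < ‖ψ‖ + 1 := by positivity
      set ε' : ℝ := ε / (4 * (‖ψ‖ + 1)) with hε'def
      have hε' : 0 < ε' := by positivity
      obtain ⟨δ, hδ, hδprop⟩ := Metric.continuousAt_iff.1 hcont ε' hε'
      -- a rational point q < t close to t
      obtain ⟨q, hq1, hq2⟩ := exists_rat_btwn (show max a (t - δ) < t by
        rw [max_lt_iff]; exact ⟨hta, by linarith⟩)
      rw [max_lt_iff] at hq1
      have haq : a ≤ (q : ℝ) := hq1.1.le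
      have hqb : (q : ℝ) ≤ b := hq2.le.trans ht.2
      have hqS : (q : ℝ) ∈ S := Or.inl (Or.inl ⟨⟨q, rfl⟩, haq, hqb⟩)
      have hVq : V t - V (q : ℝ) < ε' := by
        have h1 := hδprop (x := (q : ℝ)) (by
          rw [Real.dist_eq, abs_of_nonpos (by linarith)]
          linarith [hq1.2])
        rw [Real.dist_eq] at h1
        have := abs_lt.1 h1
        linarith [this.1, this.2]
      -- a rational point q' > t close to t
      obtain ⟨q', hq'1, hq'2⟩ := exists_rat_btwn (show t < min b (t + δ) by
        rw [lt_min_iff]; exact ⟨htb, by linarith⟩)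
      rw [lt_min_iff] at hq'2
      have haq' : a ≤ (q' : ℝ) := ht.1.trans hq'1.le
      have hq'b : (q' : ℝ) ≤ b := hq'2.1.le
      have hq'S : (q' : ℝ) ∈ S := Or.inl (Or.inl ⟨⟨q', rfl⟩, haq', hq'b⟩)
      have hVq' : V (q' : ℝ) - V t < ε' := by
        have h1 := hδprop (x := (q' : ℝ)) (by
          rw [Real.dist_eq, abs_of_nonneg (by linarith)]
          linarith [hq'2.2])
        rw [Real.dist_eq] at h1
        have := abs_lt.1 h1
        linarith [this.1, this.2]
      -- eventual bounds
      have hconv1 : Tendsto (fun k => ψ (ι (f (nk k) (q : ℝ)))) atTop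
          (𝓝 (ψ (ι (g (q : ℝ))))) := step1 (q : ℝ) hqS (ψ.comp ι)
      have hconv2 : Tendsto (fun k => v (nk k) (q' : ℝ) - v (nk k) (q : ℝ)) atTop
          (𝓝 (V (q' : ℝ) - V (q : ℝ))) := (c2 ⟨_, hq'S⟩).sub (c2 ⟨_, hqS⟩)
      obtain ⟨N1, hN1⟩ := (Metric.tendsto_atTop.1 hconv1) ε' hε'
      obtain ⟨N2, hN2⟩ := (Metric.tendsto_atTop.1 hconv2) ε' hε'
      refine ⟨max N1 N2, fun k hk => ?_⟩
      have hk1 : N1 ≤ k := le_trans (le_max_left _ _) hk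
      have hk2 : N2 ≤ k := le_trans (le_max_right _ _) hk
      -- assemble the estimate
      have habs : ∀ (y y' : Y), |ψ y - ψ y'| ≤ ‖ψ‖ * dist y y' := by
        intro y y'
        rw [dist_eq_norm, ← map_sub]
        calc |ψ (y - y')| = ‖ψ (y - y')‖ := rfl
          _ ≤ ‖ψ‖ * ‖y - y'‖ := ψ.le_opNorm _
      have e1 : |ψ (ι (f (nk k) t)) - ψ (ι (f (nk k) (q : ℝ)))|
          ≤ ‖ψ‖ * (v (nk k) (q' : ℝ) - v (nk k) (q : ℝ)) := by
        refine (habs _ _).trans ?_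
        refine mul_le_mul_of_nonneg_left ?_ (norm_nonneg ψ)
        refine (key4 (nk k) (q : ℝ) t haq hq2.le ht.2).trans ?_
        have := hv_mono (nk k) (le_of_lt hq'1)
        linarith
      have e2 : |ψ (ι (f (nk k) (q : ℝ))) - ψ (ι (g (q : ℝ)))| < ε' := by
        have := hN1 k hk1; rwa [Real.dist_eq] at this
      have e3 : |ψ (ι (g (q : ℝ))) - ψ (ι (g t))| ≤ ‖ψ‖ * ε' := by
        refine (habs _ _).trans ?_
        refine mul_le_mul_of_nonneg_left ?_ (norm_nonneg ψ)
        rw [dist_comm]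
        exact (key_g (q : ℝ) t haq hq2.le ht.2).trans (by linarith)
      have e4 : v (nk k) (q' : ℝ) - v (nk k) (q : ℝ) < V (q' : ℝ) - V (q : ℝ) + ε' := by
        have := hN2 k hk2; rw [Real.dist_eq] at this
        have := abs_lt.1 this
        linarith [this.1, this.2]
      have e5 : V (q' : ℝ) - V (q : ℝ) < 2 * ε' := by linarith
      have hψnn : (0 : ℝ) ≤ ‖ψ‖ := norm_nonneg ψ
      have e6 : ‖ψ‖ * (v (nk k) (q' : ℝ) - v (nk k) (q : ℝ)) ≤ ‖ψ‖ * (3 * ε') :=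
        mul_le_mul_of_nonneg_left (by linarith) hψnn
      rw [Real.dist_eq]
      have etot : |ψ (ι (f (nk k) t)) - ψ (ι (g t))|
          ≤ |ψ (ι (f (nk k) t)) - ψ (ι (f (nk k) (q : ℝ)))|
            + |ψ (ι (f (nk k) (q : ℝ))) - ψ (ι (g (q : ℝ)))|
            + |ψ (ι (g (q : ℝ))) - ψ (ι (g t))| := by
        have h2 := abs_sub_le (ψ (ι (f (nk k) t))) (ψ (ι (f (nk k) (q : ℝ))))
          (ψ (ι (g (q : ℝ))))
        have h3 := abs_sub_le (ψ (ι (f (nk k) t))) (ψ (ι (g (q : ℝ)))) (ψ (ι (g t)))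
        linarith
      have hfin : ε = 4 * (‖ψ‖ + 1) * ε' := by
        rw [hε'def]; field_simp
      rw [hfin]
      have hmul : ‖ψ‖ * ε' ≤ ‖ψ‖ * ε' := le_refl _
      nlinarith [mul_le_mul_of_nonneg_left hε'.le hψnn]
  -- the norm bound and the convergence statement
  refine ⟨nk, hnk_mono, g, hg_norm, ?_, ?_⟩
  · -- variation bound for g
    unfold eVariationOn
    refine iSup_le ?_
    rintro ⟨n, u, hu, us⟩
    have hreal : ∀ m : ℕ,
        ∑ i ∈ Finset.range n, dist (ι (f m (u (i + 1)))) (ι (f m (u i))) ≤ C := by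
      intro m
      have h1 := (eVariationOn.sum_le (f := fun t => ι (f m t)) (n := n) hu us).trans (hvar m)
      have h2 : ∑ i ∈ Finset.range n, edist (ι (f m (u (i + 1)))) (ι (f m (u i)))
          = ENNReal.ofReal (∑ i ∈ Finset.range n,
            dist (ι (f m (u (i + 1)))) (ι (f m (u i)))) := by
        simp only [edist_dist]
        exact (ENNReal.ofReal_sum_of_nonneg (fun i _ => dist_nonneg)).symm
      rw [h2] at h1
      exact (ENNReal.ofReal_le_ofReal_iff hC0).1 h1
    have hψex : ∀ i : ℕ, ∃ ψ : Y →L[ℝ] ℝ, ‖ψ‖ ≤ 1 ∧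
        ψ (ι (g (u (i + 1))) - ι (g (u i))) = ‖ι (g (u (i + 1))) - ι (g (u i))‖ := by
      intro i
      obtain ⟨ψ, hn1, hn2⟩ := exists_dual_vector'' ℝ (ι (g (u (i + 1))) - ι (g (u i)))
      exact ⟨ψ, hn1, by exact_mod_cast hn2⟩
    choose ψ hψ1 hψ2 using hψex
    have hsum_m : ∀ m, ∑ i ∈ Finset.range n,
        (ψ i (ι (f m (u (i + 1)))) - ψ i (ι (f m (u i)))) ≤ C := by
      intro m
      refine le_trans (Finset.sum_le_sum ?_) (hreal m)
      intro i _
      rw [← map_sub]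
      calc ψ i (ι (f m (u (i + 1))) - ι (f m (u i)))
          ≤ ‖ψ i (ι (f m (u (i + 1))) - ι (f m (u i)))‖ := le_abs_self _
        _ ≤ ‖ψ i‖ * ‖ι (f m (u (i + 1))) - ι (f m (u i))‖ := (ψ i).le_opNorm _
        _ ≤ 1 * ‖ι (f m (u (i + 1))) - ι (f m (u i))‖ :=
            mul_le_mul_of_nonneg_right (hψ1 i) (norm_nonneg _)
        _ = dist (ι (f m (u (i + 1)))) (ι (f m (u i))) := by
            rw [one_mul, dist_eq_norm]
    have hlimval : ∑ i ∈ Finset.range n, dist (ι (g (u (i + 1)))) (ι (g (u i)))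
        = ∑ i ∈ Finset.range n, (ψ i (ι (g (u (i + 1)))) - ψ i (ι (g (u i)))) := by
      refine Finset.sum_congr rfl fun i _ => ?_
      rw [← map_sub, hψ2 i, dist_eq_norm]
    have hlim : Tendsto (fun m => ∑ i ∈ Finset.range n,
        (ψ i (ι (f m (u (i + 1)))) - ψ i (ι (f m (u i))))) U
        (𝓝 (∑ i ∈ Finset.range n, (ψ i (ι (g (u (i + 1)))) - ψ i (ι (g (u i)))))) := by
      refine tendsto_finset_sum _ fun i _ => ?_
      exact (hg_w (u (i + 1)) (us (i + 1)) ((ψ i).comp ι)).sub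
        (hg_w (u i) (us i) ((ψ i).comp ι))
    have hfinal : ∑ i ∈ Finset.range n, dist (ι (g (u (i + 1)))) (ι (g (u i))) ≤ C := by
      rw [hlimval]
      exact le_of_tendsto hlim (Filter.Eventually.of_forall hsum_m)
    calc ∑ i ∈ Finset.range n, edist (ι (g (u (i + 1)))) (ι (g (u i)))
        = ENNReal.ofReal (∑ i ∈ Finset.range n,
            dist (ι (g (u (i + 1)))) (ι (g (u i)))) := by
          simp only [edist_dist]
          exact (ENNReal.ofReal_sum_of_nonneg (fun i _ => dist_nonneg)).symm
      _ ≤ ENNReal.ofReal C := ENNReal.ofReal_le_ofReal hfinal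
  · -- pointwise weak convergence
    intro t ht φ
    apply tendsto_of_subseq_tendsto
    intro ns hns
    obtain ⟨ms, hms_mono, z, hz_norm, hz_w⟩ := stmt9_weak_seq_compact hrefl hC0
      (fun j => f (nk (ns j)) t) (fun j => hbdd _ t ht)
    have hz_eq : z = g t := by
      apply hι
      rw [NormedSpace.eq_iff_forall_dual_eq ℝ]
      intro ψ
      have h1 : Tendsto (fun j => ψ (ι (f (nk (ns (ms j))) t))) atTop (𝓝 (ψ (ι z))) :=
        hz_w (ψ.comp ι)
      have h2 : Tendsto (fun j => ψ (ι (f (nk (ns (ms j))) t))) atTop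
          (𝓝 (ψ (ι (g t)))) := by
        have h3 : Tendsto (fun j => ns (ms j)) atTop atTop :=
          hns.comp hms_mono.tendsto_atTop
        exact (claim_i t ht ψ).comp h3
      exact tendsto_nhds_unique h1 h2
    exact ⟨ms, by rw [← hz_eq]; exact hz_w φ⟩
end

section
/- Let U and Z be real Banach spaces, W a real Hilbert space, ι_W: U → W and ι_Z: U → Z injective continuous linear maps, T > 0 and λ ≥ 0. Let R: Z → [0,∞) be convex, positively one-homogeneous (R(γz) = γR(z) for all γ ≥ 0, z ∈ Z), with ρ₁‖z‖_Z ≤ R(z) ≤ ρ₂‖z‖_Z for some ρ₂ ≥ ρ₁ > 0. Let E: [0,T] × U → [0,+∞] satisfy (E1) and (E2) of the context. Let t ∈ [0,T] and û ∈ U with E(t,û) < +∞, and let (rₙ) ⊆ [0,T] and (uₙ) ⊆ U be sequences such that rₙ → t, uₙ ⇀ û weakly in U, |ι_W(uₙ − û)|_W → 0 and ‖ι_Z(uₙ − û)‖_Z → 0, and such that every n satisfies the global λ-stability condition E(rₙ, uₙ) ≤ E(rₙ, x) + R(ι_Z(x − uₙ)) + (λ/2)|ι_W(x − uₙ)|²_W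 for all x ∈ U. Then E(rₙ, uₙ) → E(t, û). -/
open MeasureTheory Filter Topology intervalIntegral
open scoped ENNReal

lemma gronwall_aux (T : ℝ) (b q f : ℝ → ℝ)
    (hb0 : ∀ s, 0 ≤ b s) (hbint : IntegrableOn b (Set.Ioc 0 T))
    (hq : IntervalIntegrable q volume 0 T)
    (hf : ∀ s ∈ Set.Icc (0:ℝ) T, f s = f 0 + ∫ x in (0:ℝ)..s, q x)
    (hf0 : ∀ s ∈ Set.Icc (0:ℝ) T, 0 ≤ f s)
    (hc : ∀ᵐ s ∂(volume.restrict (Set.Ioc (0:ℝ) T)), |q s| ≤ b s * (f s + 1))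
    (a c : ℝ) (ha : a ∈ Set.Icc (0:ℝ) T) (hcm : c ∈ Set.Icc (0:ℝ) T)
    (hε : (∫ s in Set.uIoc a c, b s) ≤ 1/2) :
    |f c - f a| ≤ 2 * (∫ s in Set.uIoc a c, b s) * (f a + 1) := by
  have hT0 : (0:ℝ) ≤ T := ha.1.trans ha.2
  set ε : ℝ := ∫ s in Set.uIoc a c, b s with hεdef
  have hε0 : 0 ≤ ε := setIntegral_nonneg measurableSet_uIoc (fun s _ => hb0 s)
  have hIccT : Set.uIcc (0:ℝ) T = Set.Icc 0 T := Set.uIcc_of_le hT0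
  -- subset facts
  have hsub : Set.uIcc a c ⊆ Set.Icc 0 T := by
    rw [← hIccT]
    exact Set.uIcc_subset_uIcc (by rwa [hIccT]) (by rwa [hIccT])
  have hIsub : ∀ x ∈ Set.uIcc a c, Set.uIoc a x ⊆ Set.Ioc 0 T := by
    intro x hx s hs
    have hx0 : x ∈ Set.Icc 0 T := hsub hx
    exact ⟨lt_of_le_of_lt (le_min ha.1 hx0.1) hs.1, hs.2.trans (max_le ha.2 hx0.2)⟩
  have hIcsub : ∀ x ∈ Set.uIcc a c, Set.uIoc a x ⊆ Set.uIoc a c := by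
    intro x hx
    exact Set.Ioc_subset_Ioc (le_min (min_le_left a c) hx.1) (max_le (le_max_left a c) hx.2)
  -- interval integrability of q on subintervals
  have hqsub : ∀ x y : ℝ, x ∈ Set.Icc 0 T → y ∈ Set.Icc 0 T →
      IntervalIntegrable q volume x y := by
    intro x y hx hy
    refine hq.mono_set ?_
    rw [hIccT]
    exact Set.uIcc_subset_Icc hx hy
  have h0T : (0:ℝ) ∈ Set.Icc (0:ℝ) T := ⟨le_rfl, hT0⟩
  -- difference formula
  have hdiff : ∀ x ∈ Set.Icc (0:ℝ) T, f x - f a = ∫ s in a..x, q s := by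
    intro x hx
    rw [hf x hx, hf a ha]
    have := integral_interval_sub_left (μ := volume) (f := q)
      (hqsub 0 x h0T hx) (hqsub 0 a h0T ha)
    linarith [this]
  -- continuity of f on [0,T]
  have hqIcc : IntegrableOn q (Set.Icc 0 T) := by
    rw [integrableOn_Icc_iff_integrableOn_Ioc]
    exact hq.1
  have hfc : ContinuousOn f (Set.Icc 0 T) := by
    have hcp := intervalIntegral.continuousOn_primitive_interval (μ := volume) (f := q)
      (a := 0) (b := T) (by rwa [hIccT])
    rw [hIccT] at hcp
    exact ContinuousOn.congr (continuousOn_const.add hcp) (fun x hx => hf x hx)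
  -- maximum of f on uIcc a c
  obtain ⟨s₀, hs₀mem, hs₀max⟩ := isCompact_uIcc.exists_isMaxOn Set.nonempty_uIcc (hfc.mono hsub)
  set M : ℝ := f s₀ + 1 with hMdef
  have hM1 : (1:ℝ) ≤ M := by have := hf0 s₀ (hsub hs₀mem); linarith
  have hM0 : (0:ℝ) ≤ M := by linarith
  have hMub : ∀ s ∈ Set.uIcc a c, f s + 1 ≤ M := by
    intro s hs
    have h := hs₀max hs
    simp only [Set.mem_setOf_eq] at h
    simp only [hMdef]
    linarith
  -- key estimate
  have hkey : ∀ x ∈ Set.uIcc a c, |f x - f a| ≤ ε * M := by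
    intro x hx
    have hxI : x ∈ Set.Icc 0 T := hsub hx
    rw [hdiff x hxI]
    have hbd : ∀ᵐ s ∂(volume.restrict (Set.uIoc a x)), ‖q s‖ ≤ b s * M := by
      filter_upwards [ae_restrict_of_ae_restrict_of_subset (hIsub x hx) hc,
        ae_restrict_mem measurableSet_uIoc] with s h1 h2
      rw [Real.norm_eq_abs]
      exact h1.trans (mul_le_mul_of_nonneg_left
        (hMub s (Set.uIoc_subset_uIcc (hIcsub x hx h2))) (hb0 s))
    have hbint' : IntervalIntegrable (fun s => b s * M) volume a x := by
      apply IntervalIntegrable.mul_const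
      rw [intervalIntegrable_iff]
      exact hbint.mono_set (hIsub x hx)
    have h1 := intervalIntegral.norm_integral_le_abs_of_norm_le hbd hbint'
    rw [Real.norm_eq_abs] at h1
    refine h1.trans ?_
    rw [intervalIntegral.integral_mul_const, abs_mul, abs_of_nonneg hM0]
    have h2 : |∫ s in a..x, b s| = ∫ s in Set.uIoc a x, b s := by
      rw [intervalIntegral.abs_integral_eq_abs_integral_uIoc]
      exact abs_of_nonneg (setIntegral_nonneg measurableSet_uIoc (fun s _ => hb0 s))
    rw [h2]
    have h3 : (∫ s in Set.uIoc a x, b s) ≤ ε := by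
      refine setIntegral_mono_set (hbint.mono_set (hIsub c Set.right_mem_uIcc)) ?_ ?_
      · exact Eventually.of_forall fun s => hb0 s
      · exact (hIcsub x hx).eventuallyLE
    exact mul_le_mul_of_nonneg_right h3 hM0
  -- Gronwall step
  have hGM : M ≤ 2 * (f a + 1) := by
    have h := hkey s₀ hs₀mem
    have h' : f s₀ - f a ≤ ε * M := (le_abs_self _).trans h
    nlinarith
  have hfin := hkey c Set.right_mem_uIcc
  have : ε * M ≤ 2 * ε * (f a + 1) := by nlinarith
  linarith


/-- Energy convergence along globally `λ`-stable sequences: under (E1)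
(sequential weak lower semicontinuity) and (E2) (power control), if `rₙ → t`, `uₙ ⇀ û` weakly
in `U`, `uₙ → û` strongly in `W` and `Z`, and each `uₙ` is globally `λ`-stable at time `rₙ`,
then `E(rₙ,uₙ) → E(t,û)`. -/
theorem stmt_11
    {U W Z : Type*}
    [NormedAddCommGroup U] [NormedSpace ℝ U] [CompleteSpace U]
    [NormedAddCommGroup W] [InnerProductSpace ℝ W] [CompleteSpace W]
    [NormedAddCommGroup Z] [NormedSpace ℝ Z] [CompleteSpace Z]
    (ιW : U →L[ℝ] W) (hιW : Function.Injective ιW)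
    (ιZ : U →L[ℝ] Z) (hιZ : Function.Injective ιZ)
    (T : ℝ) (hT : 0 < T) (lam : ℝ) (hlam : 0 ≤ lam)
    (R : Z → ℝ) (hRconv : ConvexOn ℝ Set.univ R)
    (hRhom : ∀ γ : ℝ, 0 ≤ γ → ∀ z : Z, R (γ • z) = γ * R z)
    (ρ₁ ρ₂ : ℝ) (hρ₁ : 0 < ρ₁) (hρ : ρ₁ ≤ ρ₂)
    (hRbound : ∀ z : Z, ρ₁ * ‖z‖ ≤ R z ∧ R z ≤ ρ₂ * ‖z‖)
    (E : ℝ → U → ℝ≥0∞) (P : ℝ → U → ℝ) (b : ℝ → ℝ)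
    (hb0 : ∀ t : ℝ, 0 ≤ b t) (hbint : IntegrableOn b (Set.Ioc 0 T))
    (hE1 : ∀ t ∈ Set.Icc (0:ℝ) T, ∀ (u : U) (un : ℕ → U),
        (∀ φ : U →L[ℝ] ℝ, Tendsto (fun n => φ (un n)) atTop (𝓝 (φ u))) →
        E t u ≤ liminf (fun n => E t (un n)) atTop)
    (hfin : ∀ t ∈ Set.Icc (0:ℝ) T, ∀ u : U, (E t u ≠ ⊤ ↔ E 0 u ≠ ⊤))
    (hPint : ∀ u : U, E 0 u ≠ ⊤ → IntervalIntegrable (fun r => P r u) volume 0 T)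
    (hrep : ∀ u : U, E 0 u ≠ ⊤ → ∀ t ∈ Set.Icc (0:ℝ) T,
        (E t u).toReal = (E 0 u).toReal + ∫ r in (0:ℝ)..t, P r u)
    (hctrl : ∀ u : U, E 0 u ≠ ⊤ →
        ∀ᵐ t ∂(volume.restrict (Set.Ioc (0:ℝ) T)),
          |P t u| ≤ b t * ((E t u).toReal + 1))
    (t : ℝ) (ht : t ∈ Set.Icc (0:ℝ) T)
    (uhat : U) (huhat : E t uhat ≠ ⊤)
    (r : ℕ → ℝ) (hr : ∀ n, r n ∈ Set.Icc (0:ℝ) T) (hrt : Tendsto r atTop (𝓝 t))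
    (un : ℕ → U)
    (hweak : ∀ φ : U →L[ℝ] ℝ, Tendsto (fun n => φ (un n)) atTop (𝓝 (φ uhat)))
    (hWconv : Tendsto (fun n => ‖ιW (un n - uhat)‖) atTop (𝓝 0))
    (hZconv : Tendsto (fun n => ‖ιZ (un n - uhat)‖) atTop (𝓝 0))
    (hstab : ∀ n : ℕ, ∀ x : U, E (r n) (un n) ≤ E (r n) x +
        ENNReal.ofReal (R (ιZ (x - un n)) + lam / 2 * ‖ιW (x - un n)‖ ^ 2)) :
    Tendsto (fun n => E (r n) (un n)) atTop (𝓝 (E t uhat)) := by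
  have h0T : (0:ℝ) ∈ Set.Icc (0:ℝ) T := ⟨le_rfl, hT.le⟩
  have hIccT : Set.uIcc (0:ℝ) T = Set.Icc 0 T := Set.uIcc_of_le hT.le
  -- finiteness facts
  have hE0hat : E 0 uhat ≠ ⊤ := (hfin t ht uhat).mp huhat
  have hEshat : ∀ s ∈ Set.Icc (0:ℝ) T, E s uhat ≠ ⊤ := fun s hs => (hfin s hs uhat).mpr hE0hat
  set δ : ℕ → ℝ := fun n => R (ιZ (uhat - un n)) + lam / 2 * ‖ιW (uhat - un n)‖ ^ 2 with hδdef
  have hδ0 : ∀ n, 0 ≤ δ n := by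
    intro n
    have h1 := (hRbound (ιZ (uhat - un n))).1
    have h2 : 0 ≤ ρ₁ * ‖ιZ (uhat - un n)‖ := mul_nonneg hρ₁.le (norm_nonneg _)
    have h3 : 0 ≤ lam / 2 * ‖ιW (uhat - un n)‖ ^ 2 :=
      mul_nonneg (by linarith) (sq_nonneg _)
    simp only [hδdef]; linarith
  -- convergence of δ to 0
  have hZ' : Tendsto (fun n => ‖ιZ (uhat - un n)‖) atTop (𝓝 0) := by
    refine hZconv.congr fun n => ?_
    rw [← norm_neg, ← map_neg, neg_sub]
  have hW' : Tendsto (fun n => ‖ιW (uhat - un n)‖) atTop (𝓝 0) := by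
    refine hWconv.congr fun n => ?_
    rw [← norm_neg, ← map_neg, neg_sub]
  have hδto : Tendsto δ atTop (𝓝 0) := by
    have h1 : Tendsto (fun n => R (ιZ (uhat - un n))) atTop (𝓝 0) := by
      refine squeeze_zero (fun n => ?_) (fun n => (hRbound _).2) ?_
      · exact le_trans (mul_nonneg hρ₁.le (norm_nonneg _)) (hRbound _).1
      · have h := hZ'.const_mul ρ₂
        rw [mul_zero] at h
        exact h
    have h2 : Tendsto (fun n => lam / 2 * ‖ιW (uhat - un n)‖ ^ 2) atTop (𝓝 0) := by
      have h := (hW'.pow 2).const_mul (lam / 2)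
      rw [show lam / 2 * 0 ^ 2 = 0 by ring] at h
      exact h
    have h := h1.add h2
    rw [add_zero] at h
    exact h
  -- stability with x = uhat
  have hstabn : ∀ n, E (r n) (un n) ≤ E (r n) uhat + ENNReal.ofReal (δ n) := fun n =>
    hstab n uhat
  have hfinn : ∀ n, E (r n) (un n) ≠ ⊤ := by
    intro n
    exact ne_top_of_le_ne_top (by
      exact ENNReal.add_ne_top.mpr ⟨hEshat (r n) (hr n), ENNReal.ofReal_ne_top⟩) (hstabn n)
  have hE0n : ∀ n, E 0 (un n) ≠ ⊤ := fun n => (hfin (r n) (hr n) (un n)).mp (hfinn n)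
  have hEtn : ∀ n, E t (un n) ≠ ⊤ := fun n => (hfin t ht (un n)).mpr (hE0n n)
  -- the key Gronwall estimate
  have key : ∀ u : U, E 0 u ≠ ⊤ → ∀ a ∈ Set.Icc (0:ℝ) T, ∀ c ∈ Set.Icc (0:ℝ) T,
      (∫ s in Set.uIoc a c, b s) ≤ 1/2 →
      |(E c u).toReal - (E a u).toReal| ≤
        2 * (∫ s in Set.uIoc a c, b s) * ((E a u).toReal + 1) := by
    intro u h0 a haa c hcc hle
    refine gronwall_aux T b (fun s => P s u) (fun s => (E s u).toReal) hb0 hbint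
      (hPint u h0) ?_ (fun s _ => ENNReal.toReal_nonneg) (hctrl u h0) a c haa hcc hle
    intro s hs
    show (E s u).toReal = (E 0 u).toReal + ∫ x in (0:ℝ)..s, P x u
    exact hrep u h0 s hs
  -- the small quantity ε
  set ε : ℕ → ℝ := fun n => ∫ s in Set.uIoc (r n) t, b s with hεdef
  have hε0 : ∀ n, 0 ≤ ε n := fun n =>
    setIntegral_nonneg measurableSet_uIoc (fun s _ => hb0 s)
  have hbII : IntervalIntegrable b volume 0 T := by
    rw [intervalIntegrable_iff, Set.uIoc_of_le hT.le]; exact hbint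
  have hbsub : ∀ x y : ℝ, x ∈ Set.Icc 0 T → y ∈ Set.Icc 0 T →
      IntervalIntegrable b volume x y := fun x y hx hy =>
    hbII.mono_set (by rw [hIccT]; exact Set.uIcc_subset_Icc hx hy)
  have hεeq : ∀ n, ε n = |(∫ x in (0:ℝ)..t, b x) - ∫ x in (0:ℝ)..(r n), b x| := by
    intro n
    rw [integral_interval_sub_left (hbsub 0 t h0T ht) (hbsub 0 (r n) h0T (hr n)),
      intervalIntegral.abs_integral_eq_abs_integral_uIoc, hεdef]
    exact (abs_of_nonneg (setIntegral_nonneg measurableSet_uIoc (fun s _ => hb0 s))).symm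
  have hrtW : Tendsto r atTop (𝓝[Set.Icc (0:ℝ) T] t) :=
    tendsto_nhdsWithin_of_tendsto_nhds_of_eventually_within r hrt (Eventually.of_forall hr)
  have hGc : ContinuousOn (fun s => ∫ x in (0:ℝ)..s, b x) (Set.Icc 0 T) := by
    have := intervalIntegral.continuousOn_primitive_interval (μ := volume) (f := b)
      (a := 0) (b := T) (by rw [hIccT, integrableOn_Icc_iff_integrableOn_Ioc]; exact hbint)
    rwa [hIccT] at this
  have hGr : Tendsto (fun n => ∫ x in (0:ℝ)..(r n), b x) atTop
      (𝓝 (∫ x in (0:ℝ)..t, b x)) := (hGc.continuousWithinAt ht).tendsto.comp hrtW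
  have hεto : Tendsto ε atTop (𝓝 0) := by
    have h2 := ((tendsto_const_nhds :
        Tendsto (fun _ : ℕ => (∫ x in (0:ℝ)..t, b x)) atTop
          (𝓝 (∫ x in (0:ℝ)..t, b x))).sub hGr).abs
    rw [sub_self, abs_zero] at h2
    exact h2.congr (fun n => (hεeq n).symm)
  have hεhalf : ∀ᶠ n in atTop, ε n ≤ 1/2 := by
    filter_upwards [hεto.eventually (gt_mem_nhds (show (0:ℝ) < 1/2 by norm_num))] with n h
    exact h.le
  -- shorthand
  set L : ℝ := (E t uhat).toReal with hLdef
  set g : ℕ → ℝ := fun n => (E (r n) (un n)).toReal with hgdef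
  have hL0 : 0 ≤ L := ENNReal.toReal_nonneg
  -- E(r n, uhat) → E(t, uhat) (in toReal)
  have hEhatto : Tendsto (fun n => (E (r n) uhat).toReal) atTop (𝓝 L) := by
    rw [tendsto_iff_dist_tendsto_zero]
    refine squeeze_zero' (Eventually.of_forall fun n => dist_nonneg) ?_
      (by have h := hεto.const_mul (2 * (L + 1)); rw [mul_zero] at h; exact h)
    filter_upwards [hεhalf] with n hn
    have hk := key uhat hE0hat t ht (r n) (hr n) (by rw [Set.uIoc_comm]; exact hn)
    rw [Set.uIoc_comm t (r n)] at hk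
    rw [Real.dist_eq]
    calc |(E (r n) uhat).toReal - L| ≤ 2 * ε n * (L + 1) := hk
    _ = 2 * (L + 1) * ε n := by ring
  have hAto : Tendsto (fun n => (E (r n) uhat).toReal + δ n) atTop (𝓝 L) := by
    have h := hEhatto.add hδto
    rw [add_zero] at h
    exact h
  -- upper bound g n ≤ A n
  have hgleA : ∀ n, g n ≤ (E (r n) uhat).toReal + δ n := by
    intro n
    have hne : E (r n) uhat + ENNReal.ofReal (δ n) ≠ ⊤ :=
      ENNReal.add_ne_top.mpr ⟨hEshat (r n) (hr n), ENNReal.ofReal_ne_top⟩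
    have := ENNReal.toReal_le_toReal (hfinn n) hne |>.mpr (hstabn n)
    rwa [ENNReal.toReal_add (hEshat (r n) (hr n)) ENNReal.ofReal_ne_top,
      ENNReal.toReal_ofReal (hδ0 n)] at this
  -- liminf lower bound at time t
  have hliminf := hE1 t ht uhat un hweak
  -- main convergence of g to L
  have hgto : Tendsto g atTop (𝓝 L) := by
    rw [Metric.tendsto_nhds]
    intro η hη
    -- upper bound eventually
    have hupper : ∀ᶠ n in atTop, g n < L + η := by
      filter_upwards [hAto.eventually_lt_const (lt_add_of_pos_right L hη)] with n hn
      exact lt_of_le_of_lt (hgleA n) hn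
    -- K bound
    have hKb : ∀ᶠ n in atTop, g n ≤ L + 1 := by
      filter_upwards [hAto.eventually_lt_const (lt_add_of_pos_right L one_pos)] with n hn
      exact (hgleA n).trans hn.le
    -- ε small enough
    have hC : (0:ℝ) < L + 2 := by linarith
    have hεsm : ∀ᶠ n in atTop, ε n < η / (4 * (L + 2)) :=
      hεto.eventually_lt_const (div_pos hη (by linarith))
    -- lsc eventual lower bound
    have hlsc : ∀ᶠ n in atTop, L - η / 2 < (E t (un n)).toReal := by
      by_cases hcase : L - η / 2 < 0
      · exact Eventually.of_forall fun n => lt_of_lt_of_le hcase ENNReal.toReal_nonneg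
      · push_neg at hcase
        have hLpos : 0 < L := lt_of_le_of_lt hcase (by linarith)
        have hlt : ENNReal.ofReal (L - η / 2) < E t uhat := by
          rw [← ENNReal.ofReal_toReal huhat, ← hLdef]
          exact (ENNReal.ofReal_lt_ofReal_iff hLpos).mpr (by linarith)
        have hev := eventually_lt_of_lt_liminf (lt_of_lt_of_le hlt hliminf)
        filter_upwards [hev] with n hn
        have := (ENNReal.toReal_lt_toReal ENNReal.ofReal_ne_top (hEtn n)).mpr hn
        rwa [ENNReal.toReal_ofReal hcase] at this
    have hlower : ∀ᶠ n in atTop, L - η < g n := by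
      filter_upwards [hεhalf, hKb, hεsm, hlsc] with n h1 h2 h3 h4
      have hk := key (un n) (hE0n n) (r n) (hr n) t ht h1
      have hgn1 : g n + 1 ≤ L + 2 := by linarith
      have hst : |(E t (un n)).toReal - g n| ≤ η / 2 := by
        refine hk.trans ?_
        have h5 : 2 * ε n * (g n + 1) ≤ 2 * (η / (4 * (L + 2))) * (L + 2) := by
          have hg1 : 0 ≤ g n + 1 := by positivity
          nlinarith [hε0 n]
        refine h5.trans (le_of_eq ?_)
        field_simp
        ring
      have h6 : (E t (un n)).toReal - g n ≤ η / 2 := (le_abs_self _).trans hst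
      linarith
    filter_upwards [hupper, hlower] with n h1 h2
    rw [Real.dist_eq, abs_sub_lt_iff]
    constructor <;> linarith
  -- lift back to ℝ≥0∞
  have hfinal := ENNReal.tendsto_ofReal hgto
  rw [hLdef, ENNReal.ofReal_toReal huhat] at hfinal
  exact hfinal.congr fun n => ENNReal.ofReal_toReal (hfinn n)
end

section
/- Let U, X, Z be real Banach spaces with continuous linear maps ι_X: U → X and ι_Z: U → Z. Let R: Z → [0,∞) be convex, positively one-homogeneous (R(γz) = γR(z) for all γ ≥ 0, z ∈ Z), with ρ₁‖z‖_Z ≤ R(z) ≤ ρ₂‖z‖_Z for some ρ₂ ≥ ρ₁ > 0. Let E: U → [0,+∞] be uniformly convex with respect to X: there is μ > 0 such that for all θ ∈ (0,1) and u₁, u₂ ∈ U, E(θu₁ + (1−θ)u₂) ≤ θE(u₁) + (1−θ)E(u₂) − (μ/2)θ(1−θ)‖ι_X(u₁ − u₂)‖²_X. Suppose ū ∈ U satisfies the global stability condition E(ū) ≤ E(x) + R(ι_Z(x − ū)) for all x ∈ U. Then actually E(ū) + (μ/2)‖ι_X(x − ū)‖²_X ≤ E(x) + R(ι_Z(x −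 ū)) for all x ∈ U. -/
open scoped ENNReal

/-- For an energy `E : U → [0,+∞]` which is uniformly convex with respect to
`X` (with modulus `μ > 0`), the global stability condition
`E(ū) ≤ E(x) + R(ι_Z(x-ū))` self-improves to
`E(ū) + (μ/2)‖ι_X(x-ū)‖²_X ≤ E(x) + R(ι_Z(x-ū))` for all `x ∈ U`. -/
theorem stmt_12
    {U X Z : Type*}
    [NormedAddCommGroup U] [NormedSpace ℝ U] [CompleteSpace U]
    [NormedAddCommGroup X] [NormedSpace ℝ X] [CompleteSpace X]
    [NormedAddCommGroup Z] [NormedSpace ℝ Z] [CompleteSpace Z]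
    (ιX : U →L[ℝ] X) (ιZ : U →L[ℝ] Z)
    (R : Z → ℝ) (hRconv : ConvexOn ℝ Set.univ R)
    (hRhom : ∀ γ : ℝ, 0 ≤ γ → ∀ z : Z, R (γ • z) = γ * R z)
    (ρ₁ ρ₂ : ℝ) (hρ₁ : 0 < ρ₁) (hρ : ρ₁ ≤ ρ₂)
    (hRbound : ∀ z : Z, ρ₁ * ‖z‖ ≤ R z ∧ R z ≤ ρ₂ * ‖z‖)
    (E : U → ℝ≥0∞) (μ : ℝ) (hμ : 0 < μ)
    (hconv : ∀ θ : ℝ, 0 < θ → θ < 1 → ∀ u₁ u₂ : U,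
        E (θ • u₁ + (1 - θ) • u₂) +
          ENNReal.ofReal (μ / 2 * (θ * (1 - θ)) * ‖ιX (u₁ - u₂)‖ ^ 2) ≤
        ENNReal.ofReal θ * E u₁ + ENNReal.ofReal (1 - θ) * E u₂)
    (ubar : U) (hstab : ∀ x : U, E ubar ≤ E x + ENNReal.ofReal (R (ιZ (x - ubar)))) :
    ∀ x : U, E ubar + ENNReal.ofReal (μ / 2 * ‖ιX (x - ubar)‖ ^ 2) ≤
      E x + ENNReal.ofReal (R (ιZ (x - ubar))) := by
  intro x
  by_cases hx : E x = ⊤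
  · simp [hx, top_add]
  have hxlt : E x < ⊤ := lt_top_iff_ne_top.2 hx
  set r := R (ιZ (x - ubar)) with hrdef
  have hr0 : 0 ≤ r := le_trans (by positivity) (hRbound _).1
  have hub : E ubar < ⊤ :=
    lt_of_le_of_lt (hstab x) (ENNReal.add_lt_top.2 ⟨hxlt, ENNReal.ofReal_lt_top⟩)
  set a := (E ubar).toReal with hadef
  set b := (E x).toReal with hbdef
  set c := μ / 2 * ‖ιX (x - ubar)‖ ^ 2 with hcdef
  have hc0 : 0 ≤ c := by positivity
  have key : ∀ θ : ℝ, 0 < θ → θ < 1 → a + (1 - θ) * c ≤ b + r := by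
    intro θ hθ0 hθ1
    have hθ1' : (0:ℝ) < 1 - θ := by linarith
    have hv := hconv θ hθ0 hθ1 x ubar
    have hvsub : (θ • x + (1 - θ) • ubar) - ubar = θ • (x - ubar) := by
      module
    have hRv : R (ιZ ((θ • x + (1 - θ) • ubar) - ubar)) = θ * r := by
      rw [hvsub, map_smul, hRhom θ hθ0.le, hrdef]
    have hs := hstab (θ • x + (1 - θ) • ubar)
    rw [hRv] at hs
    -- E v is finite
    have hrhs : ENNReal.ofReal θ * E x + ENNReal.ofReal (1 - θ) * E ubar < ⊤ :=
      ENNReal.add_lt_top.2 ⟨ENNReal.mul_lt_top ENNReal.ofReal_lt_top hxlt,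
        ENNReal.mul_lt_top ENNReal.ofReal_lt_top hub⟩
    have hvfin : E (θ • x + (1 - θ) • ubar) < ⊤ :=
      lt_of_le_of_lt (le_trans le_self_add hv) hrhs
    set e := (E (θ • x + (1 - θ) • ubar)).toReal with hedef
    -- convert hs to reals
    have hsR : a ≤ e + θ * r := by
      have := ENNReal.toReal_mono (by
        exact ENNReal.add_ne_top.2 ⟨hvfin.ne, ENNReal.ofReal_ne_top⟩) hs
      rwa [ENNReal.toReal_add hvfin.ne ENNReal.ofReal_ne_top,
        ENNReal.toReal_ofReal (by positivity)] at this
    -- convert hv to reals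
    have hvR : e + μ / 2 * (θ * (1 - θ)) * ‖ιX (x - ubar)‖ ^ 2
        ≤ θ * b + (1 - θ) * a := by
      have := ENNReal.toReal_mono hrhs.ne hv
      rwa [ENNReal.toReal_add hvfin.ne ENNReal.ofReal_ne_top,
        ENNReal.toReal_add (ENNReal.mul_lt_top ENNReal.ofReal_lt_top hxlt).ne
          (ENNReal.mul_lt_top ENNReal.ofReal_lt_top hub).ne,
        ENNReal.toReal_mul, ENNReal.toReal_mul,
        ENNReal.toReal_ofReal hθ0.le, ENNReal.toReal_ofReal hθ1'.le,
        ENNReal.toReal_ofReal (by positivity)] at this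
    have : θ * a + θ * ((1 - θ) * c) ≤ θ * b + θ * r := by
      have hcc : μ / 2 * (θ * (1 - θ)) * ‖ιX (x - ubar)‖ ^ 2 = θ * ((1 - θ) * c) := by
        rw [hcdef]; ring
      rw [hcc] at hvR
      nlinarith
    nlinarith
  have hfinal : a + c ≤ b + r := by
    refine le_of_forall_pos_le_add fun ε hε => ?_
    set θ := min (1/2 : ℝ) (ε / (c + 1)) with hθdef
    have hθ0 : 0 < θ := lt_min (by norm_num) (by positivity)
    have hθ1 : θ < 1 := lt_of_le_of_lt (min_le_left _ _) (by norm_num)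
    have hθc : θ * c ≤ ε := by
      have h1 : θ ≤ ε / (c + 1) := min_le_right _ _
      have h2 : ε / (c + 1) * c ≤ ε := by
        rw [div_mul_eq_mul_div, div_le_iff₀ (by positivity)]
        nlinarith
      nlinarith [mul_le_mul_of_nonneg_right h1 hc0]
    have := key θ hθ0 hθ1
    nlinarith
  calc E ubar + ENNReal.ofReal c
      = ENNReal.ofReal a + ENNReal.ofReal c := by
        rw [hadef, ENNReal.ofReal_toReal hub.ne]
    _ = ENNReal.ofReal (a + c) := (ENNReal.ofReal_add ENNReal.toReal_nonneg hc0).symm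
    _ ≤ ENNReal.ofReal (b + r) := ENNReal.ofReal_le_ofReal hfinal
    _ = ENNReal.ofReal b + ENNReal.ofReal r := ENNReal.ofReal_add ENNReal.toReal_nonneg hr0
    _ = E x + ENNReal.ofReal r := by rw [hbdef, ENNReal.ofReal_toReal hx]
end

section
/- Let U be a reflexive real Banach space, V and W real Hilbert spaces, Z a real Banach space, with injective continuous linear maps ι_V: U → V, ι_W: U → W, ι_Z: U → Z. Let M_W: W → W be continuous linear, symmetric, with ⟨M_W w, w⟩ ≥ m₁|w|²_W for some m₁ > 0; let 𝕍: V → V* be continuous linear, symmetric, with ⟨𝕍v,v⟩ ≥ 0; let R: Z → [0,∞) be convex, positively one-homogeneous (R(γz) = γR(z) for all γ ≥ 0, z ∈ Z), with ρ₁‖z‖_Z ≤ R(z) ≤ ρ₂‖z‖_Z for some ρ₂ ≥ ρ₁ > 0. Let 𝓔: U → [0,+∞] be proper (not identically +∞), sequentially weakly lower semicontinuous, with all sublevel sets {𝓔 ≤ M} bounded in U. Then for all τ, ε > 0 and all a, b ∈ U, the functional F(u) := (ε²/(2τ²))⟨M_W ι_W(u − 2a + b), ι_W(u − 2a + b)⟩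 + (ε/(2τ))⟨𝕍 ι_V(u − a), ι_V(u − a)⟩ + R(ι_Z(u − a)) + 𝓔(u) attains its minimum on U. If moreover there is λ ≥ 0 such that u ↦ 𝓔(u) + (λ/2)|ι_W(u)|²_W is convex and ε²m₁ > λτ², then the minimizer is unique. -/
open Filter Topology
open scoped ENNReal

open NormedSpace TopologicalSpace

open Filter Topology
open scoped ENNReal
open NormedSpace TopologicalSpace


section aux
variable {X : Type*} [NormedAddCommGroup X] [NormedSpace ℝ X]

lemma aux_vanish_of_not_mem {p : Submodule ℝ X} (hp : IsClosed (p : Set X)) {x : X}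
    (hx : x ∉ p) : ∃ f : X →L[ℝ] ℝ, (∀ y ∈ p, f y = 0) ∧ f x ≠ 0 := by
  obtain ⟨f, s, hfp, hsx⟩ := geometric_hahn_banach_closed_point (p.convex) hp hx
  refine ⟨f, fun y hy => ?_, ?_⟩
  · by_contra h
    have h2 : f (((s + 1) / f y) • y) < s := hfp _ (p.smul_mem _ hy)
    rw [map_smul, smul_eq_mul, div_mul_cancel₀ _ h] at h2
    linarith
  · have h0 : f 0 < s := hfp 0 p.zero_mem
    rw [map_zero] at h0
    exact ne_of_gt (h0.trans hsx)

lemma aux_dense_span {s : Set X}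
    (h : ∀ f : X →L[ℝ] ℝ, (∀ y ∈ s, f y = 0) → f = 0) :
    (Submodule.span ℝ s).topologicalClosure = ⊤ := by
  by_contra hne
  obtain ⟨x, hx⟩ : ∃ x : X, x ∉ (Submodule.span ℝ s).topologicalClosure := by
    by_contra h'
    push_neg at h'
    exact hne (Submodule.eq_top_iff'.2 h')
  obtain ⟨f, hf0, hfx⟩ := aux_vanish_of_not_mem (Submodule.isClosed_topologicalClosure _) hx
  have : f = 0 := h f (fun y hy => hf0 y
    (Submodule.le_topologicalClosure _ (Submodule.subset_span hy)))
  rw [this] at hfx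
  exact hfx rfl

end aux


section aux
variable {X : Type*} [NormedAddCommGroup X] [NormedSpace ℝ X]



lemma aux_separable_of_countable_span {s : Set X} (hs : s.Countable)
    (h : (Submodule.span ℝ s).topologicalClosure = ⊤) : SeparableSpace X := by
  rw [← isSeparable_univ_iff]
  have h1 : IsSeparable (Submodule.span ℝ s : Set X) := (hs.isSeparable).span
  have h2 : IsSeparable (closure (Submodule.span ℝ s : Set X)) := h1.closure
  have h3 : (closure (Submodule.span ℝ s : Set X)) = Set.univ := by
    have := congrArg (fun q : Submodule ℝ X => (q : Set X)) h
    simpa [Submodule.topologicalClosure_coe] using this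
  rwa [h3] at h2

lemma aux_separable_of_dual_separable [SeparableSpace (X →L[ℝ] ℝ)] : SeparableSpace X := by
  obtain ⟨f, hf⟩ := exists_dense_seq (X →L[ℝ] ℝ)
  have hsel : ∀ n : ℕ, ∃ x : X, ‖x‖ ≤ 1 ∧ ‖f n‖ / 2 ≤ ‖f n x‖ := by
    intro n
    rcases eq_or_lt_of_le (norm_nonneg (f n)) with h0 | h0
    · exact ⟨0, by simp, by simp [← h0]⟩
    · obtain ⟨x, hx1, hx2⟩ := (f n).exists_lt_apply_of_lt_opNorm (r := ‖f n‖ / 2) (by linarith)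
      exact ⟨x, hx1.le, hx2.le⟩
  choose x hx1 hx2 using hsel
  apply aux_separable_of_countable_span (Set.countable_range x)
  apply aux_dense_span
  intro g hg
  by_contra hgne
  have hgpos : 0 < ‖g‖ := by
    rcases eq_or_lt_of_le (norm_nonneg g) with h0 | h0
    · exact absurd (by rwa [eq_comm, norm_eq_zero] at h0) hgne
    · exact h0
  obtain ⟨n, hn⟩ : ∃ n, dist g (f n) < ‖g‖ / 4 := by
    have := Metric.denseRange_iff.1 hf g (‖g‖ / 4) (by linarith)
    exact this
  have hfn : ‖g‖ * 3 / 4 ≤ ‖f n‖ := by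
    have := norm_sub_norm_le g (f n)
    rw [← dist_eq_norm] at this
    linarith
  have hb : ‖f n (x n)‖ ≤ ‖g‖ / 4 := by
    have h1 : f n (x n) = (f n - g) (x n) := by
      simp [hg (x n) (Set.mem_range_self n)]
    rw [h1]
    calc ‖(f n - g) (x n)‖ ≤ ‖f n - g‖ * ‖x n‖ := (f n - g).le_opNorm _
    _ ≤ ‖g‖ / 4 * 1 := by
        apply mul_le_mul _ (hx1 n) (norm_nonneg _) (by positivity)
        rw [← dist_eq_norm, dist_comm]
        exact hn.le
    _ = ‖g‖ / 4 := mul_one _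
  have := hx2 n
  linarith

end aux


section aux
variable {X : Type*} [NormedAddCommGroup X] [NormedSpace ℝ X]


/-- The restriction of functionals to a submodule, as a continuous linear map. -/
noncomputable def auxRestr (p : Submodule ℝ X) : StrongDual ℝ X →L[ℝ] StrongDual ℝ p :=
  (ContinuousLinearMap.compSL p X ℝ (RingHom.id ℝ) (RingHom.id ℝ)).flip p.subtypeL

@[simp] lemma auxRestr_apply (p : Submodule ℝ X) (f : StrongDual ℝ X) (y : p) :
    auxRestr p f y = f y := rfl

lemma aux_reflexive_subspace (hrefl : Function.Surjective (inclusionInDoubleDual ℝ X))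
    (p : Submodule ℝ X) (hp : IsClosed (p : Set X)) :
    Function.Surjective (inclusionInDoubleDual ℝ p) := by
  intro Λ
  obtain ⟨x, hx⟩ := hrefl (Λ.comp (auxRestr p))
  have hxp : x ∈ p := by
    by_contra hxnp
    obtain ⟨f, hf0, hfx⟩ := aux_vanish_of_not_mem hp hxnp
    have h1 : (inclusionInDoubleDual ℝ X x) f = f x := rfl
    have h2 : (auxRestr p) f = 0 := by
      ext y
      exact hf0 y y.2
    have h3 : (Λ.comp (auxRestr p)) f = 0 := by
      simp [ContinuousLinearMap.comp_apply, h2]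
    have h4 : (inclusionInDoubleDual ℝ X x) f = (Λ.comp (auxRestr p)) f := by rw [hx]
    exact hfx (by rw [← h1, h4, h3])
  refine ⟨⟨x, hxp⟩, ?_⟩
  ext ψ
  obtain ⟨Ψ, hΨ, -⟩ := exists_extension_norm_eq p ψ
  have hres : auxRestr p Ψ = ψ := by
    ext y
    exact hΨ y
  have h1 : (Λ.comp (auxRestr p)) Ψ = Ψ x := by
    have : (inclusionInDoubleDual ℝ X x) Ψ = (Λ.comp (auxRestr p)) Ψ := by rw [hx]
    rw [← this]; rfl
  have h2 : (Λ.comp (auxRestr p)) Ψ = Λ ψ := by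
    simp [ContinuousLinearMap.comp_apply, hres]
  have : (inclusionInDoubleDual ℝ p ⟨x, hxp⟩) ψ = ψ ⟨x, hxp⟩ := rfl
  rw [this, ← h2, h1, ← hΨ ⟨x, hxp⟩]

end aux


section aux
variable {X : Type*} [NormedAddCommGroup X] [NormedSpace ℝ X]

/-- Bounded sequences in a reflexive space have weakly convergent subsequences. -/
lemma aux_weak_seq_compact (hrefl : Function.Surjective (inclusionInDoubleDual ℝ X))
    (u : ℕ → X) (C : ℝ) (hC : ∀ n, ‖u n‖ ≤ C) :
    ∃ (x : X) (σ : ℕ → ℕ), StrictMono σ ∧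
      ∀ f : X →L[ℝ] ℝ, Tendsto (fun j => f (u (σ j))) atTop (𝓝 (f x)) := by
  have hC0 : 0 ≤ C := le_trans (norm_nonneg _) (hC 0)
  set p : Submodule ℝ X := (Submodule.span ℝ (Set.range u)).topologicalClosure with hpdef
  have hpcl : IsClosed (p : Set X) := Submodule.isClosed_topologicalClosure _
  have hpsep : SeparableSpace p := by
    have h1 : IsSeparable (Submodule.span ℝ (Set.range u) : Set X) :=
      (Set.countable_range u).isSeparable.span
    have h2 : IsSeparable (p : Set X) := by
      have : (p : Set X) = closure (Submodule.span ℝ (Set.range u) : Set X) := rfl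
      rw [this]; exact h1.closure
    exact h2.separableSpace
  have hprefl := aux_reflexive_subspace hrefl p hpcl
  -- the double dual of p is separable
  have hddsep : SeparableSpace (StrongDual ℝ (StrongDual ℝ p)) := by
    have hcont : Continuous (inclusionInDoubleDual ℝ p) := (inclusionInDoubleDual ℝ p).continuous
    have hdr : DenseRange (inclusionInDoubleDual ℝ p) := hprefl.denseRange
    exact hdr.separableSpace hcont
  have hdsep : SeparableSpace (StrongDual ℝ p) := aux_separable_of_dual_separable (X := StrongDual ℝ p)
  -- dense sequence in the dual of p
  obtain ⟨g, hg⟩ := exists_dense_seq (StrongDual ℝ p)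
  -- the sequence inside p
  have humem : ∀ n, u n ∈ p :=
    fun n => Submodule.le_topologicalClosure _ (Submodule.subset_span (Set.mem_range_self n))
  set y : ℕ → p := fun n => ⟨u n, humem n⟩ with hydef
  have hynorm : ∀ n, ‖y n‖ ≤ C := fun n => hC n
  -- diagonal extraction via compactness of a countable product of intervals
  set P : ℕ → (ℕ → ℝ) := fun n k => g k (y n) with hPdef
  have hPmem : ∀ n, P n ∈ Set.pi Set.univ (fun k => Set.Icc (-(‖g k‖ * C)) (‖g k‖ * C)) := by
    intro n
    intro k _
    have h1 : ‖g k (y n)‖ ≤ ‖g k‖ * C :=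
      le_trans ((g k).le_opNorm _) (by
        have := hynorm n
        nlinarith [norm_nonneg (g k)])
    rw [Real.norm_eq_abs, abs_le] at h1
    exact ⟨h1.1, h1.2⟩
  have hcomp : IsCompact (Set.pi Set.univ (fun k => Set.Icc (-(‖g k‖ * C)) (‖g k‖ * C))) :=
    isCompact_univ_pi (fun k => isCompact_Icc)
  obtain ⟨L, -, σ, hσmono, hσtend⟩ := hcomp.tendsto_subseq hPmem
  have hptconv : ∀ k, Tendsto (fun j => g k (y (σ j))) atTop (𝓝 (L k)) := by
    intro k
    have := tendsto_pi_nhds.1 hσtend k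
    exact this
  -- every functional converges along the subsequence
  have hcauchy : ∀ φ : X →L[ℝ] ℝ, ∃ l : ℝ, Tendsto (fun j => φ (u (σ j))) atTop (𝓝 l) := by
    intro φ
    set ψ : StrongDual ℝ p := auxRestr p φ with hψdef
    have hψy : ∀ n, ψ (y n) = φ (u n) := fun n => rfl
    apply cauchySeq_tendsto_of_complete
    rw [Metric.cauchySeq_iff]
    intro ε hε
    obtain ⟨k, hk⟩ : ∃ k, dist ψ (g k) < ε / (3 * (C + 1)) :=
      Metric.denseRange_iff.1 hg ψ _ (by positivity)
    have hgc : CauchySeq (fun j => g k (y (σ j))) := (hptconv k).cauchySeq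
    rw [Metric.cauchySeq_iff] at hgc
    obtain ⟨N, hN⟩ := hgc (ε / 3) (by positivity)
    refine ⟨N, fun i hi j hj => ?_⟩
    have key : ∀ n : ℕ, ‖ψ (y n) - g k (y n)‖ ≤ ε / 3 := by
      intro n
      have h1 : ‖(ψ - g k) (y n)‖ ≤ ‖ψ - g k‖ * ‖y n‖ := (ψ - g k).le_opNorm _
      have h2 : ‖ψ - g k‖ ≤ ε / (3 * (C + 1)) := by
        exact (dist_eq_norm ψ (g k)).symm.le.trans hk.le
      have h3 : ‖ψ - g k‖ * ‖y n‖ ≤ ε / (3 * (C + 1)) * (C + 1) := by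
        apply mul_le_mul h2 (le_trans (hynorm n) (by linarith)) (norm_nonneg _) (by positivity)
      have h4 : ε / (3 * (C + 1)) * (C + 1) = ε / 3 := by
        field_simp
      have h5 : (ψ - g k) (y n) = ψ (y n) - g k (y n) := rfl
      rw [h5] at h1
      linarith [h1, h3]
    have hd := hN i hi j hj
    rw [Real.dist_eq] at hd ⊢
    have e1 := key (σ i)
    have e2 := key (σ j)
    rw [Real.norm_eq_abs] at e1 e2
    rw [← hψy (σ i), ← hψy (σ j)]
    have : |ψ (y (σ i)) - ψ (y (σ j))| ≤
        |ψ (y (σ i)) - g k (y (σ i))| + |g k (y (σ i)) - g k (y (σ j))|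
          + |g k (y (σ j)) - ψ (y (σ j))| := by
      have := abs_sub_le (ψ (y (σ i))) (g k (y (σ i))) (ψ (y (σ j)))
      have h2 := abs_sub_le (g k (y (σ i))) (g k (y (σ j))) (ψ (y (σ j)))
      linarith
    have e3 : |g k (y (σ j)) - ψ (y (σ j))| = |ψ (y (σ j)) - g k (y (σ j))| := abs_sub_comm _ _
    rw [e3] at this
    calc |ψ (y (σ i)) - ψ (y (σ j))| ≤ _ := this
    _ < ε := by linarith
  -- build the limit functional
  choose lim hlim using hcauchy
  have hadd : ∀ φ₁ φ₂ : X →L[ℝ] ℝ, lim (φ₁ + φ₂) = lim φ₁ + lim φ₂ := by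
    intro φ₁ φ₂
    exact tendsto_nhds_unique (hlim (φ₁ + φ₂)) ((hlim φ₁).add (hlim φ₂))
  have hsmul : ∀ (c : ℝ) (φ : X →L[ℝ] ℝ), lim (c • φ) = c * lim φ := by
    intro c φ
    exact tendsto_nhds_unique (hlim (c • φ)) ((hlim φ).const_mul c)
  have hbound : ∀ φ : X →L[ℝ] ℝ, ‖lim φ‖ ≤ C * ‖φ‖ := by
    intro φ
    have h1 : Tendsto (fun j => ‖φ (u (σ j))‖) atTop (𝓝 ‖lim φ‖) := (hlim φ).norm
    apply le_of_tendsto h1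
    filter_upwards with j
    calc ‖φ (u (σ j))‖ ≤ ‖φ‖ * ‖u (σ j)‖ := φ.le_opNorm _
    _ ≤ ‖φ‖ * C := by nlinarith [norm_nonneg φ, hC (σ j)]
    _ = C * ‖φ‖ := mul_comm _ _
  set Λ : StrongDual ℝ (StrongDual ℝ X) := LinearMap.mkContinuous
    { toFun := lim, map_add' := hadd, map_smul' := hsmul } C hbound with hΛdef
  obtain ⟨x, hx⟩ := hrefl Λ
  refine ⟨x, σ, hσmono, fun φ => ?_⟩
  have h1 : φ x = Λ φ := by
    have : (inclusionInDoubleDual ℝ X x) φ = Λ φ := by rw [hx]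
    exact this
  have h2 : Λ φ = lim φ := rfl
  rw [h1, h2]
  exact hlim φ

end aux


lemma aux_liminf_add_ennreal (f g : ℕ → ℝ≥0∞) :
    liminf f atTop + liminf g atTop ≤ liminf (fun n => f n + g n) atTop := by
  rw [liminf_eq_iSup_iInf_of_nat, liminf_eq_iSup_iInf_of_nat, liminf_eq_iSup_iInf_of_nat]
  rw [ENNReal.iSup_add_iSup]
  · apply iSup_mono
    intro n
    apply le_iInf₂
    intro k hk
    exact add_le_add (iInf₂_le k hk) (iInf₂_le k hk)
  · intro i j
    refine ⟨max i j, add_le_add ?_ ?_⟩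
    · exact le_iInf₂ fun k hk => iInf₂_le k (le_trans (le_max_left i j) hk)
    · exact le_iInf₂ fun k hk => iInf₂_le k (le_trans (le_max_right i j) hk)

section minorant
variable {Z : Type*} [NormedAddCommGroup Z] [NormedSpace ℝ Z]

lemma aux_linear_minorant (R : Z → ℝ) (hRconv : ConvexOn ℝ Set.univ R)
    (hRhom : ∀ γ : ℝ, 0 ≤ γ → ∀ z : Z, R (γ • z) = γ * R z)
    (ρ₂ : ℝ) (hub : ∀ z, R z ≤ ρ₂ * ‖z‖) (hnn : ∀ z, 0 ≤ R z) (z₀ : Z) :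
    ∃ g : Z →L[ℝ] ℝ, (∀ z, g z ≤ R z) ∧ g z₀ = R z₀ := by
  have hR0 : R 0 = 0 := by
    have := hRhom 0 le_rfl 0
    simpa using this
  rcases eq_or_ne z₀ 0 with h0 | h0
  · exact ⟨0, fun z => le_trans (by simp) (hnn z), by simp [h0, hR0]⟩
  · set f : Z →ₗ.[ℝ] ℝ := LinearPMap.mkSpanSingleton z₀ (R z₀) h0 with hfdef
    have hNadd : ∀ x y : Z, R (x + y) ≤ R x + R y := by
      intro x y
      have hc := hRconv.2 (Set.mem_univ x) (Set.mem_univ y)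
        (by norm_num : (0:ℝ) ≤ (1:ℝ)/2) (by norm_num : (0:ℝ) ≤ (1:ℝ)/2) (by norm_num)
      have h2 : R (((1:ℝ)/2) • (x + y)) = (1/2) * R (x + y) := hRhom _ (by norm_num) _
      have h3 : ((1:ℝ)/2) • x + ((1:ℝ)/2) • y = ((1:ℝ)/2) • (x + y) := by
        rw [smul_add]
      rw [h3, h2, smul_eq_mul, smul_eq_mul] at hc
      linarith
    have hNhom : ∀ c : ℝ, 0 < c → ∀ x, R (c • x) = c * R x := fun c hc x => hRhom c hc.le x
    have hdom : ∀ x : f.domain, f x ≤ R x := by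
      rintro ⟨x, hx⟩
      have hx' : x ∈ Submodule.span ℝ {z₀} := by
        rw [hfdef, LinearPMap.domain_mkSpanSingleton] at hx
        exact hx
      obtain ⟨c, hc⟩ := Submodule.mem_span_singleton.1 hx'
      have hx2 : c • z₀ ∈ f.domain := hc ▸ hx
      have happ : f ⟨x, hx⟩ = c * R z₀ := by
        have h' := LinearPMap.mkSpanSingleton'_apply z₀ (R z₀)
          (fun c' hc' => (smul_eq_zero.1 hc').elim (fun h'' => by rw [h'', RingHom.id_apply, zero_smul])
            (fun hz => absurd hz h0)) c hx2
        have hsub : (⟨x, hx⟩ : f.domain) = ⟨c • z₀, hx2⟩ := Subtype.ext hc.symm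
        rw [hsub]
        exact h'.trans (by rw [smul_eq_mul, RingHom.id_apply])
      rw [happ]
      show c * R z₀ ≤ R x
      rw [← hc]
      rcases le_or_gt 0 c with hc | hc
      · rw [hRhom c hc z₀]
      · have h1 : c * R z₀ ≤ 0 := mul_nonpos_of_nonpos_of_nonneg hc.le (hnn z₀)
        exact le_trans h1 (hnn _)
    obtain ⟨G, hGf, hGR⟩ := exists_extension_of_le_sublinear f R hNhom hNadd hdom
    have hGb : ∀ z, |G z| ≤ ρ₂ * ‖z‖ := by
      intro z
      rw [abs_le]
      constructor
      · have := le_trans (hGR (-z)) (hub (-z))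
        rw [map_neg, norm_neg] at this
        linarith
      · exact le_trans (hGR z) (hub z)
    set g : Z →L[ℝ] ℝ := G.mkContinuous ρ₂ (fun z => by rw [Real.norm_eq_abs]; exact hGb z)
      with hgdef
    have hgz₀ : g z₀ = R z₀ := by
      have hmem : z₀ ∈ f.domain := by
        rw [LinearPMap.domain_mkSpanSingleton]
        exact Submodule.mem_span_singleton_self z₀
      have h1 : G z₀ = f ⟨z₀, hmem⟩ := hGf ⟨z₀, hmem⟩
      have h2 : f ⟨z₀, hmem⟩ = R z₀ := by
        exact LinearPMap.mkSpanSingleton_apply ℝ ℝ h0 (R z₀)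
      exact h1.trans h2
    exact ⟨g, fun z => hGR z, hgz₀⟩

end minorant


section quad
variable {W : Type*} [NormedAddCommGroup W] [InnerProductSpace ℝ W]

lemma aux_quad_lower (MW : W →L[ℝ] W)
    (hMsym : ∀ w w' : W, (inner ℝ (MW w) w' : ℝ) = inner ℝ w (MW w'))
    (hpos : ∀ w : W, (0:ℝ) ≤ inner ℝ (MW w) w) (w d : W) :
    (inner ℝ (MW w) w : ℝ) + 2 * inner ℝ (MW w) d ≤ (inner ℝ (MW (w + d)) (w + d) : ℝ) := by
  have hcross : (inner ℝ (MW d) w : ℝ) = inner ℝ (MW w) d := by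
    rw [hMsym d w, real_inner_comm]
  have hexp : (inner ℝ (MW (w + d)) (w + d) : ℝ)
      = inner ℝ (MW w) w + 2 * inner ℝ (MW w) d + inner ℝ (MW d) d := by
    rw [map_add, inner_add_left, inner_add_right, inner_add_right, hcross]
    ring
  rw [hexp]
  linarith [hpos d]

lemma aux_quad_mid (MW : W →L[ℝ] W)
    (hMsym : ∀ w w' : W, (inner ℝ (MW w) w' : ℝ) = inner ℝ w (MW w')) (p q : W) :
    (inner ℝ (MW ((1/2:ℝ) • p + (1/2:ℝ) • q)) ((1/2:ℝ) • p + (1/2:ℝ) • q) : ℝ)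
      = 1/2 * inner ℝ (MW p) p + 1/2 * inner ℝ (MW q) q
        - 1/4 * inner ℝ (MW (p - q)) (p - q) := by
  have hcross : (inner ℝ (MW q) p : ℝ) = inner ℝ (MW p) q := by
    rw [hMsym q p, real_inner_comm]
  have h1 : (inner ℝ (MW ((1/2:ℝ) • p + (1/2:ℝ) • q)) ((1/2:ℝ) • p + (1/2:ℝ) • q) : ℝ)
      = 1/4 * inner ℝ (MW p) p + 1/4 * inner ℝ (MW q) q + 1/2 * inner ℝ (MW p) q := by
    simp only [map_add, map_smul, inner_add_left, inner_add_right,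
      real_inner_smul_left, real_inner_smul_right]
    rw [hcross]
    ring
  have h2 : (inner ℝ (MW (p - q)) (p - q) : ℝ)
      = inner ℝ (MW p) p + inner ℝ (MW q) q - 2 * inner ℝ (MW p) q := by
    rw [map_sub, inner_sub_left, inner_sub_right, inner_sub_right, hcross]
    ring
  rw [h1, h2]
  ring

lemma aux_par (x y : W) :
    1/2 * ‖x‖^2 + 1/2 * ‖y‖^2 - ‖(1/2:ℝ) • x + (1/2:ℝ) • y‖^2 = 1/4 * ‖x - y‖^2 := by
  have h := parallelogram_law_with_norm ℝ x y
  have h1 : (1/2:ℝ) • x + (1/2:ℝ) • y = (1/2:ℝ) • (x + y) := by rw [smul_add]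
  rw [h1, norm_smul]
  simp only [Real.norm_eq_abs]
  rw [abs_of_nonneg (by norm_num : (0:ℝ) ≤ 1/2)]
  nlinarith [h, norm_nonneg (x+y), norm_nonneg (x-y)]
end quad

section vop
variable {V : Type*} [NormedAddCommGroup V] [InnerProductSpace ℝ V]

lemma aux_vop_lower (Vop : V →L[ℝ] V →L[ℝ] ℝ) (hVsym : ∀ v v' : V, Vop v v' = Vop v' v)
    (hpos : ∀ v : V, 0 ≤ Vop v v) (w d : V) :
    Vop w w + 2 * Vop w d ≤ Vop (w + d) (w + d) := by
  have hexp : Vop (w + d) (w + d) = Vop w w + 2 * Vop w d + Vop d d := by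
    simp only [map_add, ContinuousLinearMap.add_apply]
    rw [hVsym d w]
    ring
  rw [hexp]
  linarith [hpos d]

lemma aux_vop_mid (Vop : V →L[ℝ] V →L[ℝ] ℝ) (hVsym : ∀ v v' : V, Vop v v' = Vop v' v)
    (p q : V) :
    Vop ((1/2:ℝ) • p + (1/2:ℝ) • q) ((1/2:ℝ) • p + (1/2:ℝ) • q)
      = 1/2 * Vop p p + 1/2 * Vop q q - 1/4 * Vop (p - q) (p - q) := by
  have h1 : Vop ((1/2:ℝ) • p + (1/2:ℝ) • q) ((1/2:ℝ) • p + (1/2:ℝ) • q)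
      = 1/4 * Vop p p + 1/4 * Vop q q + 1/2 * Vop p q := by
    simp only [map_add, map_smul, ContinuousLinearMap.add_apply,
      ContinuousLinearMap.smul_apply, smul_eq_mul]
    rw [hVsym q p]
    ring
  have h2 : Vop (p - q) (p - q) = Vop p p + Vop q q - 2 * Vop p q := by
    simp only [map_sub, ContinuousLinearMap.sub_apply]
    rw [hVsym q p]
    ring
  rw [h1, h2]
  ring
end vop


set_option maxHeartbeats 1000000 in
/-- The single-step time-incremental functional
`F(u) = (ε²/(2τ²))|u - 2a + b|²_M + (ε/(2τ))⟨𝕍(u-a),u-a⟩ + R(u-a) + 𝓔(u)`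
of the minimizing-movements scheme attains its minimum on a reflexive Banach space `U`,
provided `𝓔` is proper, sequentially weakly lower semicontinuous and coercive; if moreover
`𝓔` is `λ`-convex and `ε²m₁ > λτ²`, the minimizer is unique. -/
theorem stmt_13
    {U V W Z : Type*}
    [NormedAddCommGroup U] [NormedSpace ℝ U] [CompleteSpace U]
    [NormedAddCommGroup V] [InnerProductSpace ℝ V] [CompleteSpace V]
    [NormedAddCommGroup W] [InnerProductSpace ℝ W] [CompleteSpace W]
    [NormedAddCommGroup Z] [NormedSpace ℝ Z] [CompleteSpace Z]
    (hrefl : Function.Surjective (NormedSpace.inclusionInDoubleDual ℝ U))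
    (ιV : U →L[ℝ] V) (hιV : Function.Injective ιV)
    (ιW : U →L[ℝ] W) (hιW : Function.Injective ιW)
    (ιZ : U →L[ℝ] Z) (hιZ : Function.Injective ιZ)
    (MW : W →L[ℝ] W) (hMsym : ∀ w w' : W, (inner ℝ (MW w) w' : ℝ) = inner ℝ w (MW w'))
    (m₁ : ℝ) (hm₁ : 0 < m₁)
    (hMlow : ∀ w : W, m₁ * ‖w‖ ^ 2 ≤ (inner ℝ (MW w) w : ℝ))
    (Vop : V →L[ℝ] V →L[ℝ] ℝ) (hVsym : ∀ v v' : V, Vop v v' = Vop v' v)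
    (hVpos : ∀ v : V, 0 ≤ Vop v v)
    (R : Z → ℝ) (hRconv : ConvexOn ℝ Set.univ R)
    (hRhom : ∀ γ : ℝ, 0 ≤ γ → ∀ z : Z, R (γ • z) = γ * R z)
    (ρ₁ ρ₂ : ℝ) (hρ₁ : 0 < ρ₁) (hρ : ρ₁ ≤ ρ₂)
    (hRbound : ∀ z : Z, ρ₁ * ‖z‖ ≤ R z ∧ R z ≤ ρ₂ * ‖z‖)
    (𝓔 : U → ℝ≥0∞) (hproper : ∃ u : U, 𝓔 u ≠ ⊤)
    (hlsc : ∀ (un : ℕ → U) (u : U),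
        (∀ φ : U →L[ℝ] ℝ, Tendsto (fun n => φ (un n)) atTop (𝓝 (φ u))) →
        𝓔 u ≤ liminf (fun n => 𝓔 (un n)) atTop)
    (hcoerc : ∀ M : ℝ, Bornology.IsBounded {u : U | 𝓔 u ≤ ENNReal.ofReal M})
    (τ ε : ℝ) (hτ : 0 < τ) (hε : 0 < ε) (a b : U)
    (F : U → ℝ≥0∞)
    (hF : ∀ u : U, F u =
      ENNReal.ofReal (ε ^ 2 / (2 * τ ^ 2) *
          (inner ℝ (MW (ιW (u - (2:ℝ) • a + b))) (ιW (u - (2:ℝ) • a + b)) : ℝ)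
        + ε / (2 * τ) * Vop (ιV (u - a)) (ιV (u - a))
        + R (ιZ (u - a))) + 𝓔 u) :
    (∃ u₀ : U, ∀ u : U, F u₀ ≤ F u) ∧
    (∀ lam : ℝ, 0 ≤ lam →
      (∀ u v : U, ∀ c d : ℝ, 0 ≤ c → 0 ≤ d → c + d = 1 →
        𝓔 (c • u + d • v) + ENNReal.ofReal (lam / 2 * ‖ιW (c • u + d • v)‖ ^ 2) ≤
          ENNReal.ofReal c * (𝓔 u + ENNReal.ofReal (lam / 2 * ‖ιW u‖ ^ 2)) +
          ENNReal.ofReal d * (𝓔 v + ENNReal.ofReal (lam / 2 * ‖ιW v‖ ^ 2))) →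
      lam * τ ^ 2 < ε ^ 2 * m₁ →
      ∀ u₁ u₂ : U, (∀ u : U, F u₁ ≤ F u) → (∀ u : U, F u₂ ≤ F u) → u₁ = u₂) := by
  classical
  have hτ2 : (0:ℝ) < τ ^ 2 := by positivity
  have hc₁ : (0:ℝ) ≤ ε ^ 2 / (2 * τ ^ 2) := by positivity
  have hc₂ : (0:ℝ) ≤ ε / (2 * τ) := by positivity
  have hRnn : ∀ z : Z, 0 ≤ R z := fun z =>
    le_trans (mul_nonneg hρ₁.le (norm_nonneg z)) (hRbound z).1
  have hQWnn : ∀ w : W, (0:ℝ) ≤ inner ℝ (MW w) w := fun w =>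
    le_trans (by positivity) (hMlow w)
  set G : U → ℝ := fun u =>
    ε ^ 2 / (2 * τ ^ 2) *
        (inner ℝ (MW (ιW (u - (2:ℝ) • a + b))) (ιW (u - (2:ℝ) • a + b)) : ℝ)
      + ε / (2 * τ) * Vop (ιV (u - a)) (ιV (u - a)) + R (ιZ (u - a)) with hGdef
  have hGnn : ∀ u, 0 ≤ G u := by
    intro u
    have h1 := hQWnn (ιW (u - (2:ℝ) • a + b))
    have h2 := hVpos (ιV (u - a))
    have h3 := hRnn (ιZ (u - a))
    have h4 := mul_nonneg hc₁ h1
    have h5 := mul_nonneg hc₂ h2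
    rw [hGdef]
    dsimp only
    linarith
  have hFG : ∀ u, F u = ENNReal.ofReal (G u) + 𝓔 u := by
    intro u
    rw [hGdef]
    exact hF u
  -- weak sequential lower semicontinuity of G via affine minorants
  have hGlsc : ∀ (v : ℕ → U) (x : U),
      (∀ φ : U →L[ℝ] ℝ, Tendsto (fun n => φ (v n)) atTop (𝓝 (φ x))) →
      ∃ e : ℕ → ℝ, Tendsto e atTop (𝓝 0) ∧ ∀ n, G x + e n ≤ G (v n) := by
    intro v x hw
    obtain ⟨g, hgle, hgeq⟩ := aux_linear_minorant R hRconv hRhom ρ₂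
      (fun z => (hRbound z).2) hRnn (ιZ (x - a))
    set wx : W := ιW (x - (2:ℝ) • a + b) with hwx
    set fW : U →L[ℝ] ℝ := (innerSL ℝ (MW wx)).comp ιW with hfW
    set fV : U →L[ℝ] ℝ := ((Vop (ιV (x - a))).comp ιV) with hfV
    set fZ : U →L[ℝ] ℝ := g.comp ιZ with hfZ
    refine ⟨fun n => ε ^ 2 / (2 * τ ^ 2) * (2 * (fW (v n) - fW x))
      + ε / (2 * τ) * (2 * (fV (v n) - fV x)) + (fZ (v n) - fZ x), ?_, ?_⟩
    · have hW := (hw fW).sub_const (fW x)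
      have hV := (hw fV).sub_const (fV x)
      have hZ := (hw fZ).sub_const (fZ x)
      rw [sub_self] at hW hV hZ
      have h := (((hW.const_mul 2).const_mul (ε ^ 2 / (2 * τ ^ 2))).add
        ((hV.const_mul 2).const_mul (ε / (2 * τ)))).add hZ
      simpa using h
    · intro n
      have hWid : ιW (v n - (2:ℝ) • a + b) = wx + (ιW (v n) - ιW x) := by
        rw [hwx, ← map_sub, ← map_add]
        congr 1
        abel
      have hWterm : (inner ℝ (MW wx) wx : ℝ) + 2 * (fW (v n) - fW x)
          ≤ (inner ℝ (MW (ιW (v n - (2:ℝ) • a + b))) (ιW (v n - (2:ℝ) • a + b)) : ℝ) := by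
        rw [hWid]
        have h := aux_quad_lower MW hMsym hQWnn wx (ιW (v n) - ιW x)
        have h2 : fW (v n) - fW x = (inner ℝ (MW wx) (ιW (v n) - ιW x) : ℝ) := by
          rw [hfW]
          simp [inner_sub_right]
        rw [h2]
        exact h
      have hVid : ιV (v n - a) = ιV (x - a) + (ιV (v n) - ιV x) := by
        rw [← map_sub, ← map_add]
        congr 1
        abel
      have hVterm : Vop (ιV (x - a)) (ιV (x - a)) + 2 * (fV (v n) - fV x)
          ≤ Vop (ιV (v n - a)) (ιV (v n - a)) := by
        rw [hVid]
        have h := aux_vop_lower Vop hVsym hVpos (ιV (x - a)) (ιV (v n) - ιV x)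
        have h2 : fV (v n) - fV x = Vop (ιV (x - a)) (ιV (v n) - ιV x) := by
          rw [hfV]
          simp [map_sub]
        rw [h2]
        exact h
      have hZterm : R (ιZ (x - a)) + (fZ (v n) - fZ x) ≤ R (ιZ (v n - a)) := by
        have h2 : fZ (v n) - fZ x = g (ιZ (v n - a)) - g (ιZ (x - a)) := by
          rw [hfZ]
          simp [map_sub]
        rw [h2, ← hgeq]
        have h3 := hgle (ιZ (v n - a))
        linarith
      rw [hGdef]
      dsimp only
      have e1 := mul_le_mul_of_nonneg_left hWterm hc₁
      have e2 := mul_le_mul_of_nonneg_left hVterm hc₂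
      rw [mul_add] at e1 e2
      linarith
  obtain ⟨ustar, hustar⟩ := hproper
  set m : ℝ≥0∞ := ⨅ u : U, F u with hm
  have hmtop : m ≠ ⊤ := by
    apply ne_top_of_le_ne_top _ (iInf_le _ ustar)
    rw [hFG]
    exact ENNReal.add_ne_top.2 ⟨ENNReal.ofReal_ne_top, hustar⟩
  have hEle : ∀ u, 𝓔 u ≤ F u := fun u => by rw [hFG]; exact le_add_self
  -- the existence part
  have hex : ∃ u₀ : U, ∀ u : U, F u₀ ≤ F u := by
    have hminseq : ∀ n : ℕ, ∃ u : U, F u < m + ENNReal.ofReal (1/((n:ℝ)+1)) := by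
      intro n
      have hlt : m < m + ENNReal.ofReal (1/((n:ℝ)+1)) := by
        apply ENNReal.lt_add_right hmtop
        simp only [ne_eq, ENNReal.ofReal_eq_zero, not_le]
        positivity
      nth_rewrite 1 [hm] at hlt
      exact iInf_lt_iff.1 hlt
    choose un hun using hminseq
    have hbdd : ∃ C, ∀ n, ‖un n‖ ≤ C := by
      obtain ⟨C, hC⟩ := isBounded_iff_forall_norm_le.1 (hcoerc ((m+1).toReal))
      refine ⟨C, fun n => hC _ ?_⟩
      have h1 : 𝓔 (un n) ≤ m + 1 := by
        refine le_trans (hEle _) (le_trans (hun n).le (add_le_add le_rfl ?_))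
        refine ENNReal.ofReal_le_one.2 ?_
        rw [div_le_one (by positivity)]
        have hnn : (0:ℝ) ≤ (n:ℝ) := Nat.cast_nonneg n
        linarith
      have h2 : ENNReal.ofReal ((m+1).toReal) = m + 1 :=
        ENNReal.ofReal_toReal (ENNReal.add_ne_top.2 ⟨hmtop, ENNReal.one_ne_top⟩)
      refine Set.mem_setOf.2 ?_
      rw [h2]
      exact h1
    obtain ⟨C, hC⟩ := hbdd
    obtain ⟨x₀, σ, hσm, hσw⟩ := aux_weak_seq_compact hrefl un C hC
    set v : ℕ → U := fun j => un (σ j) with hv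
    have hEliminf : 𝓔 x₀ ≤ liminf (fun j => 𝓔 (v j)) atTop := hlsc v x₀ hσw
    obtain ⟨e, he0, hel⟩ := hGlsc v x₀ hσw
    have hGliminf : ENNReal.ofReal (G x₀)
        ≤ liminf (fun j => ENNReal.ofReal (G (v j))) atTop := by
      have h1 : Tendsto (fun j => G x₀ + e j) atTop (𝓝 (G x₀)) := by
        simpa using tendsto_const_nhds.add he0
      have h2 : Tendsto (fun j => ENNReal.ofReal (G x₀ + e j)) atTop
          (𝓝 (ENNReal.ofReal (G x₀))) :=
        (ENNReal.continuous_ofReal.tendsto _).comp h1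
      rw [← h2.liminf_eq]
      refine liminf_le_liminf ?_ ?_ ?_
      · filter_upwards with j
        exact ENNReal.ofReal_le_ofReal (hel j)
      · isBoundedDefault
      · isBoundedDefault
    have hFliminf : liminf (fun j => F (v j)) atTop ≤ m := by
      apply ENNReal.le_of_forall_pos_le_add
      intro ε' hε' _
      obtain ⟨n₀, hn₀⟩ := exists_nat_one_div_lt (show (0:ℝ) < (ε' : ℝ) from hε')
      apply liminf_le_of_frequently_le'
      apply Filter.Eventually.frequently
      filter_upwards [eventually_ge_atTop n₀] with j hj
      have h1 : F (v j) < m + ENNReal.ofReal (1/((σ j : ℝ)+1)) := hun (σ j)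
      have h2 : (1:ℝ)/((σ j : ℝ)+1) ≤ 1/((n₀ : ℝ)+1) := by
        apply div_le_div_of_nonneg_left (by norm_num) (by positivity)
        have hσj : (n₀ : ℝ) ≤ (σ j : ℝ) := by
          exact_mod_cast le_trans hj (hσm.le_apply)
        linarith
      calc F (v j) ≤ m + ENNReal.ofReal (1/((σ j : ℝ)+1)) := h1.le
      _ ≤ m + ENNReal.ofReal (1/((n₀:ℝ)+1)) := add_le_add le_rfl (ENNReal.ofReal_le_ofReal h2)
      _ ≤ m + (ε' : ℝ≥0∞) := by
          apply add_le_add le_rfl _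
          rw [← ENNReal.ofReal_coe_nnreal]
          exact ENNReal.ofReal_le_ofReal hn₀.le
    have hx₀m : F x₀ ≤ m := by
      calc F x₀ = ENNReal.ofReal (G x₀) + 𝓔 x₀ := hFG x₀
      _ ≤ liminf (fun j => ENNReal.ofReal (G (v j))) atTop
            + liminf (fun j => 𝓔 (v j)) atTop := add_le_add hGliminf hEliminf
      _ ≤ liminf (fun j => ENNReal.ofReal (G (v j)) + 𝓔 (v j)) atTop :=
            aux_liminf_add_ennreal _ _
      _ = liminf (fun j => F (v j)) atTop := by
            refine congrArg (fun t => liminf t atTop) ?_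
            funext j
            rw [hFG]
      _ ≤ m := hFliminf
    exact ⟨x₀, fun u => le_trans hx₀m (by rw [hm]; exact iInf_le _ u)⟩
  refine ⟨hex, ?_⟩
  -- uniqueness
  intro lam hlam hconv hlt u₁ u₂ h₁ h₂
  by_contra hne
  have hFstar : F ustar ≠ ⊤ := by
    rw [hFG]
    exact ENNReal.add_ne_top.2 ⟨ENNReal.ofReal_ne_top, hustar⟩
  have hF1top : F u₁ ≠ ⊤ := ne_top_of_le_ne_top hFstar (h₁ ustar)
  have hF2top : F u₂ ≠ ⊤ := ne_top_of_le_ne_top hFstar (h₂ ustar)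
  have hE1top : 𝓔 u₁ ≠ ⊤ := ne_top_of_le_ne_top hF1top (hEle u₁)
  have hE2top : 𝓔 u₂ ≠ ⊤ := ne_top_of_le_ne_top hF2top (hEle u₂)
  set u : U := (1/2:ℝ) • u₁ + (1/2:ℝ) • u₂ with hu
  have hcv := hconv u₁ u₂ (1/2) (1/2) (by norm_num) (by norm_num) (by norm_num)
  rw [← hu] at hcv
  have hnn1 : 0 ≤ lam / 2 * ‖ιW u₁‖ ^ 2 := by positivity
  have hnn2 : 0 ≤ lam / 2 * ‖ιW u₂‖ ^ 2 := by positivity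
  have hnnu : 0 ≤ lam / 2 * ‖ιW u‖ ^ 2 := by positivity
  have hRHStop : ENNReal.ofReal (1/2) * (𝓔 u₁ + ENNReal.ofReal (lam / 2 * ‖ιW u₁‖ ^ 2))
      + ENNReal.ofReal (1/2) * (𝓔 u₂ + ENNReal.ofReal (lam / 2 * ‖ιW u₂‖ ^ 2)) ≠ ⊤ := by
    apply ENNReal.add_ne_top.2
    constructor <;>
      exact ENNReal.mul_ne_top ENNReal.ofReal_ne_top
        (ENNReal.add_ne_top.2 ⟨by assumption, ENNReal.ofReal_ne_top⟩)
  have hEutop : 𝓔 u ≠ ⊤ :=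
    ne_top_of_le_ne_top hRHStop (le_trans (self_le_add_right _ _) hcv)
  have hLHStop : 𝓔 u + ENNReal.ofReal (lam / 2 * ‖ιW u‖ ^ 2) ≠ ⊤ :=
    ENNReal.add_ne_top.2 ⟨hEutop, ENNReal.ofReal_ne_top⟩
  -- real-valued convexity inequality
  have hreal : (𝓔 u).toReal + lam / 2 * ‖ιW u‖ ^ 2
      ≤ 1/2 * ((𝓔 u₁).toReal + lam / 2 * ‖ιW u₁‖ ^ 2)
        + 1/2 * ((𝓔 u₂).toReal + lam / 2 * ‖ιW u₂‖ ^ 2) := by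
    have h := (ENNReal.toReal_le_toReal hLHStop hRHStop).2 hcv
    rw [ENNReal.toReal_add hEutop ENNReal.ofReal_ne_top,
      ENNReal.toReal_ofReal hnnu] at h
    rw [ENNReal.toReal_add
      (ENNReal.mul_ne_top ENNReal.ofReal_ne_top
        (ENNReal.add_ne_top.2 ⟨hE1top, ENNReal.ofReal_ne_top⟩))
      (ENNReal.mul_ne_top ENNReal.ofReal_ne_top
        (ENNReal.add_ne_top.2 ⟨hE2top, ENNReal.ofReal_ne_top⟩))] at h
    rw [ENNReal.toReal_mul, ENNReal.toReal_mul,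
      ENNReal.toReal_ofReal (by norm_num : (0:ℝ) ≤ 1/2),
      ENNReal.toReal_add hE1top ENNReal.ofReal_ne_top,
      ENNReal.toReal_add hE2top ENNReal.ofReal_ne_top,
      ENNReal.toReal_ofReal hnn1, ENNReal.toReal_ofReal hnn2] at h
    exact h
  -- parallelogram identity
  have hWmid : ιW u = (1/2:ℝ) • ιW u₁ + (1/2:ℝ) • ιW u₂ := by
    rw [hu]
    simp [map_add, map_smul]
  have hpar : 1/2 * ‖ιW u₁‖ ^ 2 + 1/2 * ‖ιW u₂‖ ^ 2 - ‖ιW u‖ ^ 2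
      = 1/4 * ‖ιW u₁ - ιW u₂‖ ^ 2 := by
    rw [hWmid]
    exact aux_par (ιW u₁) (ιW u₂)
  set dW : W := ιW u₁ - ιW u₂ with hdW
  have hEmid : (𝓔 u).toReal ≤ 1/2 * (𝓔 u₁).toReal + 1/2 * (𝓔 u₂).toReal
      + lam / 8 * ‖dW‖ ^ 2 := by
    have hpar2 : lam / 2 * (1/2 * ‖ιW u₁‖ ^ 2 + 1/2 * ‖ιW u₂‖ ^ 2 - ‖ιW u‖ ^ 2)
        = lam / 2 * (1/4 * ‖dW‖ ^ 2) := by rw [hpar]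
    nlinarith [hreal, hpar2]
  -- midpoint estimate for G
  have hGmid : G u ≤ 1/2 * G u₁ + 1/2 * G u₂
      - ε ^ 2 / (2 * τ ^ 2) * (1/4 * (inner ℝ (MW (ιW (u₁ - u₂))) (ιW (u₁ - u₂)) : ℝ)) := by
    have hWm : ιW (u - (2:ℝ) • a + b)
        = (1/2:ℝ) • ιW (u₁ - (2:ℝ) • a + b) + (1/2:ℝ) • ιW (u₂ - (2:ℝ) • a + b) := by
      rw [← map_smul, ← map_smul, ← map_add]
      congr 1
      rw [hu]
      module
    have hWd : ιW (u₁ - (2:ℝ) • a + b) - ιW (u₂ - (2:ℝ) • a + b) = ιW (u₁ - u₂) := by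
      rw [← map_sub]
      congr 1
      abel
    have hW := aux_quad_mid MW hMsym (ιW (u₁ - (2:ℝ) • a + b)) (ιW (u₂ - (2:ℝ) • a + b))
    rw [hWd] at hW
    have hVm : ιV (u - a) = (1/2:ℝ) • ιV (u₁ - a) + (1/2:ℝ) • ιV (u₂ - a) := by
      rw [← map_smul, ← map_smul, ← map_add]
      congr 1
      rw [hu]
      module
    have hV := aux_vop_mid Vop hVsym (ιV (u₁ - a)) (ιV (u₂ - a))
    have hVd := hVpos (ιV (u₁ - a) - ιV (u₂ - a))
    have hZm : ιZ (u - a) = (1/2:ℝ) • ιZ (u₁ - a) + (1/2:ℝ) • ιZ (u₂ - a) := by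
      rw [← map_smul, ← map_smul, ← map_add]
      congr 1
      rw [hu]
      module
    have hR := hRconv.2 (Set.mem_univ (ιZ (u₁ - a))) (Set.mem_univ (ιZ (u₂ - a)))
      (by norm_num : (0:ℝ) ≤ 1/2) (by norm_num : (0:ℝ) ≤ 1/2) (by norm_num)
    rw [smul_eq_mul, smul_eq_mul] at hR
    rw [hGdef]
    dsimp only
    rw [hWm, hW, hVm, hV, hZm]
    have e1 : ε / (2 * τ) * (1/2 * Vop (ιV (u₁ - a)) (ιV (u₁ - a))
        + 1/2 * Vop (ιV (u₂ - a)) (ιV (u₂ - a))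
        - 1/4 * Vop (ιV (u₁ - a) - ιV (u₂ - a)) (ιV (u₁ - a) - ιV (u₂ - a)))
        ≤ ε / (2 * τ) * (1/2 * Vop (ιV (u₁ - a)) (ιV (u₁ - a))
        + 1/2 * Vop (ιV (u₂ - a)) (ιV (u₂ - a))) := by
      apply mul_le_mul_of_nonneg_left _ hc₂
      linarith
    have e2 := mul_le_mul_of_nonneg_left hR (by norm_num : (0:ℝ) ≤ 1)
    nlinarith [e1, hR]
  have hMd := hMlow (ιW (u₁ - u₂))
  have hdW' : ιW (u₁ - u₂) = dW := by rw [hdW, map_sub]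
  have hdpos : 0 < ‖dW‖ := by
    rw [norm_pos_iff]
    intro h0
    apply hne
    have : ιW u₁ = ιW u₂ := by rwa [hdW, sub_eq_zero] at h0
    exact hιW this
  -- toReal of F
  have hFt : ∀ w : U, 𝓔 w ≠ ⊤ → (F w).toReal = G w + (𝓔 w).toReal := by
    intro w hw
    rw [hFG, ENNReal.toReal_add ENNReal.ofReal_ne_top hw, ENNReal.toReal_ofReal (hGnn w)]
  have hFutop : F u ≠ ⊤ := by
    rw [hFG]
    exact ENNReal.add_ne_top.2 ⟨ENNReal.ofReal_ne_top, hEutop⟩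
  have h12 : (F u₂).toReal = (F u₁).toReal := by
    rw [le_antisymm (h₂ u₁) (h₁ u₂)]
  have hcoef : lam / 8 - ε ^ 2 / (2 * τ ^ 2) * (1/4 * m₁) < 0 := by
    have h8 : ε ^ 2 / (2 * τ ^ 2) * (1/4 * m₁) = ε ^ 2 * m₁ / (8 * τ ^ 2) := by ring
    rw [h8, sub_neg, div_lt_div_iff₀ (by norm_num : (0:ℝ) < 8) (by positivity : (0:ℝ) < 8 * τ ^ 2)]
    nlinarith [hlt, hτ2]
  clear_value G u dW
  have hfinal : (F u).toReal < (F u₁).toReal := by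
    rw [hFt u hEutop, hFt u₁ hE1top]
    have g1 : G u ≤ 1/2 * G u₁ + 1/2 * G u₂
        - ε ^ 2 / (2 * τ ^ 2) * (1/4 * (m₁ * ‖dW‖ ^ 2)) := by
      refine le_trans hGmid ?_
      have hMd' : m₁ * ‖dW‖ ^ 2 ≤ (inner ℝ (MW (ιW (u₁ - u₂))) (ιW (u₁ - u₂)) : ℝ) := by
        rw [hdW, ← map_sub]
        exact hMlow _
      have : ε ^ 2 / (2 * τ ^ 2) * (1/4 * (m₁ * ‖dW‖ ^ 2))
          ≤ ε ^ 2 / (2 * τ ^ 2) * (1/4 * (inner ℝ (MW (ιW (u₁ - u₂))) (ιW (u₁ - u₂)) : ℝ)) := by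
        apply mul_le_mul_of_nonneg_left _ hc₁
        linarith [hMd']
      linarith
    have hFt2 : (F u₂).toReal = G u₂ + (𝓔 u₂).toReal := hFt u₂ hE2top
    have hFt1 : (F u₁).toReal = G u₁ + (𝓔 u₁).toReal := hFt u₁ hE1top
    have hG2 : G u₂ + (𝓔 u₂).toReal = G u₁ + (𝓔 u₁).toReal := by
      rw [← hFt2, ← hFt1, h12]
    have hneg : (lam / 8 - ε ^ 2 / (2 * τ ^ 2) * (1/4 * m₁)) * ‖dW‖ ^ 2 < 0 :=
      mul_neg_of_neg_of_pos hcoef (by positivity)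
    have hneg2 : lam / 8 * ‖dW‖ ^ 2
        - ε ^ 2 / (2 * τ ^ 2) * (1/4 * (m₁ * ‖dW‖ ^ 2)) < 0 := by
      have h := hneg
      ring_nf at h ⊢
      linarith
    nlinarith [hEmid, g1, hG2, hneg2]
  have hge : (F u₁).toReal ≤ (F u).toReal :=
    (ENNReal.toReal_le_toReal hF1top hFutop).2 (h₁ u)
  linarith
end
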